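/- arXiv:1101.5011 — 3 statements merged into one kernel-verified Lean document; each statement's English description precedes it below -/
import Mathlib

section
/- A q-function f satisfies L f = 0 identically if and only if there exists a 1-homogeneous q-function φ with f = Λ φ; equivalently, if and only if f = g − L g for some 0-homogeneous q-function g. -/
noncomputable section

/-- The type of candidate local functions: functions of `x` and the jet `(q₀, q₁, …)`. -/
abbrev QFun := ℝ → (ℕ → ℝ) → ℝ

/-- `IsQFunc X m f` : `f` is a q-function of order `m` on `X`: it depends only on
`x, q_0, …, q_m` and is infinitely differentiable for `x ∈ X`, `q_0 > 0`. -/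
def IsQFunc (X : Set ℝ) (m : ℕ) (f : QFun) : Prop :=
  ∃ F : ℝ × (Fin (m + 1) → ℝ) → ℝ,
    ContDiffOn ℝ (⊤ : ℕ∞) F {p : ℝ × (Fin (m + 1) → ℝ) | p.1 ∈ X ∧ 0 < p.2 0} ∧
    ∀ x q, f x q = F (x, fun i => q i.val)

/-- Partial derivative with respect to `x`. -/
def pdx (f : QFun) : QFun := fun x q => deriv (fun t => f t q) x

/-- Partial derivative with respect to `q_j`. -/
def pd (j : ℕ) (f : QFun) : QFun :=
  fun x q => deriv (fun t => f x (Function.update q j t)) (q j)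

/-- The total-derivative operator `D f = ∂f/∂x + Σ_j q_{j+1} ∂f/∂q_j`. -/
def Dop (f : QFun) : QFun :=
  fun x q => pdx f x q + ∑' j : ℕ, q (j + 1) * pd j f x q

/-- The Lagrange operator `Λ f = Σ_k (-1)^k D^k (∂f/∂q_k)`. -/
def Lam (f : QFun) : QFun :=
  fun x q => ∑' k : ℕ, (-1 : ℝ) ^ k * Dop^[k] (pd k f) x q

/-- The operator `L f = Σ_k (-1)^(k+1) D^k (q_0 ∂f/∂q_k)`. -/
def Lop (f : QFun) : QFun :=
  fun x q => ∑' k : ℕ, (-1 : ℝ) ^ (k + 1) * Dop^[k] (fun y p => p 0 * pd k f y p) x q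

/-- The Euler operator `E f = Σ_j q_j ∂f/∂q_j`. -/
def Eop (f : QFun) : QFun := fun x q => ∑' j : ℕ, q j * pd j f x q

/-- The operator `B_r f = Σ_{k ≥ r+1} (-1)^(k-1-r) D^(k-1-r) (∂f/∂q_k)`, for `r ≥ -1`. -/
def Bop (r : ℤ) (f : QFun) : QFun :=
  fun x q => ∑' k : ℕ,
    if r + 1 ≤ (k : ℤ) then
      (-1 : ℝ) ^ ((k : ℤ) - 1 - r).toNat * Dop^[((k : ℤ) - 1 - r).toNat] (pd k f) x q
    else 0

/-- The operator `C f = Σ_{r ≥ 0} q_r B_r f`. -/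
def Cop (f : QFun) : QFun := fun x q => ∑' r : ℕ, q r * Bop (r : ℤ) f x q

/-- `f` is homogeneous of degree `h` in `(q_0, q_1, …)`. -/
def IsHomog (X : Set ℝ) (h : ℝ) (f : QFun) : Prop :=
  ∀ x ∈ X, ∀ q : ℕ → ℝ, 0 < q 0 → ∀ l : ℝ, 0 < l →
    f x (fun j => l * q j) = l ^ h * f x q

/-- `X` is a nonempty open (possibly infinite or semi-infinite) interval of `ℝ`. -/
def IsOpenInterval (X : Set ℝ) : Prop := IsOpen X ∧ X.OrdConnected ∧ X.Nonempty

namespace Stmt10Aux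

open Set Function Filter

abbrev Vec (n : ℕ) := ℝ × (Fin (n+1) → ℝ)

def Om (X : Set ℝ) (n : ℕ) : Set (Vec n) := {p | p.1 ∈ X ∧ 0 < p.2 0}

def lift (n : ℕ) (F : Vec n → ℝ) : QFun := fun x q => F (x, fun i => q i.1)

def EqP (X : Set ℝ) (f g : QFun) : Prop :=
  ∀ x ∈ X, ∀ q : ℕ → ℝ, 0 < q 0 → f x q = g x q

def Nice (X : Set ℝ) (n : ℕ) (f : QFun) : Prop :=
  ∃ F : Vec n → ℝ, ContDiffOn ℝ (⊤ : ℕ∞) F (Om X n) ∧ EqP X f (lift n F)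

variable {X : Set ℝ} {n : ℕ} {F : Vec n → ℝ} {f g : QFun}

lemma om_open (hX : IsOpen X) (n : ℕ) : IsOpen (Om X n) := by
  have : Om X n = (Prod.fst ⁻¹' X) ∩ ((fun p : Vec n => p.2 0) ⁻¹' Ioi 0) := rfl
  rw [this]
  exact (hX.preimage continuous_fst).inter
    (isOpen_Ioi.preimage ((continuous_apply _).comp continuous_snd))

lemma mem_om {x : ℝ} {q : ℕ → ℝ} (hx : x ∈ X) (hq : 0 < q 0) :
    ((x, fun i : Fin (n+1) => q i.1) : Vec n) ∈ Om X n := ⟨hx, hq⟩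

/-! ### EqP basic lemmas -/

lemma EqP.refl (f : QFun) : EqP X f f := fun _ _ _ _ => rfl

lemma EqP.symm (h : EqP X f g) : EqP X g f := fun x hx q hq => (h x hx q hq).symm

lemma EqP.trans {h' : QFun} (h1 : EqP X f g) (h2 : EqP X g h') : EqP X f h' :=
  fun x hx q hq => (h1 x hx q hq).trans (h2 x hx q hq)

/-! ### Smoothness toolkit -/

lemma contDiffOn_fderiv_apply (hX : IsOpen X) (hF : ContDiffOn ℝ (⊤ : ℕ∞) F (Om X n)) (w : Vec n) :
    ContDiffOn ℝ (⊤ : ℕ∞) (fun p => fderiv ℝ F p w) (Om X n) := by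
  exact (hF.fderiv_of_isOpen (om_open hX n) (by simp)).clm_apply contDiffOn_const

lemma hasDerivAt_comp_affine (hX : IsOpen X) (hF : ContDiffOn ℝ (⊤ : ℕ∞) F (Om X n))
    {c w : Vec n} {t₀ : ℝ} (h : c + t₀ • w ∈ Om X n) :
    HasDerivAt (fun t => F (c + t • w)) (fderiv ℝ F (c + t₀ • w) w) t₀ := by
  have hd : DifferentiableAt ℝ F (c + t₀ • w) :=
    (hF.contDiffAt ((om_open hX n).mem_nhds h)).differentiableAt (by simp)
  have hγ : HasDerivAt (fun t : ℝ => c + t • w) w t₀ := by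
    simpa using ((hasDerivAt_id t₀).smul_const w).const_add c
  exact hd.hasFDerivAt.comp_hasDerivAt t₀ hγ


end Stmt10Aux
namespace Stmt10Aux
open Set Function Filter

variable {X : Set ℝ} {n : ℕ} {F : Vec n → ℝ} {f g : QFun}

/-- coordinate direction in jet space -/
def ej (n : ℕ) (j : Fin (n+1)) : Vec n := ((0 : ℝ), (Pi.single j 1 : Fin (n+1) → ℝ))

/-- `x` direction -/
def ex (n : ℕ) : Vec n := ((1 : ℝ), (0 : Fin (n+1) → ℝ))

lemma update_comp_proj (q : ℕ → ℝ) (j : Fin (n+1)) (t : ℝ) :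
    (fun i : Fin (n+1) => Function.update q j.1 t i.1)
      = Function.update (fun i : Fin (n+1) => q i.1) j t := by
  funext i
  simp [Function.update_apply, Fin.val_eq_val]

lemma update_path (x : ℝ) (v : Fin (n+1) → ℝ) (j : Fin (n+1)) (t : ℝ) :
    ((x, Function.update v j 0) : Vec n) + t • ej n j
      = (x, Function.update v j t) := by
  refine Prod.ext (by simp [ej]) ?_
  funext i
  rcases eq_or_ne i j with h | h
  · subst h; simp [ej]
  · simp [ej, Function.update_apply, h, Pi.single_apply]

/-- `pd j` of a lift, for `j ≤ n`, on the region. -/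
lemma pd_lift_le (hX : IsOpen X) (hF : ContDiffOn ℝ (⊤ : ℕ∞) F (Om X n)) {j : ℕ} (hj : j < n + 1) :
    EqP X (pd j (lift n F))
      (lift n (fun p => fderiv ℝ F p (ej n ⟨j, hj⟩))) := by
  intro x hx q hq
  set jf : Fin (n+1) := ⟨j, hj⟩
  set v : Fin (n+1) → ℝ := fun i => q i.1 with hv
  have hmem : ((x, v) : Vec n) ∈ Om X n := mem_om hx hq
  have hinner : (fun t => lift n F x (Function.update q j t))
      = fun t => F (((x, Function.update v jf 0) : Vec n) + t • ej n jf) := by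
    funext t
    rw [update_path]
    show F (x, fun i => Function.update q j t i.1) = _
    rw [show j = jf.1 from rfl, update_comp_proj]
  have hqj : q j = v jf := rfl
  have hpt : ((x, Function.update v jf 0) : Vec n) + (q j) • ej n jf = (x, v) := by
    rw [update_path, hqj, Function.update_eq_self]
  have hd := hasDerivAt_comp_affine hX hF (c := (x, Function.update v jf 0))
    (w := ej n jf) (t₀ := q j) (by rw [hpt]; exact hmem)
  rw [hpt] at hd
  show deriv (fun t => lift n F x (Function.update q j t)) (q j) = _
  rw [hinner]
  exact hd.deriv

/-- `pd j` of a lift vanishes identically for `j > n`. -/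
lemma pd_lift_gt {j : ℕ} (hj : n + 1 ≤ j) (x : ℝ) (q : ℕ → ℝ) :
    pd j (lift n F) x q = 0 := by
  have : (fun t => lift n F x (Function.update q j t)) = fun _ => lift n F x q := by
    funext t
    show F (x, fun i => Function.update q j t i.1) = F (x, fun i => q i.1)
    congr 1
    refine Prod.ext rfl ?_
    funext i
    exact Function.update_of_ne (by omega) _ _
  show deriv _ _ = 0
  rw [this, deriv_const]

/-- `pdx` of a lift on the region. -/
lemma pdx_lift (hX : IsOpen X) (hF : ContDiffOn ℝ (⊤ : ℕ∞) F (Om X n)) :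
    EqP X (pdx (lift n F)) (lift n (fun p => fderiv ℝ F p (ex n))) := by
  intro x hx q hq
  set v : Fin (n+1) → ℝ := fun i => q i.1 with hv
  have hmem : ((x, v) : Vec n) ∈ Om X n := mem_om hx hq
  have hpath : ∀ t : ℝ, (((0:ℝ), v) : Vec n) + t • ex n = (t, v) := by
    intro t; exact Prod.ext (by simp [ex]) (by simp [ex])
  have hd := hasDerivAt_comp_affine hX hF (c := ((0:ℝ), v))
    (w := ex n) (t₀ := x) (by rw [hpath]; exact hmem)
  rw [hpath] at hd
  show deriv (fun t => lift n F t q) x = _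
  have : (fun t => lift n F t q) = fun t => F ((((0:ℝ), v) : Vec n) + t • ex n) := by
    funext t; rw [hpath]; rfl
  rw [this]
  exact hd.deriv

end Stmt10Aux


namespace Stmt10Aux
open Set Function Filter

variable {X : Set ℝ} {n : ℕ} {F : Vec n → ℝ} {f g : QFun}

/-! ### Locality: operators respect `EqP` -/

lemma EqP.pdx (hX : IsOpen X) (h : EqP X f g) : EqP X (_root_.pdx f) (_root_.pdx g) := by
  intro x hx q hq
  apply Filter.EventuallyEq.deriv_eq
  exact Filter.eventually_of_mem (hX.mem_nhds hx) (fun t ht => h t ht q hq)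

lemma EqP.pd (h : EqP X f g) (j : ℕ) : EqP X (_root_.pd j f) (_root_.pd j g) := by
  intro x hx q hq
  apply Filter.EventuallyEq.deriv_eq
  rcases Nat.eq_zero_or_pos j with hj | hj
  · subst hj
    refine Filter.eventually_of_mem (isOpen_Ioi.mem_nhds hq) (fun t ht => ?_)
    exact h x hx _ (by simpa using ht)
  · refine Filter.Eventually.of_forall (fun t => ?_)
    exact h x hx _ (by rwa [Function.update_of_ne (by omega)])

lemma EqP.Dop (hX : IsOpen X) (h : EqP X f g) : EqP X (_root_.Dop f) (_root_.Dop g) := by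
  intro x hx q hq
  unfold _root_.Dop
  rw [h.pdx hX x hx q hq]
  congr 1
  exact tsum_congr (fun j => by rw [h.pd j x hx q hq])

lemma EqP.iterDop (hX : IsOpen X) (h : EqP X f g) (k : ℕ) :
    EqP X (_root_.Dop^[k] f) (_root_.Dop^[k] g) := by
  induction k with
  | zero => exact h
  | succ k ih =>
    rw [Function.iterate_succ_apply', Function.iterate_succ_apply']
    exact ih.Dop hX

/-- `Dop 0 = 0` and iterates. -/
lemma Dop_zero (x : ℝ) (q : ℕ → ℝ) : _root_.Dop (fun _ _ => (0:ℝ)) x q = 0 := by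
  unfold _root_.Dop _root_.pdx _root_.pd
  simp

lemma iterDop_zero (k : ℕ) (x : ℝ) (q : ℕ → ℝ) :
    _root_.Dop^[k] (fun _ _ => (0:ℝ)) x q = 0 := by
  induction k generalizing x q with
  | zero => rfl
  | succ k ih =>
    rw [Function.iterate_succ_apply]
    have : _root_.Dop (fun _ _ => (0:ℝ)) = fun x q => _root_.Dop (fun _ _ => (0:ℝ)) x q := rfl
    have h0 : _root_.Dop (fun _ _ => (0:ℝ)) = (fun _ _ => (0:ℝ)) := by
      funext y p
      exact Dop_zero y p
    rw [h0, ih]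

/-- If `f` vanishes on the region, so does `Dop^[k] f`. -/
lemma EqP.iterDop_zero_of (hX : IsOpen X) (h : EqP X f (fun _ _ => 0)) (k : ℕ) :
    EqP X (_root_.Dop^[k] f) (fun _ _ => 0) := by
  intro x hx q hq
  have := (h.iterDop hX k) x hx q hq
  rwa [iterDop_zero] at this

end Stmt10Aux


namespace Stmt10Aux
open Set Function Filter

variable {X : Set ℝ} {n : ℕ} {F : Vec n → ℝ} {f g : QFun}

/-! ### Nice closure properties -/

lemma Nice.pd_zero (hf : Nice X n f) {j : ℕ} (hj : n + 1 ≤ j) :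
    EqP X (pd j f) (fun _ _ => 0) := by
  obtain ⟨F, hF, heq⟩ := hf
  intro x hx q hq
  rw [heq.pd j x hx q hq, pd_lift_gt hj]

lemma Nice.pd (hX : IsOpen X) (hf : Nice X n f) (j : ℕ) : Nice X n (pd j f) := by
  obtain ⟨F, hF, heq⟩ := hf
  by_cases hj : j < n + 1
  · exact ⟨_, contDiffOn_fderiv_apply hX hF (ej n ⟨j, hj⟩),
      (heq.pd j).trans (pd_lift_le hX hF hj)⟩
  · refine ⟨fun _ => 0, contDiffOn_const, ?_⟩
    intro x hx q hq
    rw [(heq.pd j) x hx q hq, pd_lift_gt (by omega)]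
    rfl

lemma Nice.pdx (hX : IsOpen X) (hf : Nice X n f) : Nice X n (pdx f) := by
  obtain ⟨F, hF, heq⟩ := hf
  exact ⟨_, contDiffOn_fderiv_apply hX hF (ex n), (heq.pdx hX).trans (pdx_lift hX hF)⟩

/-- restriction map for order monotonicity -/
def res (n n' : ℕ) (h : n ≤ n') : Vec n' → Vec n :=
  fun p => (p.1, fun i => p.2 (Fin.castLE (by omega) i))

lemma contDiff_res (n n' : ℕ) (h : n ≤ n') : ContDiff ℝ (⊤ : ℕ∞) (res n n' h) := by
  apply contDiff_fst.prodMk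
  rw [contDiff_pi]
  intro i
  exact (ContinuousLinearMap.proj (R := ℝ) (φ := fun _ : Fin (n'+1) => ℝ)
    (Fin.castLE (by omega) i)).contDiff.comp contDiff_snd

lemma res_mapsTo (n n' : ℕ) (h : n ≤ n') : Set.MapsTo (res n n' h) (Om X n') (Om X n) := by
  intro p hp
  exact ⟨hp.1, hp.2⟩

lemma Nice.mono {n' : ℕ} (hf : Nice X n f) (h : n ≤ n') : Nice X n' f := by
  obtain ⟨F, hF, heq⟩ := hf
  refine ⟨F ∘ res n n' h, hF.comp (contDiff_res n n' h).contDiffOn (res_mapsTo n n' h), ?_⟩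
  intro x hx q hq
  rw [heq x hx q hq]
  rfl

lemma nice_const (c : ℝ) : Nice X n (fun _ _ => c) :=
  ⟨fun _ => c, contDiffOn_const, fun _ _ _ _ => rfl⟩

/-- the coordinate function `q_r` -/
def chi (r : ℕ) : QFun := fun _ q => q r

lemma nice_chi (r : ℕ) : Nice X r (chi r) := by
  refine ⟨fun p => p.2 (Fin.last r), ?_, fun _ _ _ _ => rfl⟩
  exact ((ContinuousLinearMap.proj (R := ℝ) (φ := fun _ : Fin (r+1) => ℝ)
    (Fin.last r)).contDiff.comp contDiff_snd).contDiffOn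

lemma Nice.add (hf : Nice X n f) (hg : Nice X n g) :
    Nice X n (fun x q => f x q + g x q) := by
  obtain ⟨F, hF, heF⟩ := hf
  obtain ⟨G, hG, heG⟩ := hg
  refine ⟨fun p => F p + G p, hF.add hG, ?_⟩
  intro x hx q hq
  show f x q + g x q = _
  rw [heF x hx q hq, heG x hx q hq]
  rfl

lemma Nice.mul (hf : Nice X n f) (hg : Nice X n g) :
    Nice X n (fun x q => f x q * g x q) := by
  obtain ⟨F, hF, heF⟩ := hf
  obtain ⟨G, hG, heG⟩ := hg
  refine ⟨fun p => F p * G p, hF.mul hG, ?_⟩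
  intro x hx q hq
  show f x q * g x q = _
  rw [heF x hx q hq, heG x hx q hq]
  rfl

lemma Nice.smul (c : ℝ) (hf : Nice X n f) : Nice X n (fun x q => c * f x q) :=
  (nice_const c).mul hf

lemma nice_sum {s : Finset ℕ} {f : ℕ → QFun} (hf : ∀ k ∈ s, Nice X n (f k)) :
    Nice X n (fun x q => ∑ k ∈ s, f k x q) := by
  classical
  induction s using Finset.induction with
  | empty => simpa using nice_const 0
  | @insert a s hk ih =>
    have h1 : Nice X n (f a) := hf a (Finset.mem_insert_self a s)
    have h2 := ih (fun k hk => hf k (Finset.mem_insert_of_mem hk))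
    have := h1.add h2
    have h3 : (fun x q => f a x q + ∑ k ∈ s, f k x q)
        = fun x q => ∑ k ∈ insert a s, f k x q := by
      funext x q
      rw [Finset.sum_insert hk]
    rwa [h3] at this

/-- `Nice` transfers across `EqP`. -/
lemma Nice.congr (hf : Nice X n f) (h : EqP X f g) : Nice X n g := by
  obtain ⟨F, hF, heq⟩ := hf
  exact ⟨F, hF, h.symm.trans heq⟩

end Stmt10Aux


namespace Stmt10Aux
open Set Function Filter

variable {X : Set ℝ} {n : ℕ} {F : Vec n → ℝ} {f g : QFun}

/-! ### Differentiability of the 1-variable slices -/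

/-- On the region, the inner function of `pd j f` agrees near the base point
with the corresponding slice of the lift. -/
lemma slice_eventuallyEq (heq : EqP X f (lift n F)) {x : ℝ} (hx : x ∈ X)
    {q : ℕ → ℝ} (hq : 0 < q 0) (j : ℕ) :
    (fun t => f x (Function.update q j t))
      =ᶠ[nhds (q j)] (fun t => lift n F x (Function.update q j t)) := by
  rcases Nat.eq_zero_or_pos j with hj | hj
  · subst hj
    refine Filter.eventually_of_mem (isOpen_Ioi.mem_nhds hq) (fun t ht => ?_)
    exact heq x hx _ (by simpa using ht)
  · refine Filter.Eventually.of_forall (fun t => ?_)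
    exact heq x hx _ (by rwa [Function.update_of_ne (by omega)])

lemma Nice.diffAt_pd (hX : IsOpen X) (hf : Nice X n f) {x : ℝ} (hx : x ∈ X)
    {q : ℕ → ℝ} (hq : 0 < q 0) (j : ℕ) :
    DifferentiableAt ℝ (fun t => f x (Function.update q j t)) (q j) := by
  obtain ⟨F, hF, heq⟩ := hf
  refine (slice_eventuallyEq heq hx hq j).differentiableAt_iff.mpr ?_
  by_cases hj : j < n + 1
  · set jf : Fin (n+1) := ⟨j, hj⟩
    set v : Fin (n+1) → ℝ := fun i => q i.1
    have hmem : ((x, v) : Vec n) ∈ Om X n := mem_om hx hq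
    have hinner : (fun t => lift n F x (Function.update q j t))
        = fun t => F (((x, Function.update v jf 0) : Vec n) + t • ej n jf) := by
      funext t
      rw [update_path]
      show F (x, fun i => Function.update q j t i.1) = _
      rw [show j = jf.1 from rfl, update_comp_proj]
    have hpt : ((x, Function.update v jf 0) : Vec n) + (q j) • ej n jf = (x, v) := by
      rw [update_path, show q j = v jf from rfl, Function.update_eq_self]
    have hd := hasDerivAt_comp_affine hX hF (c := (x, Function.update v jf 0))
      (w := ej n jf) (t₀ := q j) (by rw [hpt]; exact hmem)
    rw [hinner]
    exact hd.differentiableAt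
  · have : (fun t => lift n F x (Function.update q j t)) = fun _ => lift n F x q := by
      funext t
      show F (x, fun i => Function.update q j t i.1) = F (x, fun i => q i.1)
      congr 1
      refine Prod.ext rfl ?_
      funext i
      exact Function.update_of_ne (by omega) _ _
    rw [this]
    exact differentiableAt_const _

lemma Nice.diffAt_pdx (hX : IsOpen X) (hf : Nice X n f) {x : ℝ} (hx : x ∈ X)
    {q : ℕ → ℝ} (hq : 0 < q 0) :
    DifferentiableAt ℝ (fun t => f t q) x := by
  obtain ⟨F, hF, heq⟩ := hf
  have hev : (fun t => f t q) =ᶠ[nhds x] (fun t => lift n F t q) :=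
    Filter.eventually_of_mem (hX.mem_nhds hx) (fun t ht => heq t ht q hq)
  refine hev.differentiableAt_iff.mpr ?_
  set v : Fin (n+1) → ℝ := fun i => q i.1
  have hmem : ((x, v) : Vec n) ∈ Om X n := mem_om hx hq
  have hpath : ∀ t : ℝ, (((0:ℝ), v) : Vec n) + t • ex n = (t, v) := by
    intro t; exact Prod.ext (by simp [ex]) (by simp [ex])
  have hd := hasDerivAt_comp_affine hX hF (c := ((0:ℝ), v))
    (w := ex n) (t₀ := x) (by rw [hpath]; exact hmem)
  have : (fun t => lift n F t q) = fun t => F ((((0:ℝ), v) : Vec n) + t • ex n) := by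
    funext t; rw [hpath]; rfl
  rw [this]
  exact hd.differentiableAt

/-! ### Derivative rules on the region -/

lemma pd_add (hX : IsOpen X) (hf : Nice X n f) (hg : Nice X n g) (j : ℕ) :
    EqP X (pd j (fun x q => f x q + g x q)) (fun x q => pd j f x q + pd j g x q) := by
  intro x hx q hq
  show deriv (fun t => f x (Function.update q j t) + g x (Function.update q j t)) (q j) = _
  rw [deriv_fun_add (hf.diffAt_pd hX hx hq j) (hg.diffAt_pd hX hx hq j)]
  rfl

lemma pd_smul (hX : IsOpen X) (hf : Nice X n f) (c : ℝ) (j : ℕ) :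
    EqP X (pd j (fun x q => c * f x q)) (fun x q => c * pd j f x q) := by
  intro x hx q hq
  show deriv (fun t => c * f x (Function.update q j t)) (q j) = _
  rw [deriv_const_mul c (hf.diffAt_pd hX hx hq j)]
  rfl

lemma pd_chi_mul (hX : IsOpen X) (hf : Nice X n f) (r j : ℕ) :
    EqP X (pd j (fun x q => q r * f x q))
      (fun x q => (if j = r then f x q else 0) + q r * pd j f x q) := by
  intro x hx q hq
  rcases eq_or_ne j r with h | h
  · subst h
    show deriv (fun t => Function.update q j t j * f x (Function.update q j t)) (q j) = _
    have h1 : (fun t => Function.update q j t j * f x (Function.update q j t))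
        = fun t => t * f x (Function.update q j t) := by
      funext t; rw [Function.update_self]
    rw [h1, deriv_fun_mul differentiableAt_fun_id (hf.diffAt_pd hX hx hq j)]
    simp [Function.update_eq_self, pd]
  · show deriv (fun t => Function.update q j t r * f x (Function.update q j t)) (q j) = _
    have h1 : (fun t => Function.update q j t r * f x (Function.update q j t))
        = fun t => q r * f x (Function.update q j t) := by
      funext t; rw [Function.update_of_ne (Ne.symm h)]
    rw [h1, deriv_const_mul _ (hf.diffAt_pd hX hx hq j)]
    simp [h, pd]

lemma pdx_add (hX : IsOpen X) (hf : Nice X n f) (hg : Nice X n g) :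
    EqP X (pdx (fun x q => f x q + g x q)) (fun x q => pdx f x q + pdx g x q) := by
  intro x hx q hq
  show deriv (fun t => f t q + g t q) x = _
  rw [deriv_fun_add (hf.diffAt_pdx hX hx hq) (hg.diffAt_pdx hX hx hq)]
  rfl

lemma pdx_smul (hX : IsOpen X) (hf : Nice X n f) (c : ℝ) :
    EqP X (pdx (fun x q => c * f x q)) (fun x q => c * pdx f x q) := by
  intro x hx q hq
  show deriv (fun t => c * f t q) x = _
  rw [deriv_const_mul c (hf.diffAt_pdx hX hx hq)]
  rfl

lemma pdx_chi_mul (hX : IsOpen X) (hf : Nice X n f) (r : ℕ) :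
    EqP X (pdx (fun x q => q r * f x q)) (fun x q => q r * pdx f x q) := by
  intro x hx q hq
  show deriv (fun t => q r * f t q) x = _
  rw [deriv_const_mul _ (hf.diffAt_pdx hX hx hq)]
  rfl

end Stmt10Aux


namespace Stmt10Aux
open Set Function Filter

variable {X : Set ℝ} {n : ℕ} {F : Vec n → ℝ} {f g : QFun}

/-! ### finite sums -/

lemma pd_finsum (hX : IsOpen X) {s : Finset ℕ} {f : ℕ → QFun}
    (hf : ∀ k ∈ s, Nice X n (f k)) (j : ℕ) :
    EqP X (pd j (fun x q => ∑ k ∈ s, f k x q))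
      (fun x q => ∑ k ∈ s, pd j (f k) x q) := by
  classical
  induction s using Finset.induction with
  | empty =>
    intro x hx q hq
    show deriv (fun t => ∑ k ∈ (∅ : Finset ℕ), f k x (Function.update q j t)) (q j) = _
    simp
  | @insert a s ha ih =>
    have h1 : Nice X n (f a) := hf a (Finset.mem_insert_self a s)
    have h2 : ∀ k ∈ s, Nice X n (f k) := fun k hk => hf k (Finset.mem_insert_of_mem hk)
    have hs : Nice X n (fun x q => ∑ k ∈ s, f k x q) := nice_sum h2
    intro x hx q hq
    have e1 : (fun x q => ∑ k ∈ insert a s, f k x q)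
        = fun x q => f a x q + ∑ k ∈ s, f k x q := by
      funext x q; rw [Finset.sum_insert ha]
    rw [e1, pd_add hX h1 hs j x hx q hq]
    show pd j (f a) x q + pd j (fun x q => ∑ k ∈ s, f k x q) x q = ∑ k ∈ insert a s, pd j (f k) x q
    rw [Finset.sum_insert ha, (ih h2) x hx q hq]

/-! ### Truncation of `Dop` and `Nice.Dop` -/

lemma Dop_eval (hf : Nice X n f) :
    EqP X (Dop f)
      (fun x q => pdx f x q + ∑ j ∈ Finset.range (n+1), q (j+1) * pd j f x q) := by
  intro x hx q hq
  unfold Dop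
  congr 1
  refine tsum_eq_sum (fun j hj => ?_)
  rw [hf.pd_zero (by simpa using hj) x hx q hq]
  ring

lemma Nice.Dop (hX : IsOpen X) (hf : Nice X n f) : Nice X (n+1) (_root_.Dop f) := by
  have h1 : Nice X (n+1) (fun x q => _root_.pdx f x q
      + ∑ j ∈ Finset.range (n+1), q (j+1) * _root_.pd j f x q) := by
    refine ((hf.pdx hX).mono (by omega)).add (nice_sum fun j hj => ?_)
    exact ((nice_chi (j+1)).mono (by simpa [Nat.lt_succ_iff] using hj)).mul
      ((hf.pd hX j).mono (by omega))
  exact h1.congr (Dop_eval hf).symm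

lemma Nice.iterDop (hX : IsOpen X) (hf : Nice X n f) (k : ℕ) :
    Nice X (n+k) (_root_.Dop^[k] f) := by
  induction k with
  | zero => exact hf
  | succ k ih =>
    rw [Function.iterate_succ_apply']
    have := ih.Dop hX
    exact this.mono (by omega)

end Stmt10Aux


namespace Stmt10Aux
open Set Function Filter

variable {X : Set ℝ} {n : ℕ} {F : Vec n → ℝ} {f g : QFun}

lemma Dop_add (hX : IsOpen X) (hf : Nice X n f) (hg : Nice X n g) :
    EqP X (Dop (fun x q => f x q + g x q)) (fun x q => Dop f x q + Dop g x q) := by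
  intro x hx q hq
  rw [Dop_eval (hf.add hg) x hx q hq]
  show pdx (fun x q => f x q + g x q) x q
      + ∑ j ∈ Finset.range (n+1), q (j+1) * pd j (fun x q => f x q + g x q) x q = _
  rw [pdx_add hX hf hg x hx q hq]
  have hsum : ∀ j ∈ Finset.range (n+1), q (j+1) * pd j (fun x q => f x q + g x q) x q
      = q (j+1) * pd j f x q + q (j+1) * pd j g x q := by
    intro j _
    rw [pd_add hX hf hg j x hx q hq]
    show q (j+1) * (pd j f x q + pd j g x q) = _
    ring
  rw [Finset.sum_congr rfl hsum, Finset.sum_add_distrib]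
  show _ = Dop f x q + Dop g x q
  rw [Dop_eval hf x hx q hq, Dop_eval hg x hx q hq]
  show _ = (pdx f x q + ∑ j ∈ Finset.range (n+1), q (j+1) * pd j f x q)
      + (pdx g x q + ∑ j ∈ Finset.range (n+1), q (j+1) * pd j g x q)
  ring

lemma Dop_smul (hX : IsOpen X) (hf : Nice X n f) (c : ℝ) :
    EqP X (Dop (fun x q => c * f x q)) (fun x q => c * Dop f x q) := by
  intro x hx q hq
  rw [Dop_eval (hf.smul c) x hx q hq]
  show pdx (fun x q => c * f x q) x q
      + ∑ j ∈ Finset.range (n+1), q (j+1) * pd j (fun x q => c * f x q) x q = _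
  rw [pdx_smul hX hf c x hx q hq]
  have hsum : ∀ j ∈ Finset.range (n+1), q (j+1) * pd j (fun x q => c * f x q) x q
      = c * (q (j+1) * pd j f x q) := by
    intro j _
    rw [pd_smul hX hf c j x hx q hq]
    show q (j+1) * (c * pd j f x q) = _
    ring
  rw [Finset.sum_congr rfl hsum, ← Finset.mul_sum]
  show _ = c * Dop f x q
  rw [Dop_eval hf x hx q hq]
  show _ = c * (pdx f x q + ∑ j ∈ Finset.range (n+1), q (j+1) * pd j f x q)
  ring

lemma Dop_chi_mul (hX : IsOpen X) (hf : Nice X n f) {r : ℕ} (hr : r ≤ n) :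
    EqP X (Dop (fun x q => q r * f x q))
      (fun x q => q (r+1) * f x q + q r * Dop f x q) := by
  intro x hx q hq
  have hnice : Nice X n (fun x q => q r * f x q) :=
    Nice.mul ((nice_chi r).mono hr) hf
  rw [Dop_eval hnice x hx q hq]
  show pdx (fun x q => q r * f x q) x q
      + ∑ j ∈ Finset.range (n+1), q (j+1) * pd j (fun x q => q r * f x q) x q = _
  rw [pdx_chi_mul hX hf r x hx q hq]
  have hsum : ∀ j ∈ Finset.range (n+1), q (j+1) * pd j (fun x q => q r * f x q) x q
      = (if j = r then q (r+1) * f x q else 0) + q r * (q (j+1) * pd j f x q) := by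
    intro j _
    rw [pd_chi_mul hX hf r j x hx q hq]
    show q (j+1) * ((if j = r then f x q else 0) + q r * pd j f x q) = _
    rcases eq_or_ne j r with h | h
    · subst h; simp; ring
    · simp [h]; ring
  rw [Finset.sum_congr rfl hsum, Finset.sum_add_distrib, Finset.sum_ite_eq' (Finset.range (n+1))]
  rw [← Finset.mul_sum]
  have hrmem : r ∈ Finset.range (n+1) := Finset.mem_range.mpr (by omega)
  rw [if_pos hrmem]
  show _ = q (r+1) * f x q + q r * Dop f x q
  rw [Dop_eval hf x hx q hq]
  show _ = q (r+1) * f x q + q r * (pdx f x q + ∑ j ∈ Finset.range (n+1), q (j+1) * pd j f x q)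
  ring

lemma iterDop_add (hX : IsOpen X) (hf : Nice X n f) (hg : Nice X n g) (k : ℕ) :
    EqP X (Dop^[k] (fun x q => f x q + g x q))
      (fun x q => Dop^[k] f x q + Dop^[k] g x q) := by
  induction k generalizing f g n with
  | zero => exact EqP.refl _
  | succ k ih =>
    rw [Function.iterate_succ_apply]
    have h1 := (Dop_add hX hf hg).iterDop hX k
    refine h1.trans ?_
    refine (ih (n := n+1) (hf.Dop hX) (hg.Dop hX)).trans ?_
    intro x hx q hq
    show Dop^[k] (Dop f) x q + Dop^[k] (Dop g) x q = _
    rw [← Function.iterate_succ_apply Dop k f, ← Function.iterate_succ_apply Dop k g]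

end Stmt10Aux


namespace Stmt10Aux
open Set Function Filter

variable {X : Set ℝ} {n : ℕ} {F : Vec n → ℝ} {f g : QFun}

/-! ### Truncations of the sum operators -/

lemma Lam_eval (hX : IsOpen X) (hf : Nice X n f) :
    EqP X (Lam f)
      (fun x q => ∑ k ∈ Finset.range (n+1), (-1:ℝ)^k * Dop^[k] (pd k f) x q) := by
  intro x hx q hq
  refine tsum_eq_sum (fun k hk => ?_)
  have h0 : EqP X (pd k f) (fun _ _ => 0) := hf.pd_zero (by simpa using hk)
  rw [h0.iterDop_zero_of hX k x hx q hq]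
  ring

lemma Lop_eval (hX : IsOpen X) (hf : Nice X n f) :
    EqP X (Lop f)
      (fun x q => ∑ k ∈ Finset.range (n+1),
        (-1:ℝ)^(k+1) * Dop^[k] (fun y p => p 0 * pd k f y p) x q) := by
  intro x hx q hq
  refine tsum_eq_sum (fun k hk => ?_)
  have h0 : EqP X (fun y p => p 0 * pd k f y p) (fun _ _ => 0) := by
    intro y hy p hp
    show p 0 * pd k f y p = 0
    rw [hf.pd_zero (by simpa using hk) y hy p hp]
    exact mul_zero _
  rw [h0.iterDop_zero_of hX k x hx q hq]
  ring

lemma Eop_eval (hf : Nice X n f) :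
    EqP X (Eop f) (fun x q => ∑ j ∈ Finset.range (n+1), q j * pd j f x q) := by
  intro x hx q hq
  refine tsum_eq_sum (fun j hj => ?_)
  rw [hf.pd_zero (by simpa using hj) x hx q hq]
  exact mul_zero _

lemma Bop_zero (hX : IsOpen X) (hf : Nice X n f) {r : ℕ} (hr : n ≤ r) :
    EqP X (Bop (r:ℤ) f) (fun _ _ => 0) := by
  intro x hx q hq
  show ∑' k : ℕ, _ = (0:ℝ)
  have : ∀ k : ℕ, (if (r:ℤ) + 1 ≤ (k:ℤ) then
      (-1:ℝ) ^ ((k:ℤ) - 1 - r).toNat * Dop^[((k:ℤ) - 1 - r).toNat] (pd k f) x q else 0) = 0 := by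
    intro k
    by_cases hk : (r:ℤ) + 1 ≤ (k:ℤ)
    · rw [if_pos hk]
      have h0 : EqP X (pd k f) (fun _ _ => 0) := hf.pd_zero (by omega)
      rw [h0.iterDop_zero_of hX _ x hx q hq]
      ring
    · rw [if_neg hk]
  simp only [this, tsum_zero]

lemma Bop_nat_eval (hX : IsOpen X) (hf : Nice X n f) (r : ℕ) :
    EqP X (Bop (r:ℤ) f)
      (fun x q => ∑ k ∈ Finset.range (n+1),
        if r+1 ≤ k then (-1:ℝ)^(k-1-r) * Dop^[k-1-r] (pd k f) x q else 0) := by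
  intro x hx q hq
  show ∑' k : ℕ, _ = _
  have h1 : ∑' k : ℕ, (if (r:ℤ) + 1 ≤ (k:ℤ) then
      (-1:ℝ) ^ ((k:ℤ) - 1 - r).toNat * Dop^[((k:ℤ) - 1 - r).toNat] (pd k f) x q else 0)
      = ∑ k ∈ Finset.range (n+1), (if (r:ℤ) + 1 ≤ (k:ℤ) then
        (-1:ℝ) ^ ((k:ℤ) - 1 - r).toNat * Dop^[((k:ℤ) - 1 - r).toNat] (pd k f) x q else 0) := by
    refine tsum_eq_sum (fun k hk => ?_)
    by_cases hc : (r:ℤ) + 1 ≤ (k:ℤ)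
    · rw [if_pos hc]
      have h0 : EqP X (pd k f) (fun _ _ => 0) := hf.pd_zero (by simpa using hk)
      rw [h0.iterDop_zero_of hX _ x hx q hq]
      ring
    · rw [if_neg hc]
  rw [h1]
  refine Finset.sum_congr rfl (fun k _ => ?_)
  by_cases hc : r + 1 ≤ k
  · have hc' : (r:ℤ) + 1 ≤ (k:ℤ) := by exact_mod_cast hc
    have htn : ((k:ℤ) - 1 - (r:ℤ)).toNat = k - 1 - r := by omega
    rw [if_pos hc', if_pos hc, htn]
  · have hc' : ¬ ((r:ℤ) + 1 ≤ (k:ℤ)) := by exact_mod_cast hc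
    rw [if_neg hc', if_neg hc]

lemma Cop_eval (hX : IsOpen X) (hf : Nice X n f) :
    EqP X (Cop f)
      (fun x q => ∑ r ∈ Finset.range (n+1), q r * Bop (r:ℤ) f x q) := by
  intro x hx q hq
  refine tsum_eq_sum (fun r hr => ?_)
  rw [Bop_zero hX hf (by simp at hr; omega) x hx q hq]
  exact mul_zero _

/-! ### Niceness of the operators -/

lemma Nice.Lam (hX : IsOpen X) (hf : Nice X n f) : Nice X (2*n) (_root_.Lam f) := by
  refine Nice.congr ?_ (Lam_eval hX hf).symm
  refine nice_sum (fun k hk => ?_)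
  have hk' : k ≤ n := by simpa [Nat.lt_succ_iff] using hk
  exact (((hf.pd hX k).iterDop hX k).mono (by omega)).smul ((-1:ℝ)^k)
    |>.congr (EqP.refl _)

lemma Nice.Lop (hX : IsOpen X) (hf : Nice X n f) : Nice X (2*n) (_root_.Lop f) := by
  refine Nice.congr ?_ (Lop_eval hX hf).symm
  refine nice_sum (fun k hk => ?_)
  have hk' : k ≤ n := by simpa [Nat.lt_succ_iff] using hk
  have h1 : Nice X n (fun y p => p 0 * _root_.pd k f y p) :=
    Nice.mul ((nice_chi 0).mono (Nat.zero_le n)) (hf.pd hX k)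
  exact ((h1.iterDop hX k).mono (by omega)).smul ((-1:ℝ)^(k+1)) |>.congr (EqP.refl _)

lemma Nice.Eop (hX : IsOpen X) (hf : Nice X n f) : Nice X n (_root_.Eop f) := by
  refine Nice.congr ?_ (Eop_eval hf).symm
  refine nice_sum (fun j hj => ?_)
  have hj' : j ≤ n := by simpa [Nat.lt_succ_iff] using hj
  exact Nice.mul ((nice_chi j).mono hj') (hf.pd hX j)

lemma Nice.Bop (hX : IsOpen X) (hf : Nice X n f) (r : ℕ) :
    Nice X (2*n) (_root_.Bop (r:ℤ) f) := by
  refine Nice.congr ?_ (Bop_nat_eval hX hf r).symm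
  refine nice_sum (fun k hk => ?_)
  have hk' : k ≤ n := by simpa [Nat.lt_succ_iff] using hk
  by_cases hc : r + 1 ≤ k
  · have he : (fun x q => if r+1 ≤ k then
        (-1:ℝ)^(k-1-r) * _root_.Dop^[k-1-r] (_root_.pd k f) x q else 0)
        = fun x q => (-1:ℝ)^(k-1-r) * _root_.Dop^[k-1-r] (_root_.pd k f) x q := by
      funext x q; rw [if_pos hc]
    rw [he]
    exact (((hf.pd hX k).iterDop hX (k-1-r)).mono (by omega)).smul _
  · have he : (fun x q => if r+1 ≤ k then
        (-1:ℝ)^(k-1-r) * _root_.Dop^[k-1-r] (_root_.pd k f) x q else 0)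
        = fun _ _ => (0:ℝ) := by
      funext x q; rw [if_neg hc]
    rw [he]
    exact nice_const 0

lemma Nice.Cop (hX : IsOpen X) (hf : Nice X n f) : Nice X (2*n) (_root_.Cop f) := by
  refine Nice.congr ?_ (Cop_eval hX hf).symm
  refine nice_sum (fun r hr => ?_)
  have hr' : r ≤ n := by simpa [Nat.lt_succ_iff] using hr
  exact Nice.mul ((nice_chi r).mono (by omega)) (hf.Bop hX r)

end Stmt10Aux


namespace Stmt10Aux
open Set Function Filter

variable {X : Set ℝ} {n : ℕ} {F : Vec n → ℝ} {f g : QFun}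

/-! ### Schwarz symmetry -/

lemma fderiv_swap (hX : IsOpen X) (hF : ContDiffOn ℝ (⊤ : ℕ∞) F (Om X n)) {p : Vec n}
    (hp : p ∈ Om X n) (w u : Vec n) :
    fderiv ℝ (fun p => fderiv ℝ F p w) p u = fderiv ℝ (fun p => fderiv ℝ F p u) p w := by
  have hAt : ContDiffAt ℝ (⊤ : ℕ∞) F p := hF.contDiffAt ((om_open hX n).mem_nhds hp)
  have hsymm : IsSymmSndFDerivAt ℝ F p := hAt.isSymmSndFDerivAt (by rw [minSmoothness_of_isRCLikeNormedField]; exact WithTop.coe_le_coe.mpr le_top)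
  have hd : DifferentiableAt ℝ (fderiv ℝ F) p :=
    (hAt.fderiv_right (m := (⊤ : ℕ∞)) ((by simp))).differentiableAt (by simp)
  have key : ∀ v : Vec n, fderiv ℝ (fun p => fderiv ℝ F p v) p
      = (fderiv ℝ (fderiv ℝ F) p).flip v := by
    intro v
    have := fderiv_clm_apply (c := fderiv ℝ F) (u := fun _ => v) hd (differentiableAt_const v)
    simpa using this
  rw [key w, key u]
  show fderiv ℝ (fderiv ℝ F) p u w = fderiv ℝ (fderiv ℝ F) p w u
  exact hsymm.eq u w

/-- `pd` of the zero function is zero. -/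
lemma pd_zero_fun (k : ℕ) (x : ℝ) (q : ℕ → ℝ) : pd k (fun _ _ => (0:ℝ)) x q = 0 := by
  show deriv _ _ = 0
  simp

lemma pdx_zero_fun (x : ℝ) (q : ℕ → ℝ) : pdx (fun _ _ => (0:ℝ)) x q = 0 := by
  show deriv _ _ = 0
  simp

lemma pd_pd_symm (hX : IsOpen X) (hf : Nice X n f) (j k : ℕ) :
    EqP X (pd j (pd k f)) (pd k (pd j f)) := by
  obtain ⟨F, hF, heq⟩ := hf
  have hnice : Nice X n f := ⟨F, hF, heq⟩
  by_cases hj : j < n + 1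
  · by_cases hk : k < n + 1
    · have h1 : EqP X (pd k f) (lift n (fun p => fderiv ℝ F p (ej n ⟨k, hk⟩))) :=
        (heq.pd k).trans (pd_lift_le hX hF hk)
      have h2 : EqP X (pd j f) (lift n (fun p => fderiv ℝ F p (ej n ⟨j, hj⟩))) :=
        (heq.pd j).trans (pd_lift_le hX hF hj)
      have h1' := (h1.pd j).trans
        (pd_lift_le hX (contDiffOn_fderiv_apply hX hF (ej n ⟨k, hk⟩)) hj)
      have h2' := (h2.pd k).trans
        (pd_lift_le hX (contDiffOn_fderiv_apply hX hF (ej n ⟨j, hj⟩)) hk)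
      refine h1'.trans (EqP.trans ?_ h2'.symm)
      intro x hx q hq
      exact fderiv_swap hX hF (mem_om hx hq) (ej n ⟨k, hk⟩) (ej n ⟨j, hj⟩)
    · -- k > n : both sides vanish on the region
      have hz : EqP X (pd k f) (fun _ _ => 0) := hnice.pd_zero (by omega)
      have left : EqP X (pd j (pd k f)) (fun _ _ => 0) := by
        refine (hz.pd j).trans ?_
        intro x hx q hq
        exact pd_zero_fun j x q
      have right : EqP X (pd k (pd j f)) (fun _ _ => 0) :=
        (hnice.pd hX j).pd_zero (by omega)
      exact left.trans right.symm
  · have hz : EqP X (pd j f) (fun _ _ => 0) := hnice.pd_zero (by omega)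
    have right : EqP X (pd k (pd j f)) (fun _ _ => 0) := by
      refine (hz.pd k).trans ?_
      intro x hx q hq
      exact pd_zero_fun k x q
    have left : EqP X (pd j (pd k f)) (fun _ _ => 0) :=
      (hnice.pd hX k).pd_zero (by omega)
    exact left.trans right.symm

lemma pd_pdx_symm (hX : IsOpen X) (hf : Nice X n f) (j : ℕ) :
    EqP X (pd j (pdx f)) (pdx (pd j f)) := by
  obtain ⟨F, hF, heq⟩ := hf
  have hnice : Nice X n f := ⟨F, hF, heq⟩
  by_cases hj : j < n + 1
  · have h1 : EqP X (pdx f) (lift n (fun p => fderiv ℝ F p (ex n))) :=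
      (heq.pdx hX).trans (pdx_lift hX hF)
    have h2 : EqP X (pd j f) (lift n (fun p => fderiv ℝ F p (ej n ⟨j, hj⟩))) :=
      (heq.pd j).trans (pd_lift_le hX hF hj)
    have h1' := (h1.pd j).trans
      (pd_lift_le hX (contDiffOn_fderiv_apply hX hF (ex n)) hj)
    have h2' := (h2.pdx hX).trans
      (pdx_lift hX (contDiffOn_fderiv_apply hX hF (ej n ⟨j, hj⟩)))
    refine h1'.trans (EqP.trans ?_ h2'.symm)
    intro x hx q hq
    exact fderiv_swap hX hF (mem_om hx hq) (ex n) (ej n ⟨j, hj⟩)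
  · have hz : EqP X (pd j f) (fun _ _ => 0) := hnice.pd_zero (by omega)
    have right : EqP X (pdx (pd j f)) (fun _ _ => 0) := by
      refine (hz.pdx hX).trans ?_
      intro x hx q hq
      exact pdx_zero_fun x q
    have left : EqP X (pd j (pdx f)) (fun _ _ => 0) :=
      (hnice.pdx hX).pd_zero (by omega)
    exact left.trans right.symm

end Stmt10Aux


namespace Stmt10Aux
open Set Function Filter

variable {X : Set ℝ} {n : ℕ} {F : Vec n → ℝ} {f g : QFun}

/-- Common setup for `pd k (Dop f)`. -/
lemma pd_Dop_aux (hX : IsOpen X) (hf : Nice X n f) (k : ℕ) :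
    EqP X (pd k (Dop f))
      (fun x q => Dop (pd k f) x q
        + ∑ j ∈ Finset.range (n+1), (if k = j+1 then pd j f x q else 0)) := by
  have hA : Nice X (n+1) (pdx f) := (hf.pdx hX).mono (by omega)
  have hterm : ∀ j ∈ Finset.range (n+1),
      Nice X (n+1) (fun x q => q (j+1) * pd j f x q) := by
    intro j hj
    exact Nice.mul ((nice_chi (j+1)).mono (by simpa [Nat.lt_succ_iff] using hj))
      ((hf.pd hX j).mono (by omega))
  have hB : Nice X (n+1) (fun x q => ∑ j ∈ Finset.range (n+1), q (j+1) * pd j f x q) :=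
    nice_sum hterm
  have h1 : EqP X (pd k (Dop f))
      (pd k (fun x q => pdx f x q + ∑ j ∈ Finset.range (n+1), q (j+1) * pd j f x q)) :=
    (Dop_eval hf).pd k
  refine h1.trans ?_
  have h2 := pd_add hX hA hB k
  refine h2.trans ?_
  intro x hx q hq
  show pd k (pdx f) x q + pd k (fun x q => ∑ j ∈ Finset.range (n+1), q (j+1) * pd j f x q) x q = _
  rw [pd_pdx_symm hX hf k x hx q hq]
  rw [pd_finsum hX (f := fun j => fun x q => q (j+1) * pd j f x q) hterm k x hx q hq]
  beta_reduce
  have h5 : ∀ j ∈ Finset.range (n+1),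
      pd k (fun x q => q (j+1) * pd j f x q) x q
        = (if k = j+1 then pd j f x q else 0) + q (j+1) * pd j (pd k f) x q := by
    intro j hj
    rw [pd_chi_mul hX (hf.pd hX j) (j+1) k x hx q hq]
    show (if k = j+1 then pd j f x q else 0) + q (j+1) * pd k (pd j f) x q = _
    rw [pd_pd_symm hX hf k j x hx q hq]
  rw [Finset.sum_congr rfl h5, Finset.sum_add_distrib]
  show _ = Dop (pd k f) x q + _
  rw [Dop_eval (hf.pd hX k) x hx q hq]
  show _ = (pdx (pd k f) x q + ∑ j ∈ Finset.range (n+1), q (j+1) * pd j (pd k f) x q) + _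
  ring

lemma pd_Dop_zero (hX : IsOpen X) (hf : Nice X n f) :
    EqP X (pd 0 (Dop f)) (Dop (pd 0 f)) := by
  refine (pd_Dop_aux hX hf 0).trans ?_
  intro x hx q hq
  show Dop (pd 0 f) x q + ∑ j ∈ Finset.range (n+1), (if 0 = j+1 then pd j f x q else 0) = _
  have : ∀ j ∈ Finset.range (n+1), (if 0 = j+1 then pd j f x q else 0) = 0 := by
    intro j _; simp
  rw [Finset.sum_congr rfl this, Finset.sum_const_zero, add_zero]

lemma pd_Dop_succ (hX : IsOpen X) (hf : Nice X n f) (k : ℕ) :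
    EqP X (pd (k+1) (Dop f)) (fun x q => Dop (pd (k+1) f) x q + pd k f x q) := by
  refine (pd_Dop_aux hX hf (k+1)).trans ?_
  intro x hx q hq
  show Dop (pd (k+1) f) x q
      + ∑ j ∈ Finset.range (n+1), (if k+1 = j+1 then pd j f x q else 0) = _
  have hcong : ∀ j ∈ Finset.range (n+1),
      (if k+1 = j+1 then pd j f x q else 0) = (if j = k then pd j f x q else 0) := by
    intro j _
    by_cases h : j = k
    · subst h; simp
    · rw [if_neg (by omega), if_neg h]
  rw [Finset.sum_congr rfl hcong, Finset.sum_ite_eq' (Finset.range (n+1))]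
  by_cases hk : k ∈ Finset.range (n+1)
  · rw [if_pos hk]
  · rw [if_neg hk]
    have h0 : pd k f x q = 0 := hf.pd_zero (by simp at hk; omega) x hx q hq
    show _ = Dop (pd (k+1) f) x q + pd k f x q
    rw [h0]

end Stmt10Aux


namespace Stmt10Aux
open Set Function Filter

variable {X : Set ℝ} {n : ℕ} {F : Vec n → ℝ} {f g u : QFun}

/-- Identity (C): `Λ(q₀ · f) = f - L f` on the region. -/
lemma Lam_chi0 (hX : IsOpen X) (hf : Nice X n f) :
    EqP X (Lam (fun x q => q 0 * f x q)) (fun x q => f x q - Lop f x q) := by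
  have hchi0f : Nice X n (fun x q => q 0 * f x q) :=
    Nice.mul ((nice_chi 0).mono (Nat.zero_le n)) hf
  refine (Lam_eval hX hchi0f).trans ?_
  intro x hx q hq
  show ∑ k ∈ Finset.range (n+1),
      (-1:ℝ)^k * Dop^[k] (pd k (fun x q => q 0 * f x q)) x q = _
  have hterm : ∀ k ∈ Finset.range (n+1),
      (-1:ℝ)^k * Dop^[k] (pd k (fun x q => q 0 * f x q)) x q
        = (-1:ℝ)^k * Dop^[k] (fun x q => if k = 0 then f x q else 0) x q
          + (-1:ℝ)^k * Dop^[k] (fun x q => q 0 * pd k f x q) x q := by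
    intro k _
    have hA : Nice X n (fun x q => if k = 0 then f x q else 0) := by
      by_cases h : k = 0
      · simp only [h, if_true]; exact hf.congr (EqP.refl f)
      · simp only [h, if_false]; exact nice_const 0
    have hB : Nice X n (fun x q => q 0 * pd k f x q) :=
      Nice.mul ((nice_chi 0).mono (Nat.zero_le n)) (hf.pd hX k)
    have h1 := (pd_chi_mul hX hf 0 k).iterDop hX k
    rw [h1 x hx q hq]
    rw [iterDop_add hX (f := fun x q => if k = 0 then f x q else 0)
      (g := fun x q => q 0 * pd k f x q) hA hB k x hx q hq]
    ring
  rw [Finset.sum_congr rfl hterm, Finset.sum_add_distrib]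
  have hsum1 : ∑ k ∈ Finset.range (n+1),
      (-1:ℝ)^k * Dop^[k] (fun x q => if k = 0 then f x q else 0) x q = f x q := by
    rw [Finset.sum_range_succ' (fun k => (-1:ℝ)^k * Dop^[k]
      (fun x q => if k = 0 then f x q else 0) x q) n]
    have hz : ∀ k ∈ Finset.range n,
        (-1:ℝ)^(k+1) * Dop^[k+1] (fun x q => if k+1 = 0 then f x q else 0) x q = 0 := by
      intro k _
      have : (fun x q => if k+1 = 0 then f x q else (0:ℝ)) = fun _ _ => (0:ℝ) := by
        funext x q; simp
      rw [this, iterDop_zero]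
      ring
    rw [Finset.sum_congr rfl hz, Finset.sum_const_zero, zero_add]
    simp
  have hsum2 : ∑ k ∈ Finset.range (n+1),
      (-1:ℝ)^k * Dop^[k] (fun x q => q 0 * pd k f x q) x q = - Lop f x q := by
    rw [Lop_eval hX hf x hx q hq]
    show _ = -∑ k ∈ Finset.range (n+1),
      (-1:ℝ)^(k+1) * Dop^[k] (fun y p => p 0 * pd k f y p) x q
    rw [← Finset.sum_neg_distrib]
    refine Finset.sum_congr rfl (fun k _ => ?_)
    show (-1:ℝ)^k * Dop^[k] (fun x q => q 0 * pd k f x q) x q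
      = -((-1:ℝ)^(k+1) * Dop^[k] (fun x q => q 0 * pd k f x q) x q)
    ring
  rw [hsum1, hsum2]
  show f x q + - Lop f x q = _
  ring

/-- Identity (A): `Λ (D u) = 0` on the region. -/
lemma Lam_Dop (hX : IsOpen X) (hu : Nice X n u) :
    EqP X (Lam (Dop u)) (fun _ _ => 0) := by
  refine (Lam_eval hX (hu.Dop hX)).trans ?_
  intro x hx q hq
  show ∑ k ∈ Finset.range (n+1+1), (-1:ℝ)^k * Dop^[k] (pd k (Dop u)) x q = 0
  set a : ℕ → ℝ := fun k => (-1:ℝ)^k * Dop^[k+1] (pd k u) x q with ha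
  have hterm0 : (-1:ℝ)^0 * Dop^[0] (pd 0 (Dop u)) x q = a 0 := by
    have e1 : Dop^[0] (pd 0 (Dop u)) = pd 0 (Dop u) := rfl
    have e2 : Dop^[0+1] (pd 0 u) = Dop (pd 0 u) := rfl
    rw [e1, ha]
    show (-1:ℝ)^0 * pd 0 (Dop u) x q = (-1:ℝ)^0 * Dop^[0+1] (pd 0 u) x q
    rw [e2, pd_Dop_zero hX hu x hx q hq]
  have htermS : ∀ k ∈ Finset.range (n+1),
      (-1:ℝ)^(k+1) * Dop^[k+1] (pd (k+1) (Dop u)) x q = a (k+1) - a k := by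
    intro k _
    have h1 := (pd_Dop_succ hX hu k).iterDop hX (k+1)
    rw [h1 x hx q hq]
    have hA : Nice X (n+1) (Dop (pd (k+1) u)) := (hu.pd hX (k+1)).Dop hX
    have hB : Nice X (n+1) (pd k u) := (hu.pd hX k).mono (by omega)
    rw [iterDop_add hX (f := Dop (pd (k+1) u)) (g := pd k u) hA hB (k+1) x hx q hq]
    have e3 : Dop^[k+1] (Dop (pd (k+1) u)) = Dop^[k+1+1] (pd (k+1) u) :=
      (Function.iterate_succ_apply Dop (k+1) (pd (k+1) u)).symm
    rw [e3, ha]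
    show (-1:ℝ)^(k+1) * (Dop^[k+1+1] (pd (k+1) u) x q + Dop^[k+1] (pd k u) x q)
      = (-1:ℝ)^(k+1) * Dop^[k+1+1] (pd (k+1) u) x q - (-1:ℝ)^k * Dop^[k+1] (pd k u) x q
    ring
  rw [Finset.sum_range_succ' (fun k => (-1:ℝ)^k * Dop^[k] (pd k (Dop u)) x q) (n+1)]
  rw [Finset.sum_congr rfl htermS, hterm0, Finset.sum_range_sub a (n+1)]
  have hz : a (n+1) = 0 := by
    rw [ha]
    have h0 : EqP X (pd (n+1) u) (fun _ _ => 0) := hu.pd_zero (by omega)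
    show (-1:ℝ)^(n+1) * Dop^[n+1+1] (pd (n+1) u) x q = 0
    rw [h0.iterDop_zero_of hX (n+1+1) x hx q hq]
    ring
  rw [hz]
  ring

end Stmt10Aux


namespace Stmt10Aux
open Set Function Filter

variable {X : Set ℝ} {n : ℕ} {F : Vec n → ℝ} {f g u : QFun}

lemma Dop_finsum (hX : IsOpen X) {s : Finset ℕ} {f : ℕ → QFun}
    (hf : ∀ k ∈ s, Nice X n (f k)) :
    EqP X (Dop (fun x q => ∑ k ∈ s, f k x q))
      (fun x q => ∑ k ∈ s, Dop (f k) x q) := by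
  classical
  induction s using Finset.induction with
  | empty =>
    intro x hx q hq
    have e : (fun x q => ∑ k ∈ (∅ : Finset ℕ), f k x q) = fun _ _ => (0:ℝ) := by
      funext x q; simp
    rw [e, Dop_zero]
    simp
  | @insert a s ha ih =>
    have h1 : Nice X n (f a) := hf a (Finset.mem_insert_self a s)
    have h2 : ∀ k ∈ s, Nice X n (f k) := fun k hk => hf k (Finset.mem_insert_of_mem hk)
    have hs : Nice X n (fun x q => ∑ k ∈ s, f k x q) := nice_sum h2
    intro x hx q hq
    have e1 : (fun x q => ∑ k ∈ insert a s, f k x q)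
        = fun x q => f a x q + ∑ k ∈ s, f k x q := by
      funext x q; rw [Finset.sum_insert ha]
    rw [e1, Dop_add hX h1 hs x hx q hq]
    show Dop (f a) x q + Dop (fun x q => ∑ k ∈ s, f k x q) x q
      = ∑ k ∈ insert a s, Dop (f k) x q
    rw [Finset.sum_insert ha, (ih h2) x hx q hq]

/-- helper: a guarded sum over `range N` collapses to `range k`. -/
lemma guard_sum (N k : ℕ) (hk : k ≤ N) (g : ℕ → ℝ) :
    ∑ r ∈ Finset.range N, (if r + 1 ≤ k then g r else 0) = ∑ r ∈ Finset.range k, g r := by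
  rw [← Finset.sum_subset (Finset.range_subset_range.2 hk)
    (f := fun r => if r + 1 ≤ k then g r else 0)]
  · refine Finset.sum_congr rfl (fun r hr => ?_)
    rw [if_pos (by simpa [Nat.lt_succ_iff] using Finset.mem_range.mp hr)]
  · intro r _ hr
    rw [if_neg (by simp at hr; omega)]

/-- Identity (B): `E u = q₀ Λ u + D (C u)` on the region. -/
lemma Eop_eq (hX : IsOpen X) (hu : Nice X n u) :
    EqP X (Eop u) (fun x q => q 0 * Lam u x q + Dop (Cop u) x q) := by
  classical
  -- the truncated `B_r`
  set Bfun : ℕ → QFun := fun r => fun x q => ∑ k ∈ Finset.range (n+1),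
    if r+1 ≤ k then (-1:ℝ)^(k-1-r) * Dop^[k-1-r] (pd k u) x q else 0 with hBfun
  have hBnice : ∀ r, Nice X (2*n) (Bfun r) := by
    intro r
    exact (hu.Bop hX r).congr (Bop_nat_eval hX hu r)
  -- `Dop` of `Bfun r`
  have hDB : ∀ r : ℕ, EqP X (Dop (Bfun r))
      (fun x q => ∑ k ∈ Finset.range (n+1),
        if r+1 ≤ k then (-1:ℝ)^(k-1-r) * Dop^[k-r] (pd k u) x q else 0) := by
    intro r
    have hterm : ∀ k ∈ Finset.range (n+1), Nice X (2*n)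
        (fun x q => if r+1 ≤ k then (-1:ℝ)^(k-1-r) * Dop^[k-1-r] (pd k u) x q else 0) := by
      intro k hk
      by_cases hc : r+1 ≤ k
      · have e : (fun x q => if r+1 ≤ k then (-1:ℝ)^(k-1-r) * Dop^[k-1-r] (pd k u) x q else 0)
            = fun x q => (-1:ℝ)^(k-1-r) * Dop^[k-1-r] (pd k u) x q := by
          funext x q; rw [if_pos hc]
        rw [e]
        have hk' : k ≤ n := by simpa [Nat.lt_succ_iff] using hk
        exact (((hu.pd hX k).iterDop hX (k-1-r)).mono (by omega)).smul _
      · have e : (fun x q => if r+1 ≤ k then (-1:ℝ)^(k-1-r) * Dop^[k-1-r] (pd k u) x q else 0)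
            = fun _ _ => (0:ℝ) := by
          funext x q; rw [if_neg hc]
        rw [e]; exact nice_const 0
    refine (Dop_finsum hX hterm).trans ?_
    intro x hx q hq
    show ∑ k ∈ Finset.range (n+1), Dop
        (fun x q => if r+1 ≤ k then (-1:ℝ)^(k-1-r) * Dop^[k-1-r] (pd k u) x q else 0) x q = _
    refine Finset.sum_congr rfl (fun k hk => ?_)
    by_cases hc : r+1 ≤ k
    · have e : (fun x q => if r+1 ≤ k then (-1:ℝ)^(k-1-r) * Dop^[k-1-r] (pd k u) x q else 0)
          = fun x q => (-1:ℝ)^(k-1-r) * Dop^[k-1-r] (pd k u) x q := by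
        funext x q; rw [if_pos hc]
      rw [e, if_pos hc]
      have hk' : k ≤ n := by simpa [Nat.lt_succ_iff] using hk
      rw [Dop_smul hX ((hu.pd hX k).iterDop hX (k-1-r)) _ x hx q hq]
      show (-1:ℝ)^(k-1-r) * Dop (Dop^[k-1-r] (pd k u)) x q = _
      rw [← Function.iterate_succ_apply' Dop (k-1-r) (pd k u)]
      have e2 : (k-1-r).succ = k-r := by omega
      rw [e2]
    · have e : (fun x q => if r+1 ≤ k then (-1:ℝ)^(k-1-r) * Dop^[k-1-r] (pd k u) x q else 0)
          = fun _ _ => (0:ℝ) := by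
        funext x q; rw [if_neg hc]
      rw [e, if_neg hc, Dop_zero]
  -- `Cop u` is `∑ q_r Bfun r`
  have hC : EqP X (Cop u) (fun x q => ∑ r ∈ Finset.range (n+1), q r * Bfun r x q) := by
    refine (Cop_eval hX hu).trans ?_
    intro x hx q hq
    show ∑ r ∈ Finset.range (n+1), q r * Bop (r:ℤ) u x q = _
    refine Finset.sum_congr rfl (fun r _ => ?_)
    rw [Bop_nat_eval hX hu r x hx q hq]
  -- expand `Dop (Cop u)`
  have hCterm : ∀ r ∈ Finset.range (n+1), Nice X (2*n+1) (fun x q => q r * Bfun r x q) := by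
    intro r hr
    exact Nice.mul ((nice_chi r).mono (by simp at hr; omega)) ((hBnice r).mono (by omega))
  have hDC : EqP X (Dop (Cop u))
      (fun x q => ∑ r ∈ Finset.range (n+1),
        (q (r+1) * Bfun r x q + q r * Dop (Bfun r) x q)) := by
    refine ((hC.Dop hX).trans (Dop_finsum hX hCterm)).trans ?_
    intro x hx q hq
    show ∑ r ∈ Finset.range (n+1), Dop (fun x q => q r * Bfun r x q) x q = _
    refine Finset.sum_congr rfl (fun r hr => ?_)
    have hr' : r ≤ 2*n+1 := by simp at hr; omega
    rw [Dop_chi_mul hX ((hBnice r).mono (by omega)) hr' x hx q hq]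
  -- now the pointwise computation
  intro x hx q hq
  rw [Eop_eval hu x hx q hq]
  show ∑ k ∈ Finset.range (n+1), q k * pd k u x q = _
  have key : Dop (Cop u) x q = ∑ k ∈ Finset.range (n+1),
      (q k * pd k u x q - (-1:ℝ)^k * (q 0 * Dop^[k] (pd k u) x q)) := by
    rw [hDC x hx q hq]
    show ∑ r ∈ Finset.range (n+1), (q (r+1) * Bfun r x q + q r * Dop (Bfun r) x q) = _
    have hexp : ∀ r ∈ Finset.range (n+1),
        q (r+1) * Bfun r x q + q r * Dop (Bfun r) x q
          = ∑ k ∈ Finset.range (n+1), (if r+1 ≤ k then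
              q (r+1) * ((-1:ℝ)^(k-1-r) * Dop^[k-1-r] (pd k u) x q)
              + q r * ((-1:ℝ)^(k-1-r) * Dop^[k-r] (pd k u) x q) else 0) := by
      intro r _
      rw [hDB r x hx q hq, hBfun]
      show q (r+1) * (∑ k ∈ Finset.range (n+1), if r+1 ≤ k then
          (-1:ℝ)^(k-1-r) * Dop^[k-1-r] (pd k u) x q else 0)
          + q r * (∑ k ∈ Finset.range (n+1), if r+1 ≤ k then
          (-1:ℝ)^(k-1-r) * Dop^[k-r] (pd k u) x q else 0) = _
      rw [Finset.mul_sum, Finset.mul_sum, ← Finset.sum_add_distrib]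
      refine Finset.sum_congr rfl (fun k _ => ?_)
      by_cases hc : r+1 ≤ k
      · rw [if_pos hc, if_pos hc, if_pos hc]
      · rw [if_neg hc, if_neg hc, if_neg hc]; ring
    rw [Finset.sum_congr rfl hexp, Finset.sum_comm]
    refine Finset.sum_congr rfl (fun k hk => ?_)
    have hk' : k ≤ n := by simp at hk; omega
    rw [guard_sum (n+1) k (by omega)]
    set b : ℕ → ℝ := fun r => (-1:ℝ)^(k-r) * (q r * Dop^[k-r] (pd k u) x q) with hb
    have hterm2 : ∀ r ∈ Finset.range k,
        q (r+1) * ((-1:ℝ)^(k-1-r) * Dop^[k-1-r] (pd k u) x q)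
          + q r * ((-1:ℝ)^(k-1-r) * Dop^[k-r] (pd k u) x q) = b (r+1) - b r := by
      intro r hr
      have hrk : r < k := Finset.mem_range.mp hr
      rw [hb]
      have e1 : k - (r+1) = k-1-r := by omega
      have e2 : (-1:ℝ)^(k-1-r) = -(-1:ℝ)^(k-r) := by
        have e3 : k - r = (k-1-r) + 1 := by omega
        rw [e3]; ring
      show _ = (-1:ℝ)^(k-(r+1)) * (q (r+1) * Dop^[k-(r+1)] (pd k u) x q)
          - (-1:ℝ)^(k-r) * (q r * Dop^[k-r] (pd k u) x q)
      rw [e1, e2]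
      ring
    rw [Finset.sum_congr rfl hterm2, Finset.sum_range_sub b k]
    rw [hb]
    show (-1:ℝ)^(k-k) * (q k * Dop^[k-k] (pd k u) x q)
        - (-1:ℝ)^(k-0) * (q 0 * Dop^[k-0] (pd k u) x q) = _
    have e4 : k - k = 0 := by omega
    have e5 : k - 0 = k := by omega
    rw [e4, e5]
    show (-1:ℝ)^0 * (q k * pd k u x q) - (-1:ℝ)^k * (q 0 * Dop^[k] (pd k u) x q) = _
    ring
  show _ = q 0 * Lam u x q + Dop (Cop u) x q
  rw [key, Lam_eval hX hu x hx q hq]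
  show _ = q 0 * (∑ k ∈ Finset.range (n+1), (-1:ℝ)^k * Dop^[k] (pd k u) x q) + _
  rw [Finset.mul_sum, Finset.sum_sub_distrib]
  have : ∀ k ∈ Finset.range (n+1),
      (-1:ℝ)^k * (q 0 * Dop^[k] (pd k u) x q) = q 0 * ((-1:ℝ)^k * Dop^[k] (pd k u) x q) := by
    intro k _; ring
  rw [Finset.sum_congr rfl this]
  ring

end Stmt10Aux


namespace Stmt10Aux
open Set Function Filter

variable {X : Set ℝ} {n : ℕ} {F : Vec n → ℝ} {f g u : QFun}

lemma vec_decomp (v : Fin (n+1) → ℝ) :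
    (((0:ℝ), v) : Vec n) = ∑ j : Fin (n+1), v j • ej n j := by
  refine Prod.ext ?_ ?_
  · rw [Prod.fst_sum]
    simp [ej]
  · show v = (∑ j : Fin (n+1), v j • ej n j).2
    rw [Prod.snd_sum]
    have : ∀ j : Fin (n+1), (v j • ej n j).2 = Pi.single j (v j) := by
      intro j
      show v j • (Pi.single j 1 : Fin (n+1) → ℝ) = _
      rw [← Pi.single_smul]
      simp
    rw [Finset.sum_congr rfl (fun j _ => this j)]
    exact (Finset.univ_sum_single v).symm

/-- The scaling derivative: `d/ds f(x, s·q) = (1/l)·(E f)(x, l·q)` at `s = l > 0`. -/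
lemma hasDerivAt_scaling (hX : IsOpen X) (hf : Nice X n f) {x : ℝ} {q : ℕ → ℝ}
    (hx : x ∈ X) (hq : 0 < q 0) {l : ℝ} (hl : 0 < l) :
    HasDerivAt (fun s => f x (fun j => s * q j))
      ((1/l) * Eop f x (fun j => l * q j)) l := by
  obtain ⟨F, hF, heq⟩ := hf
  set v : Fin (n+1) → ℝ := fun i => q i.1 with hv
  have hql : 0 < l * q 0 := by positivity
  have hmem : ((x, l • v) : Vec n) ∈ Om X n := by
    refine ⟨hx, ?_⟩
    show l • v 0 > 0
    exact hql
  have hpath : ∀ s : ℝ, ((x, (0 : Fin (n+1) → ℝ)) : Vec n) + s • (((0:ℝ), v) : Vec n)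
      = (x, s • v) := by
    intro s; exact Prod.ext (by simp) (by simp)
  have hd := hasDerivAt_comp_affine hX hF (c := (x, (0 : Fin (n+1) → ℝ)))
    (w := ((0:ℝ), v)) (t₀ := l) (by rw [hpath]; exact hmem)
  rw [hpath] at hd
  have hd2 : HasDerivAt (fun s => F (x, s • v)) (fderiv ℝ F (x, l • v) ((0:ℝ), v)) l := by
    refine hd.congr_of_eventuallyEq ?_
    refine Filter.Eventually.of_forall (fun s => ?_)
    exact congrArg F (hpath s).symm
  have hev : (fun s => f x (fun j => s * q j)) =ᶠ[nhds l] (fun s => F (x, s • v)) := by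
    refine Filter.eventually_of_mem (isOpen_Ioi.mem_nhds hl) (fun s hs => ?_)
    have hs0 : (0:ℝ) < s := hs
    show f x (fun j => s * q j) = F (x, s • v)
    rw [heq x hx (fun j => s * q j) (by positivity)]
    show F (x, fun i : Fin (n+1) => s * q i.1) = _
    have e : (fun i : Fin (n+1) => s * q i.1) = s • v := by
      funext i; simp [hv]
    rw [e]
  have hd3 : HasDerivAt (fun s => f x (fun j => s * q j))
      (fderiv ℝ F (x, l • v) ((0:ℝ), v)) l := hd2.congr_of_eventuallyEq hev
  -- now identify the derivative value
  have hval : fderiv ℝ F (x, l • v) ((0:ℝ), v)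
      = (1/l) * Eop f x (fun j => l * q j) := by
    have hE := Eop_eval ⟨F, hF, heq⟩ x hx (fun j => l * q j) (by simpa using hql)
    rw [hE]
    have hproj : (fun i : Fin (n+1) => (fun j => l * q j) i.1) = l • v := by
      funext i; simp [hv]
    have hpd : ∀ (j : ℕ) (hj : j < n + 1), pd j f x (fun j' => l * q j')
        = fderiv ℝ F (x, l • v) (ej n ⟨j, hj⟩) := by
      intro j hj
      have h1 := ((heq.pd j).trans (pd_lift_le hX hF hj)) x hx
        (fun j' => l * q j') (by simpa using hql)
      rw [h1]
      show fderiv ℝ F (x, fun i : Fin (n+1) => (fun j' => l * q j') i.1) _ = _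
      rw [hproj]
    -- expand the direction vector
    have hdec : fderiv ℝ F (x, l • v) (((0:ℝ), v))
        = ∑ j : Fin (n+1), v j * fderiv ℝ F (x, l • v) (ej n j) := by
      conv_lhs => rw [vec_decomp v]
      rw [map_sum]
      refine Finset.sum_congr rfl (fun j _ => ?_)
      rw [map_smul]
      rfl
    show _ = (1/l) * ∑ j ∈ Finset.range (n+1), (l * q j) * pd j f x (fun j' => l * q j')
    rw [← Fin.sum_univ_eq_sum_range (fun j => (l * q j) * pd j f x (fun j' => l * q j')) (n+1)]
    have hterm : ∀ j : Fin (n+1), (l * q j.1) * pd (j.1) f x (fun j' => l * q j')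
        = l * (v j * fderiv ℝ F (x, l • v) (ej n j)) := by
      intro j
      rw [hpd j.1 j.2]
      have : (⟨j.1, j.2⟩ : Fin (n+1)) = j := rfl
      rw [this]
      show l * q j.1 * fderiv ℝ F (x, l • v) (ej n j) = _
      have : v j = q j.1 := rfl
      rw [this]
      ring
    rw [Finset.sum_congr rfl (fun j _ => hterm j), ← Finset.mul_sum, hdec]
    have hl' : l ≠ 0 := ne_of_gt hl
    field_simp
  rw [← hval]
  exact hd3
end Stmt10Aux


namespace Stmt10Aux
open Set Function Filter

variable {X : Set ℝ} {n : ℕ} {F : Vec n → ℝ} {f g u : QFun}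

lemma one_mul_fun (q : ℕ → ℝ) : (fun j => (1:ℝ) * q j) = q := by
  funext j; rw [one_mul]

/-- If `E f = 0` on the region then `f` is `0`-homogeneous there. -/
lemma homog_of_Eop_zero (hX : IsOpen X) (hf : Nice X n f)
    (hE : EqP X (Eop f) (fun _ _ => 0)) :
    ∀ x ∈ X, ∀ q : ℕ → ℝ, 0 < q 0 → ∀ l : ℝ, 0 < l →
      f x (fun j => l * q j) = f x q := by
  intro x hx q hq l hl
  set g : ℝ → ℝ := fun s => f x (fun j => s * q j) with hg
  have hd : ∀ s ∈ Ioi (0:ℝ), HasDerivAt g 0 s := by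
    intro s hs
    have hs0 : (0:ℝ) < s := hs
    have h1 := hasDerivAt_scaling hX hf hx hq hs0
    have h2 : Eop f x (fun j => s * q j) = 0 :=
      hE x hx (fun j => s * q j) (by simpa using mul_pos hs0 hq)
    rw [h2, mul_zero] at h1
    exact h1
  have hconst : g l = g 1 := by
    refine (convex_Ioi (0:ℝ)).is_const_of_fderivWithin_eq_zero
      (f := g) (𝕜 := ℝ) ?_ ?_ hl (by norm_num)
    · intro s hs
      exact ((hd s hs).differentiableAt).differentiableWithinAt
    · intro s hs
      rw [fderivWithin_of_isOpen isOpen_Ioi hs]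
      have h0 : (ContinuousLinearMap.smulRight (1 : ℝ →L[ℝ] ℝ) (0:ℝ)) = (0 : ℝ →L[ℝ] ℝ) := by
        ext t; simp
      have : HasFDerivAt g (0 : ℝ →L[ℝ] ℝ) s := h0 ▸ (hd s hs).hasFDerivAt
      exact this.fderiv
  have : g 1 = f x q := by rw [hg]; simp only [one_mul_fun]
  rw [hg] at hconst
  simpa [this] using hconst

/-- Euler's relation: an `h`-homogeneous `f` satisfies `E f = h f` on the region. -/
lemma Eop_of_homog (hX : IsOpen X) (hf : Nice X n f) {h : ℝ} (hh : IsHomog X h f) :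
    EqP X (Eop f) (fun x q => h * f x q) := by
  intro x hx q hq
  have h1 := hasDerivAt_scaling hX hf hx hq (one_pos)
  rw [one_mul_fun] at h1
  have h1' : HasDerivAt (fun s => f x (fun j => s * q j)) (Eop f x q) 1 := by
    simpa using h1
  have h2 : HasDerivAt (fun s : ℝ => s ^ h * f x q) (h * f x q) 1 := by
    have := (Real.hasDerivAt_rpow_const (x := (1:ℝ)) (p := h)
      (Or.inl one_ne_zero)).mul_const (f x q)
    simpa using this
  have hev : (fun s => f x (fun j => s * q j)) =ᶠ[nhds (1:ℝ)] (fun s : ℝ => s ^ h * f x q) := by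
    refine Filter.eventually_of_mem (isOpen_Ioi.mem_nhds (by norm_num : (0:ℝ) < 1))
      (fun s hs => ?_)
    exact hh x hx q hq s hs
  have h2' : HasDerivAt (fun s => f x (fun j => s * q j)) (h * f x q) 1 :=
    h2.congr_of_eventuallyEq hev
  exact h1'.unique h2'

end Stmt10Aux


namespace Stmt10Aux
open Set Function Filter

variable {X : Set ℝ} {n : ℕ} {F : Vec n → ℝ} {f g u : QFun}

/-! ### More locality -/

lemma EqP.Eop (h : EqP X f g) : EqP X (_root_.Eop f) (_root_.Eop g) := by
  intro x hx q hq
  exact tsum_congr (fun j => by rw [h.pd j x hx q hq])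

lemma EqP.Lam (hX : IsOpen X) (h : EqP X f g) : EqP X (_root_.Lam f) (_root_.Lam g) := by
  intro x hx q hq
  refine tsum_congr (fun k => ?_)
  rw [((h.pd k).iterDop hX k) x hx q hq]

lemma EqP.Lop (hX : IsOpen X) (h : EqP X f g) : EqP X (_root_.Lop f) (_root_.Lop g) := by
  intro x hx q hq
  refine tsum_congr (fun k => ?_)
  have h2 : EqP X (fun y p => p 0 * _root_.pd k f y p) (fun y p => p 0 * _root_.pd k g y p) := by
    intro y hy p hp
    show p 0 * _root_.pd k f y p = p 0 * _root_.pd k g y p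
    rw [h.pd k y hy p hp]
  rw [(h2.iterDop hX k) x hx q hq]

lemma Eop_zero_fun (x : ℝ) (q : ℕ → ℝ) : Eop (fun _ _ => (0:ℝ)) x q = 0 := by
  unfold Eop
  have : ∀ j : ℕ, q j * pd j (fun _ _ => (0:ℝ)) x q = 0 := by
    intro j; rw [pd_zero_fun]; ring
  simp only [this, tsum_zero]

/-! ### Linearity of `Eop` -/

lemma Eop_add (hX : IsOpen X) (hf : Nice X n f) (hg : Nice X n g) :
    EqP X (Eop (fun x q => f x q + g x q)) (fun x q => Eop f x q + Eop g x q) := by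
  refine (Eop_eval (hf.add hg)).trans ?_
  intro x hx q hq
  show ∑ j ∈ Finset.range (n+1), q j * pd j (fun x q => f x q + g x q) x q = _
  have hc : ∀ j ∈ Finset.range (n+1), q j * pd j (fun x q => f x q + g x q) x q
      = q j * pd j f x q + q j * pd j g x q := by
    intro j _
    rw [pd_add hX hf hg j x hx q hq]
    show q j * (pd j f x q + pd j g x q) = _
    ring
  rw [Finset.sum_congr rfl hc, Finset.sum_add_distrib]
  show _ = Eop f x q + Eop g x q
  rw [Eop_eval hf x hx q hq, Eop_eval hg x hx q hq]

lemma Eop_smul (hX : IsOpen X) (hf : Nice X n f) (c : ℝ) :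
    EqP X (Eop (fun x q => c * f x q)) (fun x q => c * Eop f x q) := by
  refine (Eop_eval (hf.smul c)).trans ?_
  intro x hx q hq
  show ∑ j ∈ Finset.range (n+1), q j * pd j (fun x q => c * f x q) x q = _
  have hc : ∀ j ∈ Finset.range (n+1), q j * pd j (fun x q => c * f x q) x q
      = c * (q j * pd j f x q) := by
    intro j _
    rw [pd_smul hX hf c j x hx q hq]
    show q j * (c * pd j f x q) = _
    ring
  rw [Finset.sum_congr rfl hc, ← Finset.mul_sum]
  show _ = c * Eop f x q
  rw [Eop_eval hf x hx q hq]

lemma Eop_finsum (hX : IsOpen X) {s : Finset ℕ} {t : ℕ → QFun}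
    (ht : ∀ k ∈ s, Nice X n (t k)) :
    EqP X (Eop (fun x q => ∑ k ∈ s, t k x q))
      (fun x q => ∑ k ∈ s, Eop (t k) x q) := by
  classical
  induction s using Finset.induction with
  | empty =>
    intro x hx q hq
    have e : (fun x q => ∑ k ∈ (∅ : Finset ℕ), t k x q) = fun _ _ => (0:ℝ) := by
      funext x q; simp
    rw [e, Eop_zero_fun]
    simp
  | @insert a s ha ih =>
    have h1 : Nice X n (t a) := ht a (Finset.mem_insert_self a s)
    have h2 : ∀ k ∈ s, Nice X n (t k) := fun k hk => ht k (Finset.mem_insert_of_mem hk)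
    have hs : Nice X n (fun x q => ∑ k ∈ s, t k x q) := nice_sum h2
    intro x hx q hq
    have e1 : (fun x q => ∑ k ∈ insert a s, t k x q)
        = fun x q => t a x q + ∑ k ∈ s, t k x q := by
      funext x q; rw [Finset.sum_insert ha]
    rw [e1, Eop_add hX h1 hs x hx q hq]
    show Eop (t a) x q + Eop (fun x q => ∑ k ∈ s, t k x q) x q
      = ∑ k ∈ insert a s, Eop (t k) x q
    rw [Finset.sum_insert ha, (ih h2) x hx q hq]

/-! ### Commutation of `Eop` with the other operators -/

lemma pd_Eop (hX : IsOpen X) (hf : Nice X n f) {k : ℕ} (hk : k ≤ n) :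
    EqP X (pd k (Eop f)) (fun x q => pd k f x q + Eop (pd k f) x q) := by
  have hterm : ∀ j ∈ Finset.range (n+1), Nice X n (fun x q => q j * pd j f x q) := by
    intro j hj
    exact Nice.mul ((nice_chi j).mono (by simp at hj; omega)) (hf.pd hX j)
  refine ((Eop_eval hf).pd k).trans ?_
  refine (pd_finsum hX (f := fun j => fun x q => q j * pd j f x q) hterm k).trans ?_
  intro x hx q hq
  show ∑ j ∈ Finset.range (n+1), pd k (fun x q => q j * pd j f x q) x q = _
  have hc : ∀ j ∈ Finset.range (n+1), pd k (fun x q => q j * pd j f x q) x q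
      = (if k = j then pd j f x q else 0) + q j * pd j (pd k f) x q := by
    intro j _
    rw [pd_chi_mul hX (hf.pd hX j) j k x hx q hq]
    show (if k = j then pd j f x q else 0) + q j * pd k (pd j f) x q = _
    rw [pd_pd_symm hX hf k j x hx q hq]
  rw [Finset.sum_congr rfl hc, Finset.sum_add_distrib]
  have hc2 : ∀ j ∈ Finset.range (n+1), (if k = j then pd j f x q else 0)
      = (if j = k then pd j f x q else 0) := by
    intro j _
    by_cases h : j = k
    · subst h; simp
    · rw [if_neg (fun hh => h hh.symm), if_neg h]
  rw [Finset.sum_congr rfl hc2, Finset.sum_ite_eq' (Finset.range (n+1)),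
    if_pos (Finset.mem_range.mpr (by omega))]
  show _ = pd k f x q + Eop (pd k f) x q
  rw [Eop_eval (hf.pd hX k) x hx q hq]

lemma Eop_chi0_mul (hX : IsOpen X) (hf : Nice X n f) :
    EqP X (Eop (fun x q => q 0 * f x q))
      (fun x q => q 0 * f x q + q 0 * Eop f x q) := by
  have hchi0f : Nice X n (fun x q => q 0 * f x q) :=
    Nice.mul ((nice_chi 0).mono (Nat.zero_le n)) hf
  refine (Eop_eval hchi0f).trans ?_
  intro x hx q hq
  show ∑ j ∈ Finset.range (n+1), q j * pd j (fun x q => q 0 * f x q) x q = _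
  have hc : ∀ j ∈ Finset.range (n+1), q j * pd j (fun x q => q 0 * f x q) x q
      = (if j = 0 then q 0 * f x q else 0) + q 0 * (q j * pd j f x q) := by
    intro j _
    rw [pd_chi_mul hX hf 0 j x hx q hq]
    show q j * ((if j = 0 then f x q else 0) + q 0 * pd j f x q) = _
    by_cases h : j = 0
    · subst h; simp; ring
    · simp [h]; ring
  rw [Finset.sum_congr rfl hc, Finset.sum_add_distrib,
    Finset.sum_ite_eq' (Finset.range (n+1)), if_pos (Finset.mem_range.mpr (by omega)),
    ← Finset.mul_sum]
  show _ = q 0 * f x q + q 0 * Eop f x q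
  rw [Eop_eval hf x hx q hq]

lemma Eop_Dop (hX : IsOpen X) (hf : Nice X n f) :
    EqP X (Eop (Dop f)) (Dop (Eop f)) := by
  have hDf : Nice X (n+1) (Dop f) := hf.Dop hX
  refine (Eop_eval hDf).trans ?_
  intro x hx q hq
  show ∑ k ∈ Finset.range (n+1+1), q k * pd k (Dop f) x q = _
  -- expand each term
  have hc : ∀ k ∈ Finset.range (n+2), q k * pd k (Dop f) x q
      = q k * Dop (pd k f) x q + (if k = 0 then 0 else q k * pd (k-1) f x q) := by
    intro k _
    match k with
    | 0 =>
      rw [pd_Dop_zero hX hf x hx q hq]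
      simp
    | (j+1) =>
      rw [pd_Dop_succ hX hf j x hx q hq]
      show q (j+1) * (Dop (pd (j+1) f) x q + pd j f x q) = _
      simp only [if_neg (Nat.succ_ne_zero j)]
      have e : j + 1 - 1 = j := rfl
      rw [e]
      ring
  rw [Finset.sum_congr rfl hc, Finset.sum_add_distrib]
  -- second sum reindexes
  have h2 : ∑ k ∈ Finset.range (n+2), (if k = 0 then 0 else q k * pd (k-1) f x q)
      = ∑ j ∈ Finset.range (n+1), q (j+1) * pd j f x q := by
    rw [Finset.sum_range_succ' (fun k => if k = 0 then (0:ℝ) else q k * pd (k-1) f x q) (n+1)]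
    simp
  rw [h2]
  -- first sum: last term vanishes
  have h3 : ∑ k ∈ Finset.range (n+2), q k * Dop (pd k f) x q
      = ∑ k ∈ Finset.range (n+1), q k * Dop (pd k f) x q := by
    rw [Finset.sum_range_succ]
    have h0 : EqP X (pd (n+1) f) (fun _ _ => 0) := hf.pd_zero (by omega)
    rw [(h0.Dop hX) x hx q hq, Dop_zero]
    simp
  rw [h3]
  -- now compute `Dop (Eop f)`
  have hterm : ∀ j ∈ Finset.range (n+1), Nice X n (fun x q => q j * pd j f x q) := by
    intro j hj
    exact Nice.mul ((nice_chi j).mono (by simp at hj; omega)) (hf.pd hX j)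
  have hDE : Dop (Eop f) x q = ∑ j ∈ Finset.range (n+1),
      (q (j+1) * pd j f x q + q j * Dop (pd j f) x q) := by
    rw [((Eop_eval hf).Dop hX) x hx q hq,
      (Dop_finsum hX (f := fun j => fun x q => q j * pd j f x q) hterm) x hx q hq]
    refine Finset.sum_congr rfl (fun j hj => ?_)
    rw [Dop_chi_mul hX (hf.pd hX j) (by simp at hj; omega : j ≤ n) x hx q hq]
  rw [hDE, Finset.sum_add_distrib]
  ring

lemma Eop_iterDop (hX : IsOpen X) (hf : Nice X n f) (k : ℕ) :
    EqP X (Eop (Dop^[k] f)) (Dop^[k] (Eop f)) := by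
  induction k generalizing f n with
  | zero => exact EqP.refl _
  | succ k ih =>
    rw [Function.iterate_succ_apply]
    refine (ih (n := n+1) (hf.Dop hX)).trans ?_
    have h1 : EqP X (Eop (Dop f)) (Dop (Eop f)) := Eop_Dop hX hf
    refine ((h1.iterDop hX k).trans ?_)
    intro x hx q hq
    show Dop^[k] (Dop (Eop f)) x q = _
    rw [← Function.iterate_succ_apply Dop k (Eop f)]

/-- `L` commutes with `E` on the region. -/
lemma Lop_Eop (hX : IsOpen X) (hf : Nice X n f) :
    EqP X (Lop (Eop f)) (Eop (Lop f)) := by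
  have hEf : Nice X n (Eop f) := hf.Eop hX
  -- termwise for `Lop (Eop f)`
  have key : ∀ k, k ≤ n → EqP X (fun y p => p 0 * pd k (Eop f) y p)
      (Eop (fun y p => p 0 * pd k f y p)) := by
    intro k hk
    have h1 : EqP X (fun y p => p 0 * pd k (Eop f) y p)
        (fun y p => p 0 * pd k f y p + p 0 * Eop (pd k f) y p) := by
      intro y hy p hp
      show p 0 * pd k (Eop f) y p = _
      rw [pd_Eop hX hf hk y hy p hp]
      show p 0 * (pd k f y p + Eop (pd k f) y p) = _
      ring
    refine h1.trans ?_
    refine (EqP.symm ?_)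
    exact (Eop_chi0_mul hX (hf.pd hX k))
  -- expand both sides
  refine (Lop_eval hX hEf).trans ?_
  have hLf : EqP X (Eop (Lop f))
      (fun x q => ∑ k ∈ Finset.range (n+1),
        Eop (fun x' q' => (-1:ℝ)^(k+1) * Dop^[k] (fun y p => p 0 * pd k f y p) x' q') x q) := by
    have hterm : ∀ k ∈ Finset.range (n+1), Nice X (2*n)
        (fun x' q' => (-1:ℝ)^(k+1) * Dop^[k] (fun y p => p 0 * pd k f y p) x' q') := by
      intro k hk
      have hB : Nice X n (fun y p => p 0 * pd k f y p) :=
        Nice.mul ((nice_chi 0).mono (Nat.zero_le n)) (hf.pd hX k)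
      exact ((hB.iterDop hX k).mono (by simp at hk; omega)).smul _
    refine EqP.trans ?_ (Eop_finsum hX hterm)
    exact (Lop_eval hX hf).Eop
  refine EqP.trans ?_ hLf.symm
  intro x hx q hq
  show ∑ k ∈ Finset.range (n+1),
      (-1:ℝ)^(k+1) * Dop^[k] (fun y p => p 0 * pd k (Eop f) y p) x q = _
  refine Finset.sum_congr rfl (fun k hk => ?_)
  have hk' : k ≤ n := by simp at hk; omega
  have hB : Nice X n (fun y p => p 0 * pd k f y p) :=
    Nice.mul ((nice_chi 0).mono (Nat.zero_le n)) (hf.pd hX k)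
  rw [((key k hk').iterDop hX k) x hx q hq]
  rw [(Eop_iterDop hX hB k).symm x hx q hq]
  exact ((Eop_smul hX (hB.iterDop hX k) ((-1:ℝ)^(k+1))) x hx q hq).symm

end Stmt10Aux


namespace Stmt10Aux
open Set Function Filter

variable {X : Set ℝ} {n : ℕ} {F : Vec n → ℝ} {f g u : QFun}

lemma Lam_add (hX : IsOpen X) (hf : Nice X n f) (hg : Nice X n g) :
    EqP X (Lam (fun x q => f x q + g x q)) (fun x q => Lam f x q + Lam g x q) := by
  refine (Lam_eval hX (hf.add hg)).trans ?_
  intro x hx q hq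
  show ∑ k ∈ Finset.range (n+1),
      (-1:ℝ)^k * Dop^[k] (pd k (fun x q => f x q + g x q)) x q = _
  have hc : ∀ k ∈ Finset.range (n+1),
      (-1:ℝ)^k * Dop^[k] (pd k (fun x q => f x q + g x q)) x q
        = (-1:ℝ)^k * Dop^[k] (pd k f) x q + (-1:ℝ)^k * Dop^[k] (pd k g) x q := by
    intro k _
    rw [((pd_add hX hf hg k).iterDop hX k) x hx q hq]
    rw [iterDop_add hX (f := pd k f) (g := pd k g) (hf.pd hX k) (hg.pd hX k) k x hx q hq]
    ring
  rw [Finset.sum_congr rfl hc, Finset.sum_add_distrib]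
  show _ = Lam f x q + Lam g x q
  rw [Lam_eval hX hf x hx q hq, Lam_eval hX hg x hx q hq]

/-- If `L f = 0` on the region then `E f = 0` on the region. -/
lemma Ef_zero (hX : IsOpen X) (hf : Nice X n f)
    (hLf : EqP X (Lop f) (fun _ _ => 0)) :
    EqP X (Eop f) (fun _ _ => 0) := by
  have hEfn : Nice X n (Eop f) := hf.Eop hX
  have hchi0f : Nice X n (fun x q => q 0 * f x q) :=
    ((nice_chi 0).mono (Nat.zero_le n)).mul hf
  have hLE : EqP X (Lop (Eop f)) (fun _ _ => 0) :=
    (Lop_Eop hX hf).trans ((hLf.Eop).trans (fun x hx q hq => Eop_zero_fun x q))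
  have h1 : EqP X (Lam (fun x q => q 0 * Eop f x q)) (Eop f) := by
    refine (Lam_chi0 hX hEfn).trans ?_
    intro x hx q hq
    show Eop f x q - Lop (Eop f) x q = Eop f x q
    have h0 : Lop (Eop f) x q = 0 := hLE x hx q hq
    rw [h0]; ring
  have hDC : EqP X (fun x q => q 0 * Eop f x q)
      (Dop (Cop (fun x q => q 0 * f x q))) := by
    intro x hx q hq
    have hB := Eop_eq hX hchi0f x hx q hq
    have hE1 := Eop_chi0_mul hX hf x hx q hq
    have hLam := Lam_chi0 hX hf x hx q hq
    have hL0 : Lop f x q = 0 := hLf x hx q hq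
    beta_reduce at hB hE1 hLam
    rw [hL0] at hLam
    rw [hLam] at hB
    show q 0 * Eop f x q = _
    ring_nf at hB hE1 ⊢
    linarith [hB, hE1]
  have h2 : EqP X (Lam (fun x q => q 0 * Eop f x q)) (fun _ _ => 0) :=
    (hDC.Lam hX).trans (Lam_Dop hX (hchi0f.Cop hX))
  exact h1.symm.trans h2

/-- If `E φ = φ` on the region then `L (Λ φ) = 0` on the region. -/
lemma Lop_Lam_zero (hX : IsOpen X) {t : ℕ} {φ : QFun} (hφ : Nice X t φ)
    (hEφ : EqP X (Eop φ) φ) : EqP X (Lop (Lam φ)) (fun _ _ => 0) := by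
  have hΛ : Nice X (2*t) (_root_.Lam φ) := hφ.Lam hX
  have hC : Nice X (2*t) (_root_.Cop φ) := hφ.Cop hX
  have hA : Nice X (2*t+1) (fun x q => q 0 * Lam φ x q) :=
    ((nice_chi 0).mono (by omega)).mul (hΛ.mono (by omega))
  have hB : Nice X (2*t+1) (Dop (Cop φ)) := (hC.Dop hX).congr (EqP.refl _)
  have hφ1 : EqP X φ (fun x q => q 0 * Lam φ x q + Dop (Cop φ) x q) :=
    hEφ.symm.trans (Eop_eq hX hφ)
  have h2 : EqP X (Lam φ)
      (fun x q => Lam (fun x q => q 0 * Lam φ x q) x q + Lam (Dop (Cop φ)) x q) :=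
    (hφ1.Lam hX).trans
      (Lam_add hX (f := fun x q => q 0 * Lam φ x q) (g := Dop (Cop φ)) hA hB)
  have h3 : EqP X (Lam (fun x q => q 0 * Lam φ x q))
      (fun x q => Lam φ x q - Lop (Lam φ) x q) := Lam_chi0 hX hΛ
  have h4 : EqP X (Lam (Dop (Cop φ))) (fun _ _ => 0) := Lam_Dop hX hC
  intro x hx q hq
  have h5 := h2 x hx q hq
  beta_reduce at h5
  rw [h3 x hx q hq, h4 x hx q hq] at h5
  beta_reduce at h5
  show Lop (Lam φ) x q = 0
  linarith [h5]

end Stmt10Aux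

open Stmt10Aux in
/-- A q-function `f` satisfies `L f = 0` identically if and only
if `f = Λ φ` for some `1`-homogeneous q-function `φ`; equivalently, if and only if
`f = g - L g` for some `0`-homogeneous q-function `g`. -/

theorem stmt10 (X : Set ℝ) (hX : IsOpenInterval X) (m : ℕ) (f : QFun)
    (hf : IsQFunc X m f) :
    ((∀ x ∈ X, ∀ q : ℕ → ℝ, 0 < q 0 → Lop f x q = 0) ↔
      (∃ t : ℕ, ∃ φ : QFun, IsQFunc X t φ ∧ IsHomog X 1 φ ∧
        ∀ x ∈ X, ∀ q : ℕ → ℝ, 0 < q 0 → f x q = Lam φ x q)) ∧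
    ((∀ x ∈ X, ∀ q : ℕ → ℝ, 0 < q 0 → Lop f x q = 0) ↔
      (∃ t : ℕ, ∃ g : QFun, IsQFunc X t g ∧ IsHomog X 0 g ∧
        ∀ x ∈ X, ∀ q : ℕ → ℝ, 0 < q 0 → f x q = g x q - Lop g x q)) := by
  obtain ⟨hXo, -, -⟩ := hX
  have hnice : Nice X m f := by
    obtain ⟨F, hF, heq⟩ := hf
    exact ⟨F, hF, fun x _ q _ => heq x q⟩
  constructor
  · constructor
    · -- forward 1
      intro hL
      have hLf : EqP X (Lop f) (fun _ _ => 0) := fun x hx q hq => hL x hx q hq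
      have hE0 : EqP X (Eop f) (fun _ _ => 0) := Ef_zero hXo hnice hLf
      have hhom := homog_of_Eop_zero hXo hnice hE0
      refine ⟨m, fun x q => q 0 * f x q, ?_, ?_, ?_⟩
      · -- IsQFunc
        obtain ⟨F, hF, heq⟩ := hf
        refine ⟨fun p => p.2 0 * F p, ?_, ?_⟩
        · refine ContDiffOn.mul ?_ hF
          exact (((ContinuousLinearMap.proj (R := ℝ) (φ := fun _ : Fin (m+1) => ℝ)
            0).contDiff).comp contDiff_snd).contDiffOn
        · intro x q
          show q 0 * f x q = _
          rw [heq x q]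
          rfl
      · -- IsHomog 1
        intro x hx q hq l hl
        show l * q 0 * f x (fun j => l * q j) = l ^ (1:ℝ) * (q 0 * f x q)
        rw [hhom x hx q hq l hl, Real.rpow_one]
        ring
      · -- f = Λ φ
        intro x hx q hq
        have h := Lam_chi0 hXo hnice x hx q hq
        beta_reduce at h
        have hL0 : Lop f x q = 0 := hLf x hx q hq
        show f x q = Lam (fun x q => q 0 * f x q) x q
        rw [h, hL0, sub_zero]
    · -- backward 1
      rintro ⟨t, φ, hφq, hφhom, hfeq⟩
      have hφnice : Nice X t φ := by
        obtain ⟨F, hF, heq⟩ := hφq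
        exact ⟨F, hF, fun x _ q _ => heq x q⟩
      have hEφ : EqP X (Eop φ) φ := by
        intro x hx q hq
        exact ((Eop_of_homog hXo hφnice hφhom) x hx q hq).trans (one_mul _)
      have hLz := Lop_Lam_zero hXo hφnice hEφ
      have hfeq' : EqP X f (Lam φ) := fun x hx q hq => hfeq x hx q hq
      intro x hx q hq
      rw [(hfeq'.Lop hXo) x hx q hq]
      exact hLz x hx q hq
  · constructor
    · -- forward 2
      intro hL
      have hLf : EqP X (Lop f) (fun _ _ => 0) := fun x hx q hq => hL x hx q hq
      have hE0 : EqP X (Eop f) (fun _ _ => 0) := Ef_zero hXo hnice hLf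
      have hhom := homog_of_Eop_zero hXo hnice hE0
      refine ⟨m, f, hf, ?_, ?_⟩
      · intro x hx q hq l hl
        show f x (fun j => l * q j) = l ^ (0:ℝ) * f x q
        rw [hhom x hx q hq l hl, Real.rpow_zero, one_mul]
      · intro x hx q hq
        have hL0 : Lop f x q = 0 := hLf x hx q hq
        rw [hL0, sub_zero]
    · -- backward 2
      rintro ⟨t, g, hgq, hghom, hfeq⟩
      have hgnice : Nice X t g := by
        obtain ⟨F, hF, heq⟩ := hgq
        exact ⟨F, hF, fun x _ q _ => heq x q⟩
      have hEg : EqP X (Eop g) (fun _ _ => 0) := by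
        intro x hx q hq
        exact ((Eop_of_homog hXo hgnice hghom) x hx q hq).trans (zero_mul _)
      have hψ : Nice X t (fun x q => q 0 * g x q) :=
        ((nice_chi 0).mono (Nat.zero_le t)).mul hgnice
      have hEψ : EqP X (Eop (fun x q => q 0 * g x q)) (fun x q => q 0 * g x q) := by
        refine (Eop_chi0_mul hXo hgnice).trans ?_
        intro x hx q hq
        have h0 : Eop g x q = 0 := hEg x hx q hq
        show q 0 * g x q + q 0 * Eop g x q = q 0 * g x q
        rw [h0]
        ring
      have hLz := Lop_Lam_zero hXo hψ hEψ
      have hfΛ : EqP X f (Lam (fun x q => q 0 * g x q)) := by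
        intro x hx q hq
        have h1 := hfeq x hx q hq
        have h2 := Lam_chi0 hXo hgnice x hx q hq
        beta_reduce at h2
        rw [h1, ← h2]
      intro x hx q hq
      rw [(hfΛ.Lop hXo) x hx q hq]
      exact hLz x hx q hq

end
end

section
/- Let ψ be a q-function such that D ψ is 1-homogeneous. Then there exists a constant a ∈ ℝ such that ψ + a is 1-homogeneous. -/
noncomputable section

lemma myconst1D {s : Set ℝ} (hs : Convex ℝ s) {f : ℝ → ℝ}
    (hd : ∀ x ∈ s, DifferentiableAt ℝ f x) (hz : ∀ x ∈ s, deriv f x = 0)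
    {a b : ℝ} (ha : a ∈ s) (hb : b ∈ s) : f a = f b := by
  have := hs.norm_image_sub_le_of_norm_deriv_le hd
    (C := 0) (fun x hx => by rw [hz x hx]; simp) ha hb
  have h2 : ‖f b - f a‖ ≤ 0 := by simpa using this
  have h3 : f b - f a = 0 := by simpa using norm_le_zero_iff.mp h2
  linarith

lemma update_comp_val {m j : ℕ} (hj : j < m + 1) (q : ℕ → ℝ) (s : ℝ) :
    (fun i : Fin (m+1) => Function.update q j s i.val)
      = Function.update (fun i : Fin (m+1) => q i.val) ⟨j, hj⟩ s := by
  funext i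
  rcases eq_or_ne (i : ℕ) j with h | h
  · have : i = ⟨j, hj⟩ := Fin.ext h
    subst this
    simp
  · rw [Function.update_of_ne h, Function.update_of_ne (by simpa [Fin.ext_iff] using h)]

lemma pd_eq_deriv_update (f : QFun) (x : ℝ) (q : ℕ → ℝ) (j : ℕ) (s₀ : ℝ) :
    pd j f x (Function.update q j s₀) = deriv (fun s => f x (Function.update q j s)) s₀ := by
  simp [pd, Function.update_idem]

section rep
variable {X : Set ℝ} {m : ℕ} {f : QFun} {F : ℝ × (Fin (m + 1) → ℝ) → ℝ}

lemma rep_ext (hrep : ∀ x q, f x q = F (x, fun i => q i.val))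
    (x : ℝ) {q q' : ℕ → ℝ} (h : ∀ i < m + 1, q i = q' i) : f x q = f x q' := by
  rw [hrep, hrep]
  exact congrArg (fun w => F (x, w)) (funext fun i => h i i.isLt)

lemma pd_high (hrep : ∀ x q, f x q = F (x, fun i => q i.val))
    {j : ℕ} (hj : m + 1 ≤ j) (x : ℝ) (q : ℕ → ℝ) : pd j f x q = 0 := by
  have h : (fun t => f x (Function.update q j t)) = fun _ => f x q := by
    funext t
    exact rep_ext hrep x fun i hi => Function.update_of_ne (by omega) _ _
  simp only [pd]
  rw [h, deriv_const]

lemma Dop_fin (hrep : ∀ x q, f x q = F (x, fun i => q i.val)) (x : ℝ) (q : ℕ → ℝ) :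
    Dop f x q = pdx f x q + ∑ j ∈ Finset.range (m + 1), q (j + 1) * pd j f x q := by
  unfold Dop
  congr 1
  exact tsum_eq_sum fun j hj => by
    rw [pd_high hrep (Nat.le_of_not_lt (fun h => hj (Finset.mem_range.mpr h))), mul_zero]

lemma hS_open (hXo : IsOpen X) :
    IsOpen {p : ℝ × (Fin (m + 1) → ℝ) | p.1 ∈ X ∧ 0 < p.2 0} :=
  (hXo.preimage continuous_fst).inter
    (isOpen_lt continuous_const ((continuous_apply 0).comp continuous_snd))

lemma diffG (hXo : IsOpen X)
    (hF : ContDiffOn ℝ (⊤ : ℕ∞) F {p : ℝ × (Fin (m + 1) → ℝ) | p.1 ∈ X ∧ 0 < p.2 0})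
    {p : ℝ × (Fin (m + 1) → ℝ)} (hp : p.1 ∈ X ∧ 0 < p.2 0) :
    DifferentiableAt ℝ F p :=
  (hF.differentiableOn (by simp)).differentiableAt ((hS_open hXo).mem_nhds hp)

lemma diffx_of_rep (hXo : IsOpen X)
    (hF : ContDiffOn ℝ (⊤ : ℕ∞) F {p : ℝ × (Fin (m + 1) → ℝ) | p.1 ∈ X ∧ 0 < p.2 0})
    (hrep : ∀ x q, f x q = F (x, fun i => q i.val))
    {x : ℝ} (hx : x ∈ X) {q : ℕ → ℝ} (hq : 0 < q 0) :
    DifferentiableAt ℝ (fun t => f t q) x := by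
  have h1 : DifferentiableAt ℝ F (x, fun i : Fin (m+1) => q i.val) := diffG hXo hF ⟨hx, hq⟩
  have h2 : DifferentiableAt ℝ (fun t : ℝ => ((t, fun i : Fin (m+1) => q i.val) : ℝ × (Fin (m+1) → ℝ))) x :=
    differentiableAt_id.prodMk (differentiableAt_const _)
  have h3 : (fun t => f t q) = fun t => F (t, fun i : Fin (m+1) => q i.val) :=
    funext fun t => hrep t q
  rw [h3]
  exact h1.comp x h2

lemma diff_update (v : Fin (m + 1) → ℝ) (jf : Fin (m + 1)) :
    Differentiable ℝ (fun s : ℝ => Function.update v jf s) := by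
  apply differentiable_pi.mpr
  intro i
  rcases eq_or_ne i jf with rfl | h
  · simpa [Function.update_self] using differentiable_id
  · simpa [Function.update_of_ne h] using differentiable_const (v i)

lemma diffq_of_rep (hXo : IsOpen X)
    (hF : ContDiffOn ℝ (⊤ : ℕ∞) F {p : ℝ × (Fin (m + 1) → ℝ) | p.1 ∈ X ∧ 0 < p.2 0})
    (hrep : ∀ x q, f x q = F (x, fun i => q i.val))
    {x : ℝ} (hx : x ∈ X) (q : ℕ → ℝ) {j : ℕ} (hj : j < m + 1) (s₀ : ℝ)
    (h0 : 0 < Function.update q j s₀ 0) :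
    DifferentiableAt ℝ (fun s => f x (Function.update q j s)) s₀ := by
  have hv : (fun s => f x (Function.update q j s))
      = fun s => F (x, Function.update (fun i : Fin (m+1) => q i.val) ⟨j, hj⟩ s) := by
    funext s
    rw [hrep]
    exact congrArg (fun w => F (x, w)) (update_comp_val hj q s)
  rw [hv]
  have h00 : Function.update (fun i : Fin (m+1) => q i.val) ⟨j, hj⟩ s₀ 0 = Function.update q j s₀ 0 := by
    have := congrFun (update_comp_val hj q s₀) 0
    simpa using this.symm
  have hpt : ((x, Function.update (fun i : Fin (m+1) => q i.val) ⟨j, hj⟩ s₀) :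
      ℝ × (Fin (m+1) → ℝ)).1 ∈ X ∧ 0 < (Function.update (fun i : Fin (m+1) => q i.val) ⟨j, hj⟩ s₀) 0 := by
    exact ⟨hx, by rw [h00]; exact h0⟩
  exact (diffG hXo hF hpt).comp s₀
    ((differentiableAt_const x).prodMk ((diff_update _ _).differentiableAt))

end rep
theorem const_of_Dop_zero (X : Set ℝ) (hXo : IsOpen X) (hXc : Convex ℝ X) (m : ℕ) (g : QFun)
    (G : ℝ × (Fin (m + 1) → ℝ) → ℝ)
    (hG : ContDiffOn ℝ (⊤ : ℕ∞) G {p : ℝ × (Fin (m + 1) → ℝ) | p.1 ∈ X ∧ 0 < p.2 0})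
    (hrep : ∀ x q, g x q = G (x, fun i => q i.val))
    (hD : ∀ x ∈ X, ∀ q : ℕ → ℝ, 0 < q 0 → Dop g x q = 0) :
    ∀ x ∈ X, ∀ q : ℕ → ℝ, 0 < q 0 → ∀ x' ∈ X, ∀ q' : ℕ → ℝ, 0 < q' 0 → g x q = g x' q' := by
  -- the invariance predicate
  set P : ℕ → Prop := fun k => ∀ x ∈ X, ∀ q : ℕ → ℝ, 0 < q 0 → ∀ j, k ≤ j → ∀ t,
      g x (Function.update q j t) = g x q with hP
  have hPtop : ∀ k, m + 1 ≤ k → P k := by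
    intro k hk x hx q hq j hj t
    exact rep_ext hrep x fun i hi => Function.update_of_ne (by omega) _ _
  -- key step : invariance above k+1 kills pd k
  have hkey : ∀ k, P (k + 1) → ∀ x ∈ X, ∀ q : ℕ → ℝ, 0 < q 0 → pd k g x q = 0 := by
    intro k hPk x hx q hq
    by_cases hkm : m + 1 ≤ k
    · exact pd_high hrep hkm x q
    push_neg at hkm
    set q' : ℕ → ℝ := Function.update q (k + 1) (q (k + 1) + 1) with hq'def
    have hq'0 : q' 0 = q 0 := Function.update_of_ne (by omega) _ _
    have hpdx : pdx g x q' = pdx g x q := by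
      apply Filter.EventuallyEq.deriv_eq
      filter_upwards [hXo.mem_nhds hx] with y hy
      exact hPk y hy q hq (k + 1) le_rfl _
    have hpdj : ∀ j, j < m + 1 → pd j g x q' = pd j g x q := by
      intro j hj
      by_cases hjk : j = k + 1
      · subst hjk
        have hfun : ∀ s, g x (Function.update q (k+1) s) = g x q :=
          fun s => hPk x hx q hq (k + 1) le_rfl s
        have h1 : pd (k+1) g x q' = 0 := by
          have he : (fun s => g x (Function.update q' (k+1) s)) = fun _ => g x q := by
            funext s
            rw [hq'def, Function.update_idem]
            exact hfun s
          simp only [pd]; rw [he, deriv_const]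
        have h2 : pd (k+1) g x q = 0 := by
          have he : (fun s => g x (Function.update q (k+1) s)) = fun _ => g x q :=
            funext hfun
          simp only [pd]; rw [he, deriv_const]
        rw [h1, h2]
      · have hqj : q' j = q j := Function.update_of_ne hjk _ _
        have hcomm : ∀ s, Function.update q' j s
            = Function.update (Function.update q j s) (k+1) (q (k+1) + 1) := by
          intro s
          rw [hq'def]
          exact Function.update_comm (Ne.symm hjk) _ _ _
        have hev : (fun s => g x (Function.update q' j s))
            =ᶠ[nhds (q j)] fun s => g x (Function.update q j s) := by
          by_cases hj0 : j = 0
          · subst hj0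
            filter_upwards [isOpen_Ioi.mem_nhds (show q 0 ∈ Set.Ioi (0:ℝ) from hq)] with s hs
            rw [hcomm s]
            exact hPk x hx (Function.update q 0 s)
              (by simpa [Function.update_self] using hs) (k+1) le_rfl _
          · apply Filter.Eventually.of_forall
            intro s
            show g x (Function.update q' j s) = g x (Function.update q j s)
            rw [hcomm s]
            exact hPk x hx (Function.update q j s)
              (by rw [Function.update_of_ne (Ne.symm hj0)]; exact hq) (k+1) le_rfl _
        simp only [pd]
        rw [hqj]
        exact hev.deriv_eq
    have e1 := hD x hx q hq
    have e2 := hD x hx q' (by rw [hq'0]; exact hq)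
    rw [Dop_fin hrep] at e1 e2
    rw [hpdx] at e2
    have hsum : ∑ j ∈ Finset.range (m+1), q' (j+1) * pd j g x q'
        = ∑ j ∈ Finset.range (m+1), q' (j+1) * pd j g x q :=
      Finset.sum_congr rfl fun j hj => by rw [hpdj j (Finset.mem_range.mp hj)]
    rw [hsum] at e2
    have hdiff : ∑ j ∈ Finset.range (m+1), q' (j+1) * pd j g x q
        - ∑ j ∈ Finset.range (m+1), q (j+1) * pd j g x q = pd k g x q := by
      rw [← Finset.sum_sub_distrib]
      have hterm : ∀ j ∈ Finset.range (m+1),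
          q' (j+1) * pd j g x q - q (j+1) * pd j g x q
            = if j = k then pd k g x q else 0 := by
        intro j hj
        by_cases hjk : j = k
        · subst hjk
          have : q' (j+1) = q (j+1) + 1 := by rw [hq'def]; exact Function.update_self _ _ _
          rw [this, if_pos rfl]; ring
        · have : q' (j+1) = q (j+1) := Function.update_of_ne (by omega) _ _
          rw [this, if_neg hjk, sub_self]
      rw [Finset.sum_congr rfl hterm, Finset.sum_ite_eq' (Finset.range (m+1)) k]
      rw [if_pos (Finset.mem_range.mpr (by omega))]
    linarith
  -- differentiability of slices of g
  have hdgq : ∀ x ∈ X, ∀ (q : ℕ → ℝ) (j : ℕ) (s₀ : ℝ), 0 < Function.update q j s₀ 0 →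
      DifferentiableAt ℝ (fun s => g x (Function.update q j s)) s₀ := by
    intro x hx q j s₀ h0
    by_cases hj : j < m + 1
    · exact diffq_of_rep hXo hG hrep hx q hj s₀ h0
    · have he : (fun s => g x (Function.update q j s)) = fun _ => g x q := by
        funext s
        exact rep_ext hrep x fun i hi => Function.update_of_ne (by omega) _ _
      rw [he]; exact differentiableAt_const _
  -- descent : P (k+1) → P k for k ≥ 1
  have hstep : ∀ k, 1 ≤ k → P (k + 1) → P k := by
    intro k hk1 hPk x hx q hq j hj t
    rcases eq_or_lt_of_le hj with rfl | hlt
    · -- j = k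
      have hder : ∀ s, deriv (fun u => g x (Function.update q k u)) s = 0 := by
        intro s
        have h0 : 0 < Function.update q k s 0 := by
          rw [Function.update_of_ne (by omega)]; exact hq
        have := hkey k hPk x hx (Function.update q k s) h0
        rwa [pd_eq_deriv_update] at this
      have hdiff : Differentiable ℝ (fun u => g x (Function.update q k u)) := by
        intro s
        exact hdgq x hx q k s (by rw [Function.update_of_ne (by omega)]; exact hq)
      have := is_const_of_deriv_eq_zero hdiff hder t (q k)
      rw [this, Function.update_eq_self]
    · exact hPk x hx q hq j hlt t
  -- get P 1
  have hP1 : P 1 := by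
    have hkeyd : ∀ d, d ≤ m → P (m + 1 - d) := by
      intro d
      induction d with
      | zero => intro _; exact hPtop (m + 1) le_rfl
      | succ n ih =>
        intro hn
        have h1 : m + 1 - n = (m + 1 - (n + 1)) + 1 := by omega
        have h2 : 1 ≤ m + 1 - (n + 1) := by omega
        exact hstep _ h2 (h1 ▸ ih (by omega))
    have := hkeyd m le_rfl
    have h1 : m + 1 - m = 1 := by omega
    rwa [h1] at this
  -- all partials vanish
  have hpdall : ∀ (j : ℕ), ∀ x ∈ X, ∀ q : ℕ → ℝ, 0 < q 0 → pd j g x q = 0 := by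
    intro j x hx q hq
    rcases Nat.eq_zero_or_pos j with rfl | hj
    · exact hkey 0 hP1 x hx q hq
    · have he : (fun s => g x (Function.update q j s)) = fun _ => g x q :=
        funext fun s => hP1 x hx q hq j hj s
      simp only [pd]; rw [he, deriv_const]
  have hpdxall : ∀ x ∈ X, ∀ q : ℕ → ℝ, 0 < q 0 → pdx g x q = 0 := by
    intro x hx q hq
    have := hD x hx q hq
    rw [Dop_fin hrep] at this
    have hz : ∑ j ∈ Finset.range (m+1), q (j+1) * pd j g x q = 0 :=
      Finset.sum_eq_zero fun j _ => by rw [hpdall j x hx q hq, mul_zero]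
    linarith
  -- normalization
  set one : ℕ → ℝ := fun _ => 1 with hone
  set std : ℝ → ℕ → ℝ := fun c i => if i = 0 then c else 1 with hstd
  have hnorm : ∀ x ∈ X, ∀ q : ℕ → ℝ, 0 < q 0 → g x q = g x (std (q 0)) := by
    intro x hx q hq
    have hn : ∀ n : ℕ, g x q = g x (fun i => if i < n ∧ i ≠ 0 then 1 else q i) := by
      intro n
      induction n with
      | zero =>
        have : (fun i => if i < 0 ∧ i ≠ 0 then (1:ℝ) else q i) = q := funext fun i => by simp
        rw [this]
      | succ n ih =>
        rcases Nat.eq_zero_or_pos n with rfl | hpos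
        · have : (fun i => if i < 1 ∧ i ≠ 0 then (1:ℝ) else q i) = q := by
            funext i; have : ¬ (i < 1 ∧ i ≠ 0) := by omega
            simp [this]
          rw [this]
        · have hupd : (fun i => if i < n + 1 ∧ i ≠ 0 then (1:ℝ) else q i)
              = Function.update (fun i => if i < n ∧ i ≠ 0 then (1:ℝ) else q i) n 1 := by
            funext i
            rcases eq_or_ne i n with rfl | hi
            · rw [Function.update_self, if_pos ⟨Nat.lt_succ_self i, by omega⟩]
            · rw [Function.update_of_ne hi]
              have : (i < n + 1 ∧ i ≠ 0) ↔ (i < n ∧ i ≠ 0) := by omega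
              rw [if_congr this rfl rfl]
          rw [hupd]
          have h0 : 0 < (fun i => if i < n ∧ i ≠ 0 then (1:ℝ) else q i) 0 := by
            simpa using hq
          rw [hP1 x hx _ h0 n hpos 1]
          exact ih
    rw [hn (m+1)]
    apply rep_ext hrep
    intro i hi
    rcases eq_or_ne i 0 with rfl | h0
    · simp [hstd]
    · simp [hstd, h0, hi]
  have hstd_upd : ∀ c : ℝ, std c = Function.update one 0 c := by
    intro c; funext i
    rcases eq_or_ne i 0 with rfl | h
    · simp [hstd, hone]
    · simp [hstd, hone, h]
  have hq0const : ∀ x ∈ X, ∀ c : ℝ, 0 < c → g x (std c) = g x one := by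
    intro x hx c hc
    have hfa : g x (std c) = g x (std 1) := by
      rw [hstd_upd, hstd_upd]
      apply myconst1D (s := Set.Ioi (0:ℝ)) (convex_Ioi 0)
        (f := fun s => g x (Function.update one 0 s))
      · intro s hs
        exact hdgq x hx one 0 s (by simpa [Function.update_self] using hs)
      · intro s hs
        have h0 : 0 < Function.update one 0 s 0 := by
          simpa [Function.update_self] using hs
        have := hpdall 0 x hx (Function.update one 0 s) h0
        rwa [pd_eq_deriv_update] at this
      · exact hc
      · exact Set.mem_Ioi.mpr one_pos
    rw [hfa]
    have : std 1 = one := by funext i; simp [hstd, hone]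
    rw [this]
  have hxconst : ∀ x ∈ X, ∀ x' ∈ X, g x one = g x' one := by
    intro x hx x' hx'
    apply myconst1D (s := X) hXc (f := fun t => g t one)
    · intro y hy
      exact diffx_of_rep hXo hG hrep hy (by norm_num [hone])
    · intro y hy
      exact hpdxall y hy one (by norm_num [hone])
    · exact hx
    · exact hx'
  intro x hx q hq x' hx' q' hq'
  calc g x q = g x (std (q 0)) := hnorm x hx q hq
    _ = g x one := hq0const x hx (q 0) hq
    _ = g x' one := hxconst x hx x' hx'
    _ = g x' (std (q' 0)) := (hq0const x' hx' (q' 0) hq').symm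
    _ = g x' q' := (hnorm x' hx' q' hq').symm
/-- Let `ψ` be a q-function such that `D ψ` is `1`-homogeneous.
Then there is a constant `a ∈ ℝ` such that `ψ + a` is `1`-homogeneous. -/
theorem stmt13 (X : Set ℝ) (hX : IsOpenInterval X) (m : ℕ) (ψ : QFun)
    (hψ : IsQFunc X m ψ) (hhom : IsHomog X 1 (Dop ψ)) :
    ∃ a : ℝ, IsHomog X 1 (fun x q => ψ x q + a) := by
  obtain ⟨F, hF, hrepF⟩ := hψ
  obtain ⟨hXo, hXoc, x₀, hx₀⟩ := hX
  have hXc : Convex ℝ X := convex_iff_ordConnected.mpr hXoc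
  set one : ℕ → ℝ := fun _ => 1 with hone
  set g : ℝ → QFun := fun l x q => ψ x (fun i => l * q i) - l * ψ x q with hg
  set Gl : ℝ → (ℝ × (Fin (m + 1) → ℝ) → ℝ) :=
    fun l p => F (p.1, fun i => l * p.2 i) - l * F p with hGldef
  have hrepg : ∀ l x q, g l x q = Gl l (x, fun i : Fin (m+1) => q i.val) := by
    intro l x q
    show ψ x (fun i => l * q i) - l * ψ x q = _
    rw [hrepF, hrepF]
  have hGl : ∀ l : ℝ, 0 < l →
      ContDiffOn ℝ (⊤ : ℕ∞) (Gl l) {p : ℝ × (Fin (m + 1) → ℝ) | p.1 ∈ X ∧ 0 < p.2 0} := by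
    intro l hl
    apply ContDiffOn.sub
    · have hmaps : Set.MapsTo (fun p : ℝ × (Fin (m+1) → ℝ) =>
          ((p.1, fun i => l * p.2 i) : ℝ × (Fin (m+1) → ℝ)))
          {p : ℝ × (Fin (m + 1) → ℝ) | p.1 ∈ X ∧ 0 < p.2 0}
          {p : ℝ × (Fin (m + 1) → ℝ) | p.1 ∈ X ∧ 0 < p.2 0} :=
        fun p hp => ⟨hp.1, mul_pos hl hp.2⟩
      have hcd : ContDiff ℝ (⊤ : ℕ∞) (fun p : ℝ × (Fin (m+1) → ℝ) =>
          ((p.1, fun i => l * p.2 i) : ℝ × (Fin (m+1) → ℝ))) :=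
        contDiff_fst.prodMk (contDiff_pi.mpr fun i =>
          contDiff_const.mul ((contDiff_pi.mp contDiff_snd) i))
      exact hF.comp hcd.contDiffOn hmaps
    · exact contDiffOn_const.mul hF
  -- D (g l) = 0
  have hDg : ∀ l : ℝ, 0 < l → ∀ x ∈ X, ∀ q : ℕ → ℝ, 0 < q 0 → Dop (g l) x q = 0 := by
    intro l hl x hx q hq
    have hlq0 : 0 < (fun i => l * q i) 0 := mul_pos hl hq
    have d1 : DifferentiableAt ℝ (fun t => ψ t (fun i => l * q i)) x :=
      diffx_of_rep hXo hF hrepF hx hlq0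
    have d2 : DifferentiableAt ℝ (fun t => ψ t q) x := diffx_of_rep hXo hF hrepF hx hq
    have hpdxg : pdx (g l) x q = pdx ψ x (fun i => l * q i) - l * pdx ψ x q := by
      show deriv (fun t => ψ t (fun i => l * q i) - l * ψ t q) x = _
      rw [deriv_fun_sub d1 (d2.const_mul l), deriv_const_mul l d2]
      rfl
    have hpdg : ∀ j, j < m + 1 →
        pd j (g l) x q = l * pd j ψ x (fun i => l * q i) - l * pd j ψ x q := by
      intro j hj
      have hinner : ∀ s : ℝ, (fun i => l * Function.update q j s i)
          = Function.update (fun i => l * q i) j (l * s) := by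
        intro s; funext i
        rcases eq_or_ne i j with rfl | h
        · rw [Function.update_self, Function.update_self]
        · rw [Function.update_of_ne h, Function.update_of_ne h]
      have hslice : (fun s => g l x (Function.update q j s))
          = fun s => ψ x (Function.update (fun i => l * q i) j (l * s))
              - l * ψ x (Function.update q j s) := by
        funext s
        show ψ x (fun i => l * Function.update q j s i) - l * ψ x (Function.update q j s) = _
        rw [hinner s]
      have hd_h : DifferentiableAt ℝ
          (fun u => ψ x (Function.update (fun i => l * q i) j u)) (l * q j) := by
        have he : l * q j = (fun i => l * q i) j := rfl
        rw [he]
        apply diffq_of_rep hXo hF hrepF hx (fun i => l * q i) hj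
        rw [Function.update_eq_self]; exact hlq0
      have h1 : HasDerivAt (fun s : ℝ =>
            ψ x (Function.update (fun i => l * q i) j (l * s)))
          (deriv (fun u => ψ x (Function.update (fun i => l * q i) j u)) (l * q j) * l)
          (q j) := by
        exact HasDerivAt.comp (q j) hd_h.hasDerivAt
          (by simpa using (hasDerivAt_id (q j)).const_mul l)
      have hd_b : DifferentiableAt ℝ (fun s => ψ x (Function.update q j s)) (q j) := by
        apply diffq_of_rep hXo hF hrepF hx q hj
        rw [Function.update_eq_self]; exact hq
      have h2 : HasDerivAt (fun s => l * ψ x (Function.update q j s))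
          (l * deriv (fun s => ψ x (Function.update q j s)) (q j)) (q j) :=
        hd_b.hasDerivAt.const_mul l
      have h3 := (h1.fun_sub h2).deriv
      simp only [pd]
      rw [hslice, h3]
      show _ = l * deriv (fun u => ψ x (Function.update (fun i => l * q i) j u))
          ((fun i => l * q i) j) - l * deriv (fun s => ψ x (Function.update q j s)) (q j)
      ring
    have hDsplit : Dop (g l) x q = Dop ψ x (fun i => l * q i) - l * Dop ψ x q := by
      rw [Dop_fin (hrepg l) x q, Dop_fin hrepF x (fun i => l * q i), Dop_fin hrepF x q, hpdxg]
      rw [Finset.sum_congr rfl (fun j hj => by rw [hpdg j (Finset.mem_range.mp hj)])]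
      have hsplit : ∑ j ∈ Finset.range (m+1),
            q (j+1) * (l * pd j ψ x (fun i => l * q i) - l * pd j ψ x q)
          = ∑ j ∈ Finset.range (m+1), (fun i => l * q i) (j+1) * pd j ψ x (fun i => l * q i)
            - l * ∑ j ∈ Finset.range (m+1), q (j+1) * pd j ψ x q := by
        rw [Finset.mul_sum, ← Finset.sum_sub_distrib]
        refine Finset.sum_congr rfl fun j _ => ?_
        show q (j+1) * (l * pd j ψ x (fun i => l * q i) - l * pd j ψ x q)
          = l * q (j+1) * pd j ψ x (fun i => l * q i) - l * (q (j+1) * pd j ψ x q)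
        ring
      rw [hsplit]
      ring
    have e0 := hhom x hx q hq l hl
    rw [Real.rpow_one] at e0
    rw [hDsplit, e0]
    ring
  set c : ℝ → ℝ := fun l => g l x₀ one with hc_def
  have hgconst : ∀ l : ℝ, 0 < l → ∀ x ∈ X, ∀ q : ℕ → ℝ, 0 < q 0 → g l x q = c l := by
    intro l hl x hx q hq
    exact const_of_Dop_zero X hXo hXc m (g l) (Gl l) (hGl l hl) (hrepg l)
      (hDg l hl) x hx q hq x₀ hx₀ one (by norm_num [hone])
  have hc : ∀ l μ : ℝ, 0 < l → 0 < μ → c (l * μ) = l * c μ + c l := by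
    intro l μ hl hμ
    have h1 : g l x₀ (fun i => μ * one i) = c l :=
      hgconst l hl x₀ hx₀ _ (by norm_num [hone, hμ])
    have e1 : ψ x₀ (fun i => l * (μ * one i)) - l * ψ x₀ (fun i => μ * one i) = c l := h1
    have e2 : ψ x₀ (fun i => μ * one i) - μ * ψ x₀ one = c μ := rfl
    have e3 : c (l * μ) = ψ x₀ (fun i => (l * μ) * one i) - (l * μ) * ψ x₀ one := rfl
    rw [show (fun i : ℕ => l * (μ * one i)) = (fun i : ℕ => (l * μ) * one i) from
      funext fun i => by ring] at e1
    rw [e3]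
    linear_combination e1 + l * e2
  have hca : ∀ l : ℝ, 0 < l → c l = (l - 1) * c 2 := by
    intro l hl
    have h1 := hc l 2 hl two_pos
    have h2 := hc 2 l two_pos hl
    rw [mul_comm l 2] at h1
    linear_combination h1 - h2
  refine ⟨c 2, ?_⟩
  intro x hx q hq l hl
  have h1 : g l x q = c l := hgconst l hl x hx q hq
  have e1 : ψ x (fun i => l * q i) - l * ψ x q = c l := h1
  have h2 := hca l hl
  show ψ x (fun j => l * q j) + c 2 = l ^ (1:ℝ) * (ψ x q + c 2)
  rw [Real.rpow_one]
  linear_combination e1 + h2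

end
end

section
/- If φ is a 1-homogeneous q-function of order t such that ∂²φ/∂q_t² is not identically zero, then the q-function s = Λ φ satisfies L s = 0 and has exact order 2t: the only term of s involving q_{2t} is (−1)^t (∂²φ/∂q_t²) q_{2t}, so ∂s/∂q_{2t} = (−1)^t ∂²φ/∂q_t² is not identically zero. Consequently, key local score functions of every positive even order exist. -/
noncomputable section

namespace S15


variable {X : Set ℝ}

/-- Equality on the domain `x ∈ X`, `q 0 > 0`. -/
def EqOnDom (X : Set ℝ) (f g : QFun) : Prop :=
  ∀ x ∈ X, ∀ q : ℕ → ℝ, 0 < q 0 → f x q = g x q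

def U (X : Set ℝ) (M : ℕ) : Set (ℝ × (Fin (M + 1) → ℝ)) := {p | p.1 ∈ X ∧ 0 < p.2 0}

def res (M : ℕ) (q : ℕ → ℝ) : Fin (M + 1) → ℝ := fun i => q i.val

lemma isOpen_U (hX : IsOpen X) (M : ℕ) : IsOpen (U X M) := by
  have h1 : IsOpen {p : ℝ × (Fin (M + 1) → ℝ) | p.1 ∈ X} := hX.preimage continuous_fst
  have h2 : IsOpen {p : ℝ × (Fin (M + 1) → ℝ) | 0 < p.2 0} :=
    isOpen_Ioi.preimage ((continuous_apply (0 : Fin (M + 1))).comp continuous_snd)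
  exact h1.inter h2

lemma mem_U {M : ℕ} {x : ℝ} {q : ℕ → ℝ} (hx : x ∈ X) (h0 : 0 < q 0) :
    ((x, res M q) : ℝ × (Fin (M + 1) → ℝ)) ∈ U X M := by
  refine ⟨hx, ?_⟩
  simpa [res] using h0

lemma res_update {M : ℕ} (q : ℕ → ℝ) (i : Fin (M + 1)) (t : ℝ) :
    res M (Function.update q i.val t) = Function.update (res M q) i t := by
  funext k
  simp only [res, Function.update_apply]
  by_cases h : k = i
  · simp [h]
  · have : (k : ℕ) ≠ (i : ℕ) := fun hh => h (Fin.ext hh)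
    simp [h, this]

lemma res_update_gt {M : ℕ} (q : ℕ → ℝ) {j : ℕ} (hj : M < j) (t : ℝ) :
    res M (Function.update q j t) = res M q := by
  funext k
  have : (k : ℕ) ≠ j := by omega
  simp [res, Function.update_apply, this]

/-- Slice of the representative in coordinate direction `i`. -/
def pdF {M : ℕ} (F : ℝ × (Fin (M + 1) → ℝ) → ℝ) (i : Fin (M + 1)) :
    ℝ × (Fin (M + 1) → ℝ) → ℝ :=
  fun p => deriv (fun t => F (p.1, Function.update p.2 i t)) (p.2 i)

/-- Slice of the representative in the `x` direction. -/
def pdxF {M : ℕ} (F : ℝ × (Fin (M + 1) → ℝ) → ℝ) : ℝ × (Fin (M + 1) → ℝ) → ℝ :=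
  fun p => deriv (fun t => F (t, p.2)) p.1

lemma pd_rep {M : ℕ} {f : QFun} {F : ℝ × (Fin (M + 1) → ℝ) → ℝ}
    (hfF : ∀ x q, f x q = F (x, res M q)) (i : Fin (M + 1)) (x : ℝ) (q : ℕ → ℝ) :
    pd i.val f x q = pdF F i (x, res M q) := by
  have hs : (fun t => f x (Function.update q i.val t)) =
      fun t => F (x, Function.update (res M q) i t) := by
    funext t; rw [hfF, res_update]
  show deriv _ _ = deriv _ _
  rw [hs]
  rfl

lemma pdx_rep {M : ℕ} {f : QFun} {F : ℝ × (Fin (M + 1) → ℝ) → ℝ}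
    (hfF : ∀ x q, f x q = F (x, res M q)) (x : ℝ) (q : ℕ → ℝ) :
    pdx f x q = pdxF F (x, res M q) := by
  show deriv _ _ = deriv _ _
  congr 1
  funext t; exact hfF t q

lemma pd_zero_of_gt {M : ℕ} {f : QFun} {F : ℝ × (Fin (M + 1) → ℝ) → ℝ}
    (hfF : ∀ x q, f x q = F (x, res M q)) {j : ℕ} (hj : M < j) (x : ℝ) (q : ℕ → ℝ) :
    pd j f x q = 0 := by
  have hs : (fun t => f x (Function.update q j t)) = fun _ => F (x, res M q) := by
    funext t; rw [hfF, res_update_gt q hj]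
  show deriv _ _ = 0
  rw [hs, deriv_const]

lemma pd_zero_of_gt' {M : ℕ} {f : QFun} (hf : IsQFunc X M f) {j : ℕ} (hj : M < j)
    (x : ℝ) (q : ℕ → ℝ) : pd j f x q = 0 := by
  obtain ⟨F, _, hfF⟩ := hf
  exact pd_zero_of_gt hfF hj x q

lemma hasDerivAt_slice {M : ℕ} {F : ℝ × (Fin (M + 1) → ℝ) → ℝ}
    (hF : ContDiffOn ℝ (⊤ : ℕ∞) F (U X M)) (hX : IsOpen X) {p : ℝ × (Fin (M + 1) → ℝ)}
    (hp : p ∈ U X M) (i : Fin (M + 1)) :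
    HasDerivAt (fun t => F (p.1, Function.update p.2 i t))
      (fderiv ℝ F p ((0 : ℝ), Pi.single i 1)) (p.2 i) := by
  have hd : DifferentiableAt ℝ F p :=
    (hF.contDiffAt ((isOpen_U hX M).mem_nhds hp)).differentiableAt (by simp)
  have hc : HasDerivAt (fun t => ((p.1, Function.update p.2 i t) : ℝ × (Fin (M + 1) → ℝ)))
      (((0 : ℝ), Pi.single i (1 : ℝ))) (p.2 i) :=
    (hasDerivAt_const _ p.1).prodMk (hasDerivAt_update p.2 i (p.2 i))
  have hd' : HasFDerivAt F (fderiv ℝ F p) (p.1, Function.update p.2 i (p.2 i)) := by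
    rw [Function.update_eq_self]; exact hd.hasFDerivAt
  have h := hd'.comp_hasDerivAt (p.2 i) hc
  exact h

lemma hasDerivAt_slicex {M : ℕ} {F : ℝ × (Fin (M + 1) → ℝ) → ℝ}
    (hF : ContDiffOn ℝ (⊤ : ℕ∞) F (U X M)) (hX : IsOpen X) {p : ℝ × (Fin (M + 1) → ℝ)}
    (hp : p ∈ U X M) :
    HasDerivAt (fun t => F (t, p.2)) (fderiv ℝ F p ((1 : ℝ), 0)) p.1 := by
  have hd : DifferentiableAt ℝ F p :=
    (hF.contDiffAt ((isOpen_U hX M).mem_nhds hp)).differentiableAt (by simp)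
  have hc : HasDerivAt (fun t : ℝ => ((t, p.2) : ℝ × (Fin (M + 1) → ℝ)))
      (((1 : ℝ), 0)) p.1 := (hasDerivAt_id p.1).prodMk (hasDerivAt_const _ p.2)
  have h := hd.hasFDerivAt.comp_hasDerivAt p.1 hc
  exact h

lemma pdF_eq_fderiv {M : ℕ} {F : ℝ × (Fin (M + 1) → ℝ) → ℝ}
    (hF : ContDiffOn ℝ (⊤ : ℕ∞) F (U X M)) (hX : IsOpen X) {p : ℝ × (Fin (M + 1) → ℝ)}
    (hp : p ∈ U X M) (i : Fin (M + 1)) :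
    pdF F i p = fderiv ℝ F p ((0 : ℝ), Pi.single i 1) :=
  (hasDerivAt_slice hF hX hp i).deriv

lemma pdxF_eq_fderiv {M : ℕ} {F : ℝ × (Fin (M + 1) → ℝ) → ℝ}
    (hF : ContDiffOn ℝ (⊤ : ℕ∞) F (U X M)) (hX : IsOpen X) {p : ℝ × (Fin (M + 1) → ℝ)}
    (hp : p ∈ U X M) :
    pdxF F p = fderiv ℝ F p ((1 : ℝ), 0) :=
  (hasDerivAt_slicex hF hX hp).deriv

lemma contDiffOn_fderiv_apply {M : ℕ} {F : ℝ × (Fin (M + 1) → ℝ) → ℝ}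
    (hF : ContDiffOn ℝ (⊤ : ℕ∞) F (U X M)) (hX : IsOpen X) (v : ℝ × (Fin (M + 1) → ℝ)) :
    ContDiffOn ℝ (⊤ : ℕ∞) (fun p => fderiv ℝ F p v) (U X M) := by
  have h1 : ContDiffOn ℝ (⊤ : ℕ∞) (fderiv ℝ F) (U X M) :=
    hF.fderiv_of_isOpen (isOpen_U hX M) (by simp)
  exact (ContinuousLinearMap.apply ℝ ℝ v).contDiff.comp_contDiffOn h1

lemma contDiffOn_pdF {M : ℕ} {F : ℝ × (Fin (M + 1) → ℝ) → ℝ}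
    (hF : ContDiffOn ℝ (⊤ : ℕ∞) F (U X M)) (hX : IsOpen X) (i : Fin (M + 1)) :
    ContDiffOn ℝ (⊤ : ℕ∞) (pdF F i) (U X M) :=
  (contDiffOn_fderiv_apply hF hX _).congr fun p hp => pdF_eq_fderiv hF hX hp i

lemma contDiffOn_pdxF {M : ℕ} {F : ℝ × (Fin (M + 1) → ℝ) → ℝ}
    (hF : ContDiffOn ℝ (⊤ : ℕ∞) F (U X M)) (hX : IsOpen X) :
    ContDiffOn ℝ (⊤ : ℕ∞) (pdxF F) (U X M) :=
  (contDiffOn_fderiv_apply hF hX _).congr fun p hp => pdxF_eq_fderiv hF hX hp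

theorem _root_.IsQFunc.pd (hX : IsOpen X) {M : ℕ} {f : QFun} (hf : IsQFunc X M f) (j : ℕ) :
    IsQFunc X M (pd j f) := by
  obtain ⟨F, hF, hfF⟩ := hf
  by_cases hj : j ≤ M
  · exact ⟨pdF F ⟨j, by omega⟩, contDiffOn_pdF hF hX _,
      fun x q => pd_rep hfF ⟨j, by omega⟩ x q⟩
  · exact ⟨fun _ => 0, contDiffOn_const,
      fun x q => pd_zero_of_gt hfF (by omega) x q⟩

theorem _root_.IsQFunc.pdx (hX : IsOpen X) {M : ℕ} {f : QFun} (hf : IsQFunc X M f) :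
    IsQFunc X M (pdx f) := by
  obtain ⟨F, hF, hfF⟩ := hf
  exact ⟨pdxF F, contDiffOn_pdxF hF hX, fun x q => pdx_rep hfF x q⟩





variable {X : Set ℝ}

lemma diff_slice (hX : IsOpen X) {M : ℕ} {f : QFun} (hf : IsQFunc X M f)
    {x : ℝ} {q : ℕ → ℝ} (hx : x ∈ X) (h0 : 0 < q 0) (j : ℕ) :
    DifferentiableAt ℝ (fun t => f x (Function.update q j t)) (q j) := by
  obtain ⟨F, hF, hfF⟩ := hf
  by_cases hj : j ≤ M
  · set i : Fin (M + 1) := ⟨j, by omega⟩ with hi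
    have hs : (fun t => f x (Function.update q j t)) =
        fun t => F (x, Function.update (res M q) i t) := by
      funext t
      rw [show j = i.val from rfl, hfF]
      exact congrArg (fun v => F (x, v)) (res_update q i t)
    rw [hs]
    exact (hasDerivAt_slice hF hX (mem_U hx h0) i).differentiableAt
  · have hs : (fun t => f x (Function.update q j t)) = fun _ => F (x, res M q) := by
      funext t; rw [hfF]
      exact congrArg (fun v => F (x, v)) (res_update_gt (j := j) q (by omega) t)
    rw [hs]
    exact differentiableAt_const _

lemma diff_slicex (hX : IsOpen X) {M : ℕ} {f : QFun} (hf : IsQFunc X M f)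
    {x : ℝ} {q : ℕ → ℝ} (hx : x ∈ X) (h0 : 0 < q 0) :
    DifferentiableAt ℝ (fun t => f t q) x := by
  obtain ⟨F, hF, hfF⟩ := hf
  have hs : (fun t => f t q) = fun t => F (t, res M q) := by funext t; exact hfF t q
  rw [hs]
  exact (hasDerivAt_slicex hF hX (mem_U hx h0)).differentiableAt

lemma pd_add (hX : IsOpen X) {M N : ℕ} {f g : QFun} (hf : IsQFunc X M f)
    (hg : IsQFunc X N g) {x : ℝ} {q : ℕ → ℝ} (hx : x ∈ X) (h0 : 0 < q 0) (j : ℕ) :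
    pd j (fun y p => f y p + g y p) x q = pd j f x q + pd j g x q := by
  show deriv _ _ = _
  rw [deriv_fun_add (diff_slice hX hf hx h0 j) (diff_slice hX hg hx h0 j)]
  rfl

lemma pdx_add (hX : IsOpen X) {M N : ℕ} {f g : QFun} (hf : IsQFunc X M f)
    (hg : IsQFunc X N g) {x : ℝ} {q : ℕ → ℝ} (hx : x ∈ X) (h0 : 0 < q 0) :
    pdx (fun y p => f y p + g y p) x q = pdx f x q + pdx g x q := by
  show deriv _ _ = _
  rw [deriv_fun_add (diff_slicex hX hf hx h0) (diff_slicex hX hg hx h0)]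
  rfl

lemma pd_const_mul (c : ℝ) (f : QFun) (j : ℕ) (x : ℝ) (q : ℕ → ℝ) :
    pd j (fun y p => c * f y p) x q = c * pd j f x q := by
  show deriv _ _ = _
  rw [deriv_const_mul_field]
  rfl

lemma pdx_const_mul (c : ℝ) (f : QFun) (x : ℝ) (q : ℕ → ℝ) :
    pdx (fun y p => c * f y p) x q = c * pdx f x q := by
  show deriv _ _ = _
  rw [deriv_const_mul_field]
  rfl

lemma pd_coord_mul (hX : IsOpen X) {M : ℕ} {f : QFun} (hf : IsQFunc X M f)
    {x : ℝ} {q : ℕ → ℝ} (hx : x ∈ X) (h0 : 0 < q 0) (j r : ℕ) :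
    pd j (fun y p => p r * f y p) x q
      = (if j = r then f x q else 0) + q r * pd j f x q := by
  by_cases hjr : j = r
  · subst hjr
    have hd : HasDerivAt (fun t => t * f x (Function.update q j t))
        (1 * f x (Function.update q j (q j)) + q j * pd j f x q) (q j) :=
      (hasDerivAt_id (q j)).mul (diff_slice hX hf hx h0 j).hasDerivAt
    have : pd j (fun y p => p j * f y p) x q
        = 1 * f x (Function.update q j (q j)) + q j * pd j f x q := by
      refine HasDerivAt.deriv ?_
      have he : (fun t => (Function.update q j t) j * f x (Function.update q j t)) =
          fun t => t * f x (Function.update q j t) := by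
        funext t; rw [Function.update_self]
      show HasDerivAt (fun t => (Function.update q j t) j * f x (Function.update q j t)) _ _
      rw [he]; exact hd
    rw [this, Function.update_eq_self]
    simp
  · have he : (fun t => (Function.update q j t) r * f x (Function.update q j t)) =
        fun t => q r * f x (Function.update q j t) := by
      funext t; rw [Function.update_of_ne (fun h => hjr h.symm)]
    show deriv (fun t => (Function.update q j t) r * f x (Function.update q j t)) _ = _
    rw [he, deriv_const_mul_field]
    rw [if_neg hjr, zero_add]
    rfl

lemma pdx_coord_mul (f : QFun) (r : ℕ) (x : ℝ) (q : ℕ → ℝ) :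
    pdx (fun y p => p r * f y p) x q = q r * pdx f x q := by
  show deriv _ _ = _
  rw [deriv_const_mul_field]
  rfl





variable {X : Set ℝ}

lemma _root_.IsQFunc.congr_fun {M : ℕ} {f g : QFun} (hf : IsQFunc X M f)
    (h : ∀ x q, f x q = g x q) : IsQFunc X M g := by
  obtain ⟨F, hF, hfF⟩ := hf
  exact ⟨F, hF, fun x q => (h x q) ▸ hfF x q⟩

lemma _root_.IsQFunc.zero (M : ℕ) : IsQFunc X M (fun _ _ => (0 : ℝ)) :=
  ⟨fun _ => 0, contDiffOn_const, fun _ _ => rfl⟩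

lemma _root_.IsQFunc.add {M : ℕ} {f g : QFun} (hf : IsQFunc X M f) (hg : IsQFunc X M g) :
    IsQFunc X M (fun y p => f y p + g y p) := by
  obtain ⟨F, hF, hfF⟩ := hf
  obtain ⟨G, hG, hgG⟩ := hg
  exact ⟨fun p => F p + G p, hF.add hG, fun x q => by
    show f x q + g x q = F _ + G _; rw [hfF, hgG]⟩

lemma _root_.IsQFunc.const_mul {M : ℕ} {f : QFun} (hf : IsQFunc X M f) (c : ℝ) :
    IsQFunc X M (fun y p => c * f y p) := by
  obtain ⟨F, hF, hfF⟩ := hf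
  exact ⟨fun p => c * F p, contDiffOn_const.mul hF, fun x q => by
    show c * f x q = c * F _; rw [hfF]⟩

lemma _root_.IsQFunc.coord_mul {M : ℕ} {f : QFun} (hf : IsQFunc X M f) {r : ℕ} (hr : r ≤ M) :
    IsQFunc X M (fun y p => p r * f y p) := by
  obtain ⟨F, hF, hfF⟩ := hf
  set i : Fin (M + 1) := ⟨r, by omega⟩
  have hc : ContDiffOn ℝ (⊤ : ℕ∞) (fun p : ℝ × (Fin (M + 1) → ℝ) => p.2 i) (U X M) :=
    (((ContinuousLinearMap.proj (R := ℝ) (φ := fun _ : Fin (M + 1) => ℝ) i).comp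
      (ContinuousLinearMap.snd ℝ ℝ _)).contDiff).contDiffOn
  exact ⟨fun p => p.2 i * F p, hc.mul hF, fun x q => by
    show q r * f x q = _ * F _; rw [hfF]⟩

lemma _root_.IsQFunc.mono {M M' : ℕ} (h : M ≤ M') {f : QFun} (hf : IsQFunc X M f) :
    IsQFunc X M' f := by
  obtain ⟨F, hF, hfF⟩ := hf
  have hh : M + 1 ≤ M' + 1 := by omega
  set L : (ℝ × (Fin (M' + 1) → ℝ)) →L[ℝ] (ℝ × (Fin (M + 1) → ℝ)) :=
    (ContinuousLinearMap.fst ℝ ℝ _).prod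
      (ContinuousLinearMap.pi fun i : Fin (M + 1) =>
        (ContinuousLinearMap.proj (R := ℝ) (φ := fun _ : Fin (M' + 1) => ℝ)
          (Fin.castLE hh i)).comp (ContinuousLinearMap.snd ℝ ℝ _)) with hL
  refine ⟨F ∘ L, hF.comp (L.contDiff.contDiffOn) ?_, fun x q => ?_⟩
  · intro p hp
    refine ⟨hp.1, ?_⟩
    exact hp.2
  · rw [hfF]
    show F _ = F (L (x, res M' q))
    congr 1

lemma _root_.IsQFunc.finsum {M : ℕ} {ι : Type*} [DecidableEq ι] {g : ι → QFun} (s : Finset ι)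
    (h : ∀ i ∈ s, IsQFunc X M (g i)) :
    IsQFunc X M (fun x q => ∑ i ∈ s, g i x q) := by
  classical
  induction s using Finset.induction with
  | empty => exact (IsQFunc.zero M).congr_fun (by simp)
  | @insert a s' ha ih =>
    have h1 := h a (Finset.mem_insert_self a s')
    have h2 := ih fun i hi => h i (Finset.mem_insert_of_mem hi)
    exact (h1.add h2).congr_fun (fun x q => by rw [Finset.sum_insert ha])

lemma tsum_eq_range {g : ℕ → ℝ} (N : ℕ) (h : ∀ j, N ≤ j → g j = 0) :
    ∑' j, g j = ∑ j ∈ Finset.range N, g j :=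
  tsum_eq_sum (fun j hj => h j (by simpa using hj))

lemma Dop_eq_finsum {M : ℕ} {f : QFun} (hf : IsQFunc X M f) (x : ℝ) (q : ℕ → ℝ) :
    Dop f x q = pdx f x q + ∑ j ∈ Finset.range (M + 1), q (j + 1) * pd j f x q := by
  unfold Dop
  congr 1
  refine tsum_eq_range (M + 1) fun j hj => ?_
  rw [pd_zero_of_gt' hf (by omega), mul_zero]

lemma pd_zero_fn (j : ℕ) (x : ℝ) (q : ℕ → ℝ) : pd j (fun _ _ => (0 : ℝ)) x q = 0 := by
  show deriv _ _ = 0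
  exact deriv_const _ _

lemma pdx_zero_fn (x : ℝ) (q : ℕ → ℝ) : pdx (fun _ _ => (0 : ℝ)) x q = 0 := by
  show deriv _ _ = 0
  exact deriv_const _ _

lemma Dop_zero_fn : Dop (fun _ _ => (0 : ℝ)) = fun _ _ => 0 := by
  funext x q
  unfold Dop
  rw [pdx_zero_fn]
  have : ∀ j : ℕ, q (j + 1) * pd j (fun _ _ => (0 : ℝ)) x q = 0 := fun j => by
    rw [pd_zero_fn, mul_zero]
  rw [tsum_congr this, tsum_zero, add_zero]

lemma DopIter_zero_fn (k : ℕ) : Dop^[k] (fun _ _ => (0 : ℝ)) = fun _ _ => 0 := by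
  induction k with
  | zero => rfl
  | succ n ih => rw [Function.iterate_succ_apply, Dop_zero_fn, ih]

lemma _root_.IsQFunc.Dop_closure (hX : IsOpen X) {M : ℕ} {f : QFun} (hf : IsQFunc X M f) :
    IsQFunc X (M + 1) (Dop f) := by
  have hpdx : IsQFunc X (M + 1) (pdx f) := (hf.pdx hX).mono (by omega)
  have hsum : IsQFunc X (M + 1)
      (fun x q => ∑ j ∈ Finset.range (M + 1), q (j + 1) * pd j f x q) := by
    refine IsQFunc.finsum _ fun j hj => ?_
    have hj' : j + 1 ≤ M + 1 := by
      simp only [Finset.mem_range] at hj; omega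
    exact ((hf.pd hX j).mono (by omega : M ≤ M + 1)).coord_mul hj'
  exact (hpdx.add hsum).congr_fun fun x q => (Dop_eq_finsum hf x q).symm

lemma _root_.IsQFunc.DopIter (hX : IsOpen X) {M : ℕ} {f : QFun} (hf : IsQFunc X M f) (k : ℕ) :
    IsQFunc X (M + k) (Dop^[k] f) := by
  induction k with
  | zero => exact hf
  | succ n ih =>
    rw [Function.iterate_succ_apply']
    exact ih.Dop_closure hX





variable {X : Set ℝ}

lemma update_pos_of_ne {q : ℕ → ℝ} (h0 : 0 < q 0) {j : ℕ} (hj : j ≠ 0) (t : ℝ) :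
    0 < Function.update q j t 0 := by
  rw [Function.update_of_ne (fun h => hj h.symm)]
  exact h0

lemma pd_congr (hX : IsOpen X) {f g : QFun} (h : EqOnDom X f g) (j : ℕ) :
    EqOnDom X (pd j f) (pd j g) := by
  intro x hx q h0
  by_cases hj : j = 0
  · subst hj
    have hev : (fun t => f x (Function.update q 0 t))
        =ᶠ[nhds (q 0)] (fun t => g x (Function.update q 0 t)) := by
      filter_upwards [eventually_gt_nhds h0] with t ht
      exact h x hx _ (by rw [Function.update_self]; exact ht)
    exact hev.deriv_eq
  · have hs : (fun t => f x (Function.update q j t))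
        = fun t => g x (Function.update q j t) := by
      funext t
      exact h x hx _ (update_pos_of_ne h0 hj t)
    show deriv _ _ = deriv _ _
    rw [hs]

lemma pdx_congr (hX : IsOpen X) {f g : QFun} (h : EqOnDom X f g) :
    EqOnDom X (pdx f) (pdx g) := by
  intro x hx q h0
  have hev : (fun t => f t q) =ᶠ[nhds x] (fun t => g t q) := by
    filter_upwards [hX.eventually_mem hx] with t ht
    exact h t ht q h0
  exact hev.deriv_eq

lemma Dop_congr (hX : IsOpen X) {f g : QFun} (h : EqOnDom X f g) :
    EqOnDom X (Dop f) (Dop g) := by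
  intro x hx q h0
  unfold Dop
  rw [pdx_congr hX h x hx q h0]
  congr 1
  exact tsum_congr fun j => by rw [pd_congr hX h j x hx q h0]

lemma DopIter_congr (hX : IsOpen X) {f g : QFun} (h : EqOnDom X f g) (k : ℕ) :
    EqOnDom X (Dop^[k] f) (Dop^[k] g) := by
  induction k with
  | zero => exact h
  | succ n ih =>
    rw [Function.iterate_succ_apply', Function.iterate_succ_apply']
    exact Dop_congr hX ih

lemma Lam_congr (hX : IsOpen X) {f g : QFun} (h : EqOnDom X f g) :
    EqOnDom X (Lam f) (Lam g) := by
  intro x hx q h0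
  unfold Lam
  exact tsum_congr fun k => by
    rw [DopIter_congr hX (pd_congr hX h k) k x hx q h0]

lemma Dop_add_dom (hX : IsOpen X) {M : ℕ} {f g : QFun} (hf : IsQFunc X M f)
    (hg : IsQFunc X M g) :
    EqOnDom X (Dop (fun y p => f y p + g y p)) (fun x q => Dop f x q + Dop g x q) := by
  intro x hx q h0
  show _ = Dop f x q + Dop g x q
  rw [Dop_eq_finsum (hf.add hg) x q, Dop_eq_finsum hf x q, Dop_eq_finsum hg x q,
    pdx_add hX hf hg hx h0]
  rw [Finset.sum_congr rfl fun j _ => by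
    rw [pd_add hX hf hg hx h0 j, mul_add]]
  rw [Finset.sum_add_distrib]
  ring

lemma Dop_const_mul (c : ℝ) (f : QFun) :
    Dop (fun y p => c * f y p) = fun x q => c * Dop f x q := by
  funext x q
  unfold Dop
  rw [pdx_const_mul]
  have hterm : ∀ j : ℕ, q (j + 1) * pd j (fun y p => c * f y p) x q
      = c * (q (j + 1) * pd j f x q) := fun j => by rw [pd_const_mul]; ring
  rw [tsum_congr hterm, tsum_mul_left]
  ring

lemma DopIter_const_mul (c : ℝ) (f : QFun) (k : ℕ) :
    Dop^[k] (fun y p => c * f y p) = fun x q => c * Dop^[k] f x q := by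
  induction k with
  | zero => rfl
  | succ n ih =>
    rw [Function.iterate_succ_apply', Function.iterate_succ_apply', ih, Dop_const_mul]

lemma Dop_coord_mul (hX : IsOpen X) {M : ℕ} {f : QFun} (hf : IsQFunc X M f) (r : ℕ) :
    EqOnDom X (Dop (fun y p => p r * f y p))
      (fun x q => q (r + 1) * f x q + q r * Dop f x q) := by
  set N := max M r with hN
  have hfN : IsQFunc X N f := hf.mono (le_max_left _ _)
  have hg : IsQFunc X N (fun y p => p r * f y p) := hfN.coord_mul (le_max_right _ _)
  intro x hx q h0
  show _ = q (r + 1) * f x q + q r * Dop f x q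
  rw [Dop_eq_finsum hg x q, Dop_eq_finsum hfN x q, pdx_coord_mul]
  rw [Finset.sum_congr rfl fun j _ => by rw [pd_coord_mul hX hfN hx h0 j r]]
  have hsplit : ∑ j ∈ Finset.range (N + 1),
      q (j + 1) * ((if j = r then f x q else 0) + q r * pd j f x q)
      = (∑ j ∈ Finset.range (N + 1), if j = r then q (j + 1) * f x q else 0)
        + ∑ j ∈ Finset.range (N + 1), q r * (q (j + 1) * pd j f x q) := by
    rw [← Finset.sum_add_distrib]
    refine Finset.sum_congr rfl fun j _ => ?_
    by_cases h : j = r <;> simp [h] <;> ring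
  rw [hsplit, Finset.sum_ite_eq' (Finset.range (N + 1)) r (fun j => q (j + 1) * f x q),
    if_pos (Finset.mem_range.mpr (by omega)), ← Finset.mul_sum]
  ring

lemma DopIter_add_dom (hX : IsOpen X) {M : ℕ} {f g : QFun} (hf : IsQFunc X M f)
    (hg : IsQFunc X M g) (k : ℕ) :
    EqOnDom X (Dop^[k] (fun y p => f y p + g y p))
      (fun x q => Dop^[k] f x q + Dop^[k] g x q) := by
  induction k with
  | zero => exact fun x hx q h0 => rfl
  | succ n ih =>
    intro x hx q h0
    rw [Function.iterate_succ_apply', Function.iterate_succ_apply',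
      Function.iterate_succ_apply']
    rw [Dop_congr hX ih x hx q h0]
    exact Dop_add_dom hX (hf.DopIter hX n) (hg.DopIter hX n) x hx q h0

lemma Lam_eq {M : ℕ} {f : QFun} (hf : IsQFunc X M f) (x : ℝ) (q : ℕ → ℝ) :
    Lam f x q = ∑ k ∈ Finset.range (M + 1), (-1 : ℝ) ^ k * Dop^[k] (pd k f) x q := by
  unfold Lam
  refine tsum_eq_range (M + 1) fun k hk => ?_
  have hpd : pd k f = fun _ _ => (0 : ℝ) := by
    funext y p; exact pd_zero_of_gt' hf (by omega) y p
  rw [hpd, DopIter_zero_fn]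
  simp

lemma Lop_eq {M : ℕ} {f : QFun} (hf : IsQFunc X M f) (x : ℝ) (q : ℕ → ℝ) :
    Lop f x q = ∑ k ∈ Finset.range (M + 1),
      (-1 : ℝ) ^ (k + 1) * Dop^[k] (fun y p => p 0 * pd k f y p) x q := by
  unfold Lop
  refine tsum_eq_range (M + 1) fun k hk => ?_
  have hpd : (fun y p => p 0 * pd k f y p) = fun _ _ => (0 : ℝ) := by
    funext y p; rw [pd_zero_of_gt' hf (by omega), mul_zero]
  rw [hpd, DopIter_zero_fn]
  simp

lemma Eop_eq {M : ℕ} {f : QFun} (hf : IsQFunc X M f) (x : ℝ) (q : ℕ → ℝ) :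
    Eop f x q = ∑ j ∈ Finset.range (M + 1), q j * pd j f x q := by
  unfold Eop
  exact tsum_eq_range (M + 1) fun j hj => by
    rw [pd_zero_of_gt' hf (by omega), mul_zero]

lemma Bop_eq {M : ℕ} {f : QFun} (hf : IsQFunc X M f) (r : ℤ) (x : ℝ) (q : ℕ → ℝ) :
    Bop r f x q = ∑ k ∈ Finset.range (M + 1),
      if r + 1 ≤ (k : ℤ) then
        (-1 : ℝ) ^ ((k : ℤ) - 1 - r).toNat * Dop^[((k : ℤ) - 1 - r).toNat] (pd k f) x q
      else 0 := by
  unfold Bop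
  refine tsum_eq_range (M + 1) fun k hk => ?_
  split_ifs with h
  · have hpd : pd k f = fun _ _ => (0 : ℝ) := by
      funext y p; exact pd_zero_of_gt' hf (by omega) y p
    rw [hpd, DopIter_zero_fn]
    simp
  · rfl

lemma Bop_neg_one (f : QFun) (x : ℝ) (q : ℕ → ℝ) : Bop (-1) f x q = Lam f x q := by
  unfold Bop Lam
  refine tsum_congr fun k => ?_
  have h1 : (-1 : ℤ) + 1 ≤ (k : ℤ) := by omega
  have h2 : ((k : ℤ) - 1 - (-1)).toNat = k := by omega
  rw [if_pos h1, h2]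

lemma Bop_zero_of_ge {M : ℕ} {f : QFun} (hf : IsQFunc X M f) {r : ℕ} (hr : M ≤ r)
    (x : ℝ) (q : ℕ → ℝ) : Bop (r : ℤ) f x q = 0 := by
  unfold Bop
  have : ∀ k : ℕ, (if (r : ℤ) + 1 ≤ (k : ℤ) then
      (-1 : ℝ) ^ (((k : ℤ) - 1 - r).toNat) * Dop^[(((k : ℤ) - 1 - r).toNat)] (pd k f) x q
      else 0) = 0 := by
    intro k
    split_ifs with h
    · have hpd : pd k f = fun _ _ => (0 : ℝ) := by
        funext y p; exact pd_zero_of_gt' hf (by omega) y p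
      rw [hpd, DopIter_zero_fn]
      simp
    · rfl
  rw [tsum_congr this, tsum_zero]

lemma Cop_eq {M : ℕ} {f : QFun} (hf : IsQFunc X M f) (x : ℝ) (q : ℕ → ℝ) :
    Cop f x q = ∑ r ∈ Finset.range M, q r * Bop (r : ℤ) f x q := by
  unfold Cop
  refine tsum_eq_range M fun r hr => ?_
  rw [Bop_zero_of_ge hf hr, mul_zero]





variable {X : Set ℝ}

lemma snd_deriv_symm {M : ℕ} {F : ℝ × (Fin (M + 1) → ℝ) → ℝ}
    (hF : ContDiffOn ℝ (⊤ : ℕ∞) F (U X M)) (hX : IsOpen X) {p : ℝ × (Fin (M + 1) → ℝ)}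
    (hp : p ∈ U X M) (v w : ℝ × (Fin (M + 1) → ℝ)) :
    fderiv ℝ (fun p' => fderiv ℝ F p' v) p w
      = fderiv ℝ (fun p' => fderiv ℝ F p' w) p v := by
  have hmem := (isOpen_U hX M).mem_nhds hp
  have hd : DifferentiableAt ℝ (fderiv ℝ F) p :=
    (((hF.fderiv_of_isOpen (m := ((⊤ : ℕ∞) : WithTop ℕ∞)) (isOpen_U hX M) (by simp))).contDiffAt hmem).differentiableAt (by simp)
  have hsym : IsSymmSndFDerivAt ℝ F p := (hF.contDiffAt hmem).isSymmSndFDerivAt (by rw [minSmoothness_of_isRCLikeNormedField]; exact WithTop.coe_le_coe.mpr (le_top : (2 : ℕ∞) ≤ ⊤))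
  have h1 : ∀ u, fderiv ℝ (fun p' => fderiv ℝ F p' u) p
      = (ContinuousLinearMap.apply ℝ ℝ u).comp (fderiv ℝ (fderiv ℝ F) p) := fun u =>
    ((ContinuousLinearMap.apply ℝ ℝ u).hasFDerivAt.comp p hd.hasFDerivAt).fderiv
  rw [h1 v, h1 w]
  exact hsym w v

lemma pd_pd_fderiv (hX : IsOpen X) {M : ℕ} {f : QFun} {F : ℝ × (Fin (M + 1) → ℝ) → ℝ}
    (hF : ContDiffOn ℝ (⊤ : ℕ∞) F (U X M)) (hfF : ∀ x q, f x q = F (x, res M q))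
    (i j : Fin (M + 1)) {x : ℝ} {q : ℕ → ℝ} (hx : x ∈ X) (h0 : 0 < q 0) :
    pd i.val (pd j.val f) x q
      = fderiv ℝ (fun p' => fderiv ℝ F p' ((0 : ℝ), Pi.single j 1)) (x, res M q)
          ((0 : ℝ), Pi.single i 1) := by
  have hp : ((x, res M q) : ℝ × (Fin (M + 1) → ℝ)) ∈ U X M := mem_U hx h0
  have hrep : ∀ y p', pd j.val f y p' = pdF F j (y, res M p') := pd_rep hfF j
  have h1 : pd i.val (pd j.val f) x q = pdF (pdF F j) i (x, res M q) :=
    pd_rep hrep i x q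
  have h2 : pdF (pdF F j) i (x, res M q)
      = fderiv ℝ (pdF F j) (x, res M q) ((0 : ℝ), Pi.single i 1) :=
    pdF_eq_fderiv (contDiffOn_pdF hF hX j) hX hp i
  have hev : pdF F j =ᶠ[nhds ((x, res M q) : ℝ × (Fin (M + 1) → ℝ))]
      (fun p' => fderiv ℝ F p' ((0 : ℝ), Pi.single j 1)) := by
    filter_upwards [(isOpen_U hX M).mem_nhds hp] with p' hp'
    exact pdF_eq_fderiv hF hX hp' j
  rw [h1, h2, hev.fderiv_eq]

lemma pd_pdx_fderiv (hX : IsOpen X) {M : ℕ} {f : QFun} {F : ℝ × (Fin (M + 1) → ℝ) → ℝ}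
    (hF : ContDiffOn ℝ (⊤ : ℕ∞) F (U X M)) (hfF : ∀ x q, f x q = F (x, res M q))
    (i : Fin (M + 1)) {x : ℝ} {q : ℕ → ℝ} (hx : x ∈ X) (h0 : 0 < q 0) :
    pd i.val (pdx f) x q
      = fderiv ℝ (fun p' => fderiv ℝ F p' ((1 : ℝ), 0)) (x, res M q)
          ((0 : ℝ), Pi.single i 1) := by
  have hp : ((x, res M q) : ℝ × (Fin (M + 1) → ℝ)) ∈ U X M := mem_U hx h0
  have hrep : ∀ y p', pdx f y p' = pdxF F (y, res M p') := pdx_rep hfF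
  have h1 : pd i.val (pdx f) x q = pdF (pdxF F) i (x, res M q) := pd_rep hrep i x q
  have h2 : pdF (pdxF F) i (x, res M q)
      = fderiv ℝ (pdxF F) (x, res M q) ((0 : ℝ), Pi.single i 1) :=
    pdF_eq_fderiv (contDiffOn_pdxF hF hX) hX hp i
  have hev : pdxF F =ᶠ[nhds ((x, res M q) : ℝ × (Fin (M + 1) → ℝ))]
      (fun p' => fderiv ℝ F p' ((1 : ℝ), 0)) := by
    filter_upwards [(isOpen_U hX M).mem_nhds hp] with p' hp'
    exact pdxF_eq_fderiv hF hX hp'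
  rw [h1, h2, hev.fderiv_eq]

lemma pdx_pd_fderiv (hX : IsOpen X) {M : ℕ} {f : QFun} {F : ℝ × (Fin (M + 1) → ℝ) → ℝ}
    (hF : ContDiffOn ℝ (⊤ : ℕ∞) F (U X M)) (hfF : ∀ x q, f x q = F (x, res M q))
    (i : Fin (M + 1)) {x : ℝ} {q : ℕ → ℝ} (hx : x ∈ X) (h0 : 0 < q 0) :
    pdx (pd i.val f) x q
      = fderiv ℝ (fun p' => fderiv ℝ F p' ((0 : ℝ), Pi.single i 1)) (x, res M q)
          ((1 : ℝ), 0) := by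
  have hp : ((x, res M q) : ℝ × (Fin (M + 1) → ℝ)) ∈ U X M := mem_U hx h0
  have hrep : ∀ y p', pd i.val f y p' = pdF F i (y, res M p') := pd_rep hfF i
  have h1 : pdx (pd i.val f) x q = pdxF (pdF F i) (x, res M q) := pdx_rep hrep x q
  have h2 : pdxF (pdF F i) (x, res M q)
      = fderiv ℝ (pdF F i) (x, res M q) ((1 : ℝ), 0) :=
    pdxF_eq_fderiv (contDiffOn_pdF hF hX i) hX hp
  have hev : pdF F i =ᶠ[nhds ((x, res M q) : ℝ × (Fin (M + 1) → ℝ))]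
      (fun p' => fderiv ℝ F p' ((0 : ℝ), Pi.single i 1)) := by
    filter_upwards [(isOpen_U hX M).mem_nhds hp] with p' hp'
    exact pdF_eq_fderiv hF hX hp' i
  rw [h1, h2, hev.fderiv_eq]

lemma pd_comm (hX : IsOpen X) {M : ℕ} {f : QFun} (hf : IsQFunc X M f) (k j : ℕ) :
    EqOnDom X (pd k (pd j f)) (pd j (pd k f)) := by
  intro x hx q h0
  by_cases hj : M < j
  · have h1 : pd j f = fun _ _ => (0 : ℝ) := by
      funext y p; exact pd_zero_of_gt' hf hj y p
    rw [h1, pd_zero_fn, pd_zero_of_gt' (hf.pd hX k) hj]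
  · by_cases hk : M < k
    · have h1 : pd k f = fun _ _ => (0 : ℝ) := by
        funext y p; exact pd_zero_of_gt' hf hk y p
      rw [h1, pd_zero_fn, pd_zero_of_gt' (hf.pd hX j) hk]
    · obtain ⟨F, hF, hfF⟩ := hf
      have hik := pd_pd_fderiv hX hF hfF ⟨k, by omega⟩ ⟨j, by omega⟩ hx h0
      have hki := pd_pd_fderiv hX hF hfF ⟨j, by omega⟩ ⟨k, by omega⟩ hx h0
      rw [hik, hki, snd_deriv_symm hF hX (mem_U hx h0)]

lemma pdx_comm (hX : IsOpen X) {M : ℕ} {f : QFun} (hf : IsQFunc X M f) (k : ℕ) :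
    EqOnDom X (pd k (pdx f)) (pdx (pd k f)) := by
  intro x hx q h0
  by_cases hk : M < k
  · have h1 : pd k f = fun _ _ => (0 : ℝ) := by
      funext y p; exact pd_zero_of_gt' hf hk y p
    rw [h1, pd_zero_of_gt' (hf.pdx hX) hk, pdx_zero_fn]
  · obtain ⟨F, hF, hfF⟩ := hf
    rw [pd_pdx_fderiv hX hF hfF ⟨k, by omega⟩ hx h0,
      pdx_pd_fderiv hX hF hfF ⟨k, by omega⟩ hx h0,
      snd_deriv_symm hF hX (mem_U hx h0)]

lemma pd_finsum (hX : IsOpen X) {M : ℕ} {ι : Type*} [DecidableEq ι] (s : Finset ι)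
    {g : ι → QFun} (h : ∀ i ∈ s, IsQFunc X M (g i)) (k : ℕ) :
    EqOnDom X (pd k (fun x q => ∑ i ∈ s, g i x q))
      (fun x q => ∑ i ∈ s, pd k (g i) x q) := by
  classical
  induction s using Finset.induction with
  | empty =>
    intro x hx q h0
    have : (fun x q => ∑ i ∈ (∅ : Finset ι), g i x q) = fun _ _ => (0 : ℝ) := by
      funext y p; simp
    rw [this, pd_zero_fn]
    simp
  | @insert a s' ha ih =>
    intro x hx q h0
    have h1 := h a (Finset.mem_insert_self a s')
    have h2 : IsQFunc X M (fun x q => ∑ i ∈ s', g i x q) :=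
      IsQFunc.finsum s' fun i hi => h i (Finset.mem_insert_of_mem hi)
    have he : (fun x q => ∑ i ∈ insert a s', g i x q)
        = fun y p => g a y p + (fun x q => ∑ i ∈ s', g i x q) y p := by
      funext y p; rw [Finset.sum_insert ha]
    rw [he, pd_add hX h1 h2 hx h0 k, ih (fun i hi => h i (Finset.mem_insert_of_mem hi)) x hx q h0]
    simp [Finset.sum_insert ha]

/-- Key commutation: `∂_k (D f) = D (∂_k f) + ∂_{k-1} f` on the domain. -/
lemma pd_Dop (hX : IsOpen X) {M : ℕ} {f : QFun} (hf : IsQFunc X M f) (k : ℕ) :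
    EqOnDom X (pd k (Dop f))
      (fun x q => Dop (pd k f) x q + (if k = 0 then 0 else pd (k - 1) f x q)) := by
  intro x hx q h0
  show _ = Dop (pd k f) x q + (if k = 0 then 0 else pd (k - 1) f x q)
  set S : QFun := fun y p => ∑ j ∈ Finset.range (M + 1), p (j + 1) * pd j f y p with hS
  have hDrep : Dop f = fun y p => pdx f y p + S y p := by
    funext y p; exact Dop_eq_finsum hf y p
  have h1 : IsQFunc X (M + 1) (pdx f) := (hf.pdx hX).mono (by omega)
  have hterm : ∀ j ∈ Finset.range (M + 1), IsQFunc X (M + 1)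
      (fun y p => p (j + 1) * pd j f y p) := by
    intro j hj
    have hj' : j + 1 ≤ M + 1 := by simp only [Finset.mem_range] at hj; omega
    exact ((hf.pd hX j).mono (by omega : M ≤ M + 1)).coord_mul hj'
  have h2 : IsQFunc X (M + 1) S := IsQFunc.finsum _ hterm
  have e1 : pd k (Dop f) x q = pd k (fun y p => pdx f y p + S y p) x q := by rw [hDrep]
  have e2 : pd k (fun y p => pdx f y p + S y p) x q = pd k (pdx f) x q + pd k S x q :=
    pd_add hX h1 h2 hx h0 k
  have e3 : pd k S x q = ∑ j ∈ Finset.range (M + 1),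
      pd k (fun y p => p (j + 1) * pd j f y p) x q :=
    pd_finsum hX (Finset.range (M + 1)) hterm k x hx q h0
  have e4 : ∀ j ∈ Finset.range (M + 1), pd k (fun y p => p (j + 1) * pd j f y p) x q
      = (if k = j + 1 then pd j f x q else 0) + q (j + 1) * pd j (pd k f) x q := by
    intro j hj
    rw [pd_coord_mul hX (hf.pd hX j) hx h0 k (j + 1), pd_comm hX hf k j x hx q h0]
  have e5 : ∑ j ∈ Finset.range (M + 1), (if k = j + 1 then pd j f x q else 0)
      = (if k = 0 then 0 else pd (k - 1) f x q) := by
    by_cases hk : k = 0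
    · subst hk; simp
    · obtain ⟨k', rfl⟩ : ∃ k', k = k' + 1 := ⟨k - 1, by omega⟩
      have hcong : ∀ j ∈ Finset.range (M + 1), (if k' + 1 = j + 1 then pd j f x q else 0)
          = (if j = k' then pd j f x q else 0) := by
        intro j hj
        congr 1
        simp only [eq_iff_iff]
        omega
      rw [Finset.sum_congr rfl hcong, Finset.sum_ite_eq' (Finset.range (M + 1)) k'
        (fun j => pd j f x q)]
      by_cases hk' : k' ∈ Finset.range (M + 1)
      · rw [if_pos hk']; simp
      · rw [if_neg hk']
        have hMk : M < k' := by simp only [Finset.mem_range] at hk'; omega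
        rw [if_neg hk, Nat.add_sub_cancel, pd_zero_of_gt' hf hMk]
  have e6 : Dop (pd k f) x q = pdx (pd k f) x q
      + ∑ j ∈ Finset.range (M + 1), q (j + 1) * pd j (pd k f) x q :=
    Dop_eq_finsum (hf.pd hX k) x q
  rw [e1, e2, e3, Finset.sum_congr rfl e4, Finset.sum_add_distrib, e5, e6,
    pdx_comm hX hf k x hx q h0]
  ring

/-- `∂_{M+k} (D^k f) = ∂_M f` on the domain, for `f` of order `M`. -/
lemma pd_DopIter_top (hX : IsOpen X) (k : ℕ) : ∀ (M : ℕ) (f : QFun), IsQFunc X M f →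
    EqOnDom X (pd (M + k) (Dop^[k] f)) (pd M f) := by
  induction k with
  | zero => intro M f hf x hx q h0; rfl
  | succ n ih =>
    intro M f hf x hx q h0
    have hDf : IsQFunc X (M + 1) (Dop f) := hf.Dop_closure hX
    have h1 : pd (M + (n + 1)) (Dop^[n + 1] f) x q = pd (M + 1 + n) (Dop^[n] (Dop f)) x q := by
      rw [Function.iterate_succ_apply]
      congr 1
      omega
    have h2 := ih (M + 1) (Dop f) hDf x hx q h0
    have h3 := pd_Dop hX hf (M + 1) x hx q h0
    have h4 : Dop (pd (M + 1) f) x q = 0 := by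
      have : pd (M + 1) f = fun _ _ => (0 : ℝ) := by
        funext y p; exact pd_zero_of_gt' hf (by omega) y p
      rw [this, Dop_zero_fn]
    rw [h1, h2, h3]
    show Dop (pd (M + 1) f) x q + (if M + 1 = 0 then 0 else pd (M + 1 - 1) f x q) = pd M f x q
    rw [h4]
    simp




variable {X : Set ℝ}

lemma Dop_finsum (hX : IsOpen X) {M : ℕ} {ι : Type*} [DecidableEq ι] (s : Finset ι)
    {g : ι → QFun} (h : ∀ i ∈ s, IsQFunc X M (g i)) :
    EqOnDom X (Dop (fun x q => ∑ i ∈ s, g i x q))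
      (fun x q => ∑ i ∈ s, Dop (g i) x q) := by
  classical
  induction s using Finset.induction with
  | empty =>
    intro x hx q h0
    have he : (fun x q => ∑ i ∈ (∅ : Finset ι), g i x q) = fun _ _ => (0 : ℝ) := by
      funext y p; simp
    rw [he, Dop_zero_fn]
    simp
  | @insert a s' ha ih =>
    intro x hx q h0
    have h1 := h a (Finset.mem_insert_self a s')
    have h2 : IsQFunc X M (fun x q => ∑ i ∈ s', g i x q) :=
      IsQFunc.finsum s' fun i hi => h i (Finset.mem_insert_of_mem hi)
    have he : (fun x q => ∑ i ∈ insert a s', g i x q)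
        = fun y p => g a y p + (fun x q => ∑ i ∈ s', g i x q) y p := by
      funext y p; rw [Finset.sum_insert ha]
    rw [he, Dop_add_dom hX h1 h2 x hx q h0]
    show Dop (g a) x q + Dop (fun x q => ∑ i ∈ s', g i x q) x q
      = ∑ i ∈ insert a s', Dop (g i) x q
    rw [ih (fun i hi => h i (Finset.mem_insert_of_mem hi)) x hx q h0]
    show Dop (g a) x q + ∑ i ∈ s', Dop (g i) x q = _
    rw [Finset.sum_insert ha]

/-- `Λ (D g) = 0` on the domain. -/
lemma Lam_Dop_zero (hX : IsOpen X) {M : ℕ} {g : QFun} (hg : IsQFunc X M g) :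
    ∀ x ∈ X, ∀ q : ℕ → ℝ, 0 < q 0 → Lam (Dop g) x q = 0 := by
  intro x hx q h0
  have hDg : IsQFunc X (M + 1) (Dop g) := hg.Dop_closure hX
  rw [Lam_eq hDg x q]
  -- the auxiliary function in `pd_Dop`
  set V : ℕ → QFun := fun k => if k = 0 then (fun _ _ => (0 : ℝ)) else pd (k - 1) g with hV
  have hVQ : ∀ k, IsQFunc X (M + 1) (V k) := by
    intro k
    by_cases hk : k = 0
    · simp only [hV, hk, if_pos]
      exact IsQFunc.zero (M + 1)
    · simp only [hV, if_neg hk]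
      exact (hg.pd hX (k - 1)).mono (by omega)
  have hWk : ∀ k, EqOnDom X (pd k (Dop g))
      (fun y p => Dop (pd k g) y p + V k y p) := by
    intro k y hy p hp
    rw [pd_Dop hX hg k y hy p hp]
    show Dop (pd k g) y p + _ = Dop (pd k g) y p + V k y p
    congr 1
    by_cases hk : k = 0 <;> simp [hV, hk]
  have hterm : ∀ k ∈ Finset.range (M + 2),
      (-1 : ℝ) ^ k * Dop^[k] (pd k (Dop g)) x q
      = (-1 : ℝ) ^ k * (Dop^[k + 1] (pd k g) x q + Dop^[k] (V k) x q) := by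
    intro k _
    congr 1
    rw [DopIter_congr hX (hWk k) k x hx q h0]
    rw [DopIter_add_dom hX ((hg.pd hX k).Dop_closure hX) (hVQ k) k x hx q h0]
    rw [Function.iterate_succ_apply]
  rw [Finset.sum_congr rfl hterm]
  have hsplit : ∑ k ∈ Finset.range (M + 2),
      (-1 : ℝ) ^ k * (Dop^[k + 1] (pd k g) x q + Dop^[k] (V k) x q)
      = (∑ k ∈ Finset.range (M + 2), (-1 : ℝ) ^ k * Dop^[k + 1] (pd k g) x q)
        + ∑ k ∈ Finset.range (M + 2), (-1 : ℝ) ^ k * Dop^[k] (V k) x q := by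
    rw [← Finset.sum_add_distrib]
    exact Finset.sum_congr rfl fun k _ => by ring
  rw [hsplit]
  have hA : ∑ k ∈ Finset.range (M + 2), (-1 : ℝ) ^ k * Dop^[k + 1] (pd k g) x q
      = ∑ k ∈ Finset.range (M + 1), (-1 : ℝ) ^ k * Dop^[k + 1] (pd k g) x q := by
    rw [Finset.sum_range_succ]
    have : pd (M + 1) g = fun _ _ => (0 : ℝ) := by
      funext y p; exact pd_zero_of_gt' hg (by omega) y p
    rw [this, DopIter_zero_fn]
    simp
  have hB : ∑ k ∈ Finset.range (M + 2), (-1 : ℝ) ^ k * Dop^[k] (V k) x q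
      = ∑ k ∈ Finset.range (M + 1), (-1 : ℝ) ^ (k + 1) * Dop^[k + 1] (pd k g) x q := by
    rw [Finset.sum_range_succ']
    have h0term : (-1 : ℝ) ^ 0 * Dop^[0] (V 0) x q = 0 := by
      simp [hV]
    rw [h0term, add_zero]
    refine Finset.sum_congr rfl fun k _ => ?_
    have : V (k + 1) = pd k g := by simp [hV]
    rw [this]
  rw [hA, hB, ← Finset.sum_add_distrib]
  rw [Finset.sum_congr rfl (fun (k : ℕ) _ => show
      (-1 : ℝ) ^ k * Dop^[k + 1] (pd k g) x q
        + (-1 : ℝ) ^ (k + 1) * Dop^[k + 1] (pd k g) x q = 0 by ring)]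
  simp

/-- `Λ` is linear (for `+ c •`) on the domain. -/
lemma Lam_add_smul (hX : IsOpen X) {M : ℕ} {f g : QFun} (hf : IsQFunc X M f)
    (hg : IsQFunc X M g) (c : ℝ) :
    ∀ x ∈ X, ∀ q : ℕ → ℝ, 0 < q 0 →
      Lam (fun y p => f y p + c * g y p) x q = Lam f x q + c * Lam g x q := by
  intro x hx q h0
  have hcg : IsQFunc X M (fun y p => c * g y p) := hg.const_mul c
  have hsum : IsQFunc X M (fun y p => f y p + c * g y p) := hf.add hcg
  rw [Lam_eq hsum x q, Lam_eq hf x q, Lam_eq hg x q]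
  have hterm : ∀ k ∈ Finset.range (M + 1),
      (-1 : ℝ) ^ k * Dop^[k] (pd k (fun y p => f y p + c * g y p)) x q
      = (-1 : ℝ) ^ k * Dop^[k] (pd k f) x q
        + c * ((-1 : ℝ) ^ k * Dop^[k] (pd k g) x q) := by
    intro k _
    have hpdeq : EqOnDom X (pd k (fun y p => f y p + c * g y p))
        (fun y p => pd k f y p + c * pd k g y p) := by
      intro y hy p hp
      rw [pd_add hX hf hcg hy hp k, pd_const_mul]
    rw [DopIter_congr hX hpdeq k x hx q h0]
    have h1 : EqOnDom X (Dop^[k] (fun y p => pd k f y p + c * pd k g y p))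
        (fun x q => Dop^[k] (pd k f) x q + Dop^[k] (fun y p => c * pd k g y p) x q) :=
      DopIter_add_dom hX (hf.pd hX k) ((hg.pd hX k).const_mul c) k
    rw [h1 x hx q h0, DopIter_const_mul c (pd k g) k]
    ring
  rw [Finset.sum_congr rfl hterm, Finset.sum_add_distrib, ← Finset.mul_sum]





variable {X : Set ℝ}

lemma pd_eq_fderiv (hX : IsOpen X) {M : ℕ} {f : QFun} {F : ℝ × (Fin (M + 1) → ℝ) → ℝ}
    (hF : ContDiffOn ℝ (⊤ : ℕ∞) F (U X M)) (hfF : ∀ x q, f x q = F (x, res M q))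
    (i : Fin (M + 1)) {x : ℝ} {q : ℕ → ℝ} (hx : x ∈ X) (h0 : 0 < q 0) :
    pd i.val f x q = fderiv ℝ F (x, res M q) ((0 : ℝ), Pi.single i 1) := by
  rw [pd_rep hfF i x q, pdF_eq_fderiv hF hX (mem_U hx h0) i]

/-- Euler's identity: for `1`-homogeneous `f`, `E f = f` on the domain. -/
lemma euler_identity (hX : IsOpen X) {M : ℕ} {f : QFun} (hf : IsQFunc X M f)
    (hhom : IsHomog X 1 f) :
    ∀ x ∈ X, ∀ q : ℕ → ℝ, 0 < q 0 → Eop f x q = f x q := by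
  intro x hx q h0
  obtain ⟨F, hF, hfF⟩ := hf
  set v : Fin (M + 1) → ℝ := res M q with hv
  have hp : ((x, v) : ℝ × (Fin (M + 1) → ℝ)) ∈ U X M := mem_U hx h0
  have hd : DifferentiableAt ℝ F (x, v) :=
    (hF.contDiffAt ((isOpen_U hX M).mem_nhds hp)).differentiableAt (by simp)
  set L := fderiv ℝ F (x, v) with hL
  -- derivative of l ↦ F (x, l • v) at l = 1 is L (0, v)
  have hc : HasDerivAt (fun l : ℝ => ((x, l • v) : ℝ × (Fin (M + 1) → ℝ)))
      (((0 : ℝ), v)) 1 := by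
    refine (hasDerivAt_const _ x).prodMk ?_
    simpa using (hasDerivAt_id (1 : ℝ)).smul_const v
  have hcomp : HasDerivAt (fun l : ℝ => F (x, l • v)) (L ((0 : ℝ), v)) 1 := by
    have hd' : HasFDerivAt F L ((x, (1 : ℝ) • v)) := by
      rw [one_smul]; exact hd.hasFDerivAt
    have h := hd'.comp_hasDerivAt 1 hc
    exact h
  -- but that function is eventually l ↦ l * f x q
  have hev : (fun l : ℝ => F (x, l • v)) =ᶠ[nhds 1] fun l => l * f x q := by
    filter_upwards [eventually_gt_nhds zero_lt_one] with l hl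
    have h1 : F (x, l • v) = f x (fun j => l * q j) := by
      rw [hfF x (fun j => l * q j)]
      rfl
    rw [h1, hhom x hx q h0 l hl, Real.rpow_one]
  have hder : L ((0 : ℝ), v) = f x q := by
    rw [← hcomp.deriv, hev.deriv_eq]
    simpa using ((hasDerivAt_id (1 : ℝ)).mul_const (f x q)).deriv
  -- now compute E f
  rw [Eop_eq ⟨F, hF, hfF⟩ x q]
  have hswap : ∑ j ∈ Finset.range (M + 1), q j * pd j f x q
      = ∑ i : Fin (M + 1), (fun j => q j * pd j f x q) i.val :=
    (Fin.sum_univ_eq_sum_range _ (M + 1)).symm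
  rw [hswap]
  have hterm : ∀ i : Fin (M + 1),
      q i.val * pd i.val f x q = L ((0 : ℝ), Pi.single i (v i)) := by
    intro i
    rw [pd_eq_fderiv hX hF hfF i hx h0]
    rw [← hL, ← smul_eq_mul, ← map_smul]
    congr 1
    rw [Prod.smul_mk, smul_zero]
    have : q i.val • (Pi.single i (1 : ℝ) : Fin (M + 1) → ℝ) = Pi.single i (v i) := by
      funext j
      by_cases h : j = i <;> simp [h, Pi.single_apply, hv, res]
    rw [this]
  rw [Finset.sum_congr rfl fun i _ => hterm i, ← map_sum]
  have hsum : (∑ i : Fin (M + 1), (((0 : ℝ), Pi.single i (v i)) : ℝ × (Fin (M + 1) → ℝ)))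
      = ((0 : ℝ), v) := by
    rw [Prod.ext_iff]
    constructor
    · rw [Prod.fst_sum]; simp
    · rw [Prod.snd_sum]
      exact Finset.univ_sum_single v
  rw [hsum, hder]





variable {X : Set ℝ}

/-- The summand of `Bop` as a function. -/
def BopTerm (f : QFun) (r : ℤ) (k : ℕ) : QFun :=
  if r + 1 ≤ (k : ℤ) then
    fun y p => (-1 : ℝ) ^ ((k : ℤ) - 1 - r).toNat
      * Dop^[((k : ℤ) - 1 - r).toNat] (pd k f) y p
  else fun _ _ => 0

lemma Bop_rep {M : ℕ} {f : QFun} (hf : IsQFunc X M f) (r : ℤ) :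
    Bop r f = fun y p => ∑ k ∈ Finset.range (M + 1), BopTerm f r k y p := by
  funext y p
  rw [Bop_eq hf r y p]
  refine Finset.sum_congr rfl fun k _ => ?_
  unfold BopTerm
  split_ifs with h <;> rfl

lemma BopTerm_qfunc (hX : IsOpen X) {M : ℕ} {f : QFun} (hf : IsQFunc X M f)
    {r : ℤ} (hr : -1 ≤ r) {k : ℕ} (hk : k ≤ M) :
    IsQFunc X (M + M) (BopTerm f r k) := by
  unfold BopTerm
  split_ifs with h
  · have he : ((k : ℤ) - 1 - r).toNat ≤ M := by omega
    exact (((hf.pd hX k).DopIter hX _).mono (by omega)).const_mul _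
  · exact IsQFunc.zero _

lemma IsQFunc_Bop (hX : IsOpen X) {M : ℕ} {f : QFun} (hf : IsQFunc X M f)
    {r : ℤ} (hr : -1 ≤ r) : IsQFunc X (M + M) (Bop r f) := by
  have h : ∀ k ∈ Finset.range (M + 1), IsQFunc X (M + M) (BopTerm f r k) := by
    intro k hk
    simp only [Finset.mem_range] at hk
    exact BopTerm_qfunc hX hf hr (by omega)
  refine (IsQFunc.finsum _ h).congr_fun ?_
  intro x q
  rw [Bop_rep hf r]

lemma Dop_Bop (hX : IsOpen X) {M : ℕ} {f : QFun} (hf : IsQFunc X M f)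
    {r : ℤ} (hr : -1 ≤ r) :
    EqOnDom X (Dop (Bop r f)) (fun x q => ∑ k ∈ Finset.range (M + 1),
      if r + 1 ≤ (k : ℤ) then
        (-1 : ℝ) ^ ((k : ℤ) - 1 - r).toNat
          * Dop^[((k : ℤ) - 1 - r).toNat + 1] (pd k f) x q
      else 0) := by
  intro x hx q h0
  rw [Bop_rep hf r]
  have hQ : ∀ k ∈ Finset.range (M + 1), IsQFunc X (M + M) (BopTerm f r k) := fun k hk =>
    BopTerm_qfunc hX hf hr (by simp only [Finset.mem_range] at hk; omega)
  rw [Dop_finsum hX (Finset.range (M + 1)) hQ x hx q h0]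
  show ∑ k ∈ Finset.range (M + 1), Dop (BopTerm f r k) x q = _
  refine Finset.sum_congr rfl fun k _ => ?_
  unfold BopTerm
  split_ifs with h
  · rw [Dop_const_mul]
    show (-1 : ℝ) ^ ((k : ℤ) - 1 - r).toNat * Dop (Dop^[((k : ℤ) - 1 - r).toNat] (pd k f)) x q = _
    rw [show Dop^[((k : ℤ) - 1 - r).toNat + 1] (pd k f)
      = Dop (Dop^[((k : ℤ) - 1 - r).toNat] (pd k f)) from
      Function.iterate_succ_apply' Dop _ (pd k f)]
  · rw [Dop_zero_fn]

lemma Bop_rec (hX : IsOpen X) {M : ℕ} {f : QFun} (hf : IsQFunc X M f)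
    {r : ℕ} (hrM : r ≤ M) :
    EqOnDom X (Dop (Bop (r : ℤ) f))
      (fun x q => pd r f x q - Bop ((r : ℤ) - 1) f x q) := by
  intro x hx q h0
  show Dop (Bop (r : ℤ) f) x q = pd r f x q - Bop ((r : ℤ) - 1) f x q
  rw [Dop_Bop hX hf (by omega) x hx q h0, Bop_eq hf ((r : ℤ) - 1) x q,
    eq_sub_iff_add_eq, ← Finset.sum_add_distrib]
  have hterm : ∀ k ∈ Finset.range (M + 1),
      ((if (r : ℤ) + 1 ≤ (k : ℤ) then
          (-1 : ℝ) ^ ((k : ℤ) - 1 - r).toNat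
            * Dop^[((k : ℤ) - 1 - r).toNat + 1] (pd k f) x q
        else 0)
      + (if ((r : ℤ) - 1) + 1 ≤ (k : ℤ) then
          (-1 : ℝ) ^ ((k : ℤ) - 1 - ((r : ℤ) - 1)).toNat
            * Dop^[((k : ℤ) - 1 - ((r : ℤ) - 1)).toNat] (pd k f) x q
        else 0))
      = if k = r then pd r f x q else 0 := by
    intro k _
    rcases lt_trichotomy k r with h | h | h
    · rw [if_neg (by omega), if_neg (by omega), if_neg (by omega), add_zero]
    · subst h
      rw [if_neg (by omega), if_pos (by omega), if_pos rfl, zero_add]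
      have h0' : ((k : ℤ) - 1 - ((k : ℤ) - 1)).toNat = 0 := by omega
      rw [h0']
      simp
    · rw [if_pos (by omega), if_pos (by omega), if_neg (by omega)]
      have h1 : ((k : ℤ) - 1 - ((r : ℤ) - 1)).toNat = ((k : ℤ) - 1 - (r : ℤ)).toNat + 1 := by
        omega
      rw [h1, pow_succ]
      ring
  rw [Finset.sum_congr rfl hterm,
    Finset.sum_ite_eq' (Finset.range (M + 1)) r (fun _ => pd r f x q),
    if_pos (Finset.mem_range.mpr (by omega))]

lemma Bop_topterm {M : ℕ} {f : QFun} (hf : IsQFunc X M f) (hM : 1 ≤ M) (x : ℝ) (q : ℕ → ℝ) :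
    Bop ((M : ℤ) - 1) f x q = pd M f x q := by
  rw [Bop_eq hf ((M : ℤ) - 1) x q]
  have hterm : ∀ k ∈ Finset.range (M + 1),
      (if ((M : ℤ) - 1) + 1 ≤ (k : ℤ) then
        (-1 : ℝ) ^ ((k : ℤ) - 1 - ((M : ℤ) - 1)).toNat
          * Dop^[((k : ℤ) - 1 - ((M : ℤ) - 1)).toNat] (pd k f) x q
      else 0) = if k = M then pd M f x q else 0 := by
    intro k hk
    simp only [Finset.mem_range] at hk
    by_cases h : k = M
    · subst h
      rw [if_pos (by omega), if_pos rfl]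
      have h0' : ((k : ℤ) - 1 - ((k : ℤ) - 1)).toNat = 0 := by omega
      rw [h0']
      simp
    · rw [if_neg (by omega), if_neg h]
  rw [Finset.sum_congr rfl hterm,
    Finset.sum_ite_eq' (Finset.range (M + 1)) M (fun _ => pd M f x q),
    if_pos (Finset.mem_range.mpr (by omega))]

lemma IsQFunc_Cop (hX : IsOpen X) {M : ℕ} {f : QFun} (hf : IsQFunc X M f) :
    IsQFunc X (M + M) (Cop f) := by
  refine (IsQFunc.finsum (Finset.range M) (g := fun r : ℕ => fun y p => p r * Bop (r : ℤ) f y p)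
    fun r hr => (IsQFunc_Bop hX hf (by omega)).coord_mul
      (by simp only [Finset.mem_range] at hr; omega)).congr_fun ?_
  intro x q
  rw [Cop_eq hf x q]

/-- The key decomposition: `E f = q₀ Λ f + D (C f)` on the domain. -/
lemma euler_decomp (hX : IsOpen X) {M : ℕ} {f : QFun} (hf : IsQFunc X M f) :
    ∀ x ∈ X, ∀ q : ℕ → ℝ, 0 < q 0 →
      Eop f x q = q 0 * Lam f x q + Dop (Cop f) x q := by
  intro x hx q h0
  by_cases hM : M = 0
  · subst hM
    have hC : Cop f = fun _ _ => (0 : ℝ) := by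
      funext y p; rw [Cop_eq hf y p]; simp
    rw [Eop_eq hf x q, Lam_eq hf x q, hC, Dop_zero_fn]
    simp [Finset.sum_range_one]
  · obtain ⟨M', rfl⟩ : ∃ M', M = M' + 1 := ⟨M - 1, by omega⟩
    set M := M' + 1
    have hCrep : Cop f = fun x q => ∑ r ∈ Finset.range M, q r * Bop (r : ℤ) f x q := by
      funext y p; rw [Cop_eq hf y p]
    have hQr : ∀ r ∈ Finset.range M, IsQFunc X (M + M)
        (fun y p => p r * Bop (r : ℤ) f y p) := fun r hr =>
      (IsQFunc_Bop hX hf (by omega)).coord_mul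
        (by simp only [Finset.mem_range] at hr; omega)
    have hDC : Dop (Cop f) x q = ∑ r ∈ Finset.range M,
        Dop (fun y p => p r * Bop (r : ℤ) f y p) x q := by
      rw [hCrep]
      exact Dop_finsum hX (Finset.range M) hQr x hx q h0
    have hper : ∀ r ∈ Finset.range M,
        Dop (fun y p => p r * Bop (r : ℤ) f y p) x q
        = q (r + 1) * Bop (r : ℤ) f x q
          + q r * (pd r f x q - Bop ((r : ℤ) - 1) f x q) := by
      intro r hr
      simp only [Finset.mem_range] at hr
      rw [Dop_coord_mul hX (IsQFunc_Bop hX hf (by omega)) r x hx q h0]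
      show q (r + 1) * Bop (r : ℤ) f x q + q r * Dop (Bop (r : ℤ) f) x q = _
      rw [Bop_rec hX hf (by omega : r ≤ M) x hx q h0]
    rw [hDC, Finset.sum_congr rfl hper]
    have hsplit : ∑ r ∈ Finset.range M,
        (q (r + 1) * Bop (r : ℤ) f x q
          + q r * (pd r f x q - Bop ((r : ℤ) - 1) f x q))
        = (∑ r ∈ Finset.range M, q (r + 1) * Bop (r : ℤ) f x q)
          + (∑ r ∈ Finset.range M, q r * pd r f x q)
          - ∑ r ∈ Finset.range M, q r * Bop ((r : ℤ) - 1) f x q := by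
      rw [← Finset.sum_add_distrib, ← Finset.sum_sub_distrib]
      refine Finset.sum_congr rfl fun r _ => by ring
    rw [hsplit]
    have hT3 : ∑ r ∈ Finset.range M, q r * Bop ((r : ℤ) - 1) f x q
        = (∑ r ∈ Finset.range M', q (r + 1) * Bop ((r : ℤ)) f x q)
          + q 0 * Lam f x q := by
      rw [Finset.sum_range_succ']
      congr 1
      · refine Finset.sum_congr rfl fun r _ => ?_
        have : ((r + 1 : ℕ) : ℤ) - 1 = (r : ℤ) := by push_cast; ring
        rw [this]
      · have : ((0 : ℕ) : ℤ) - 1 = (-1 : ℤ) := by norm_num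
        rw [this, Bop_neg_one]
    have hT1 : ∑ r ∈ Finset.range M, q (r + 1) * Bop (r : ℤ) f x q
        = (∑ r ∈ Finset.range M', q (r + 1) * Bop ((r : ℤ)) f x q)
          + q M * Bop ((M' : ℤ)) f x q := by
      rw [Finset.sum_range_succ]
    have htop : Bop ((M' : ℤ)) f x q = pd M f x q := by
      have : ((M : ℕ) : ℤ) - 1 = (M' : ℤ) := by push_cast [M]; ring
      rw [← this, Bop_topterm hf (by omega) x q]
    have hE : Eop f x q = (∑ r ∈ Finset.range M, q r * pd r f x q)
        + q M * pd M f x q := by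
      rw [Eop_eq hf x q, Finset.sum_range_succ]
    rw [hE, hT1, hT3, htop]
    ring



end S15


open S15 in
/-- If `φ` is a `1`-homogeneous q-function of order `t` with
`∂²φ/∂q_t²` not identically zero, then `s = Λ φ` satisfies `L s = 0` and has
exact order `2t`: `s` is a q-function of order `2t`, with
`∂s/∂q_{2t} = (-1)^t ∂²φ/∂q_t²` not identically zero. Consequently key local
score functions of every positive even order exist. -/
theorem stmt15 (X : Set ℝ) (hX : IsOpenInterval X) (t : ℕ) (φ : QFun)
    (hφ : IsQFunc X t φ) (hhom : IsHomog X 1 φ)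
    (hne : ¬ ∀ x ∈ X, ∀ q : ℕ → ℝ, 0 < q 0 → pd t (pd t φ) x q = 0) :
    (∀ x ∈ X, ∀ q : ℕ → ℝ, 0 < q 0 → Lop (Lam φ) x q = 0) ∧
    IsQFunc X (2 * t) (Lam φ) ∧
    (∀ x ∈ X, ∀ q : ℕ → ℝ, 0 < q 0 →
      pd (2 * t) (Lam φ) x q = (-1 : ℝ) ^ t * pd t (pd t φ) x q) ∧
    ¬ ∀ x ∈ X, ∀ q : ℕ → ℝ, 0 < q 0 → pd (2 * t) (Lam φ) x q = 0 := by
  obtain ⟨hXo, -, -⟩ := hX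
  -- order 2t representation of Λφ
  have hkey : ∀ k ∈ Finset.range (t + 1),
      IsQFunc X (2 * t) (fun y p => (-1 : ℝ) ^ k * Dop^[k] (pd k φ) y p) := by
    intro k hk
    simp only [Finset.mem_range] at hk
    exact (((hφ.pd hXo k).DopIter hXo k).mono (by omega)).const_mul _
  have hLrep : Lam φ = fun x q => ∑ k ∈ Finset.range (t + 1),
      (-1 : ℝ) ^ k * Dop^[k] (pd k φ) x q := by
    funext x q; exact Lam_eq hφ x q
  have hs : IsQFunc X (2 * t) (Lam φ) :=
    (IsQFunc.finsum _ hkey).congr_fun fun x q => (Lam_eq hφ x q).symm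
  -- conjunct 3
  have hc3 : ∀ x ∈ X, ∀ q : ℕ → ℝ, 0 < q 0 →
      pd (2 * t) (Lam φ) x q = (-1 : ℝ) ^ t * pd t (pd t φ) x q := by
    intro x hx q h0
    rw [hLrep, pd_finsum hXo (Finset.range (t + 1)) hkey (2 * t) x hx q h0]
    show (∑ k ∈ Finset.range (t + 1),
      pd (2 * t) (fun y p => (-1 : ℝ) ^ k * Dop^[k] (pd k φ) y p) x q) = _
    have hterm : ∀ k ∈ Finset.range (t + 1),
        pd (2 * t) (fun y p => (-1 : ℝ) ^ k * Dop^[k] (pd k φ) y p) x q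
        = if k = t then (-1 : ℝ) ^ t * pd t (pd t φ) x q else 0 := by
      intro k hk
      simp only [Finset.mem_range] at hk
      rw [pd_const_mul]
      by_cases h : k = t
      · subst h
        rw [if_pos rfl]
        congr 1
        have h2 := pd_DopIter_top hXo k k (pd k φ) (hφ.pd hXo k) x hx q h0
        rw [show 2 * k = k + k by ring]
        exact h2
      · rw [if_neg h,
          pd_zero_of_gt' ((hφ.pd hXo k).DopIter hXo k) (by omega) x q, mul_zero]
    rw [Finset.sum_congr rfl hterm,
      Finset.sum_ite_eq' (Finset.range (t + 1)) t (fun _ => (-1 : ℝ) ^ t * pd t (pd t φ) x q),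
      if_pos (Finset.mem_range.mpr (by omega))]
  -- conjunct 4
  have hc4 : ¬ ∀ x ∈ X, ∀ q : ℕ → ℝ, 0 < q 0 → pd (2 * t) (Lam φ) x q = 0 := by
    intro hall
    apply hne
    intro x hx q h0
    have h1 := hall x hx q h0
    rw [hc3 x hx q h0] at h1
    have hpow : ((-1 : ℝ) ^ t) ≠ 0 := pow_ne_zero t (by norm_num)
    exact (mul_eq_zero.mp h1).resolve_left hpow
  -- conjunct 1
  have hc1 : ∀ x ∈ X, ∀ q : ℕ → ℝ, 0 < q 0 → Lop (Lam φ) x q = 0 := by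
    intro x hx q h0
    have hA : IsQFunc X (2 * t) (fun y p => p 0 * Lam φ y p) := hs.coord_mul (by omega)
    -- Step I : Λ(q₀ Λφ) = Λφ + Σ (-1)^k D^k (q₀ ∂_k Λφ)
    have hI : Lam (fun y p => p 0 * Lam φ y p) x q
        = Lam φ x q + ∑ k ∈ Finset.range (2 * t + 1),
            (-1 : ℝ) ^ k * Dop^[k] (fun y p => p 0 * pd k (Lam φ) y p) x q := by
      rw [Lam_eq hA x q]
      have hterm : ∀ k ∈ Finset.range (2 * t + 1),
          (-1 : ℝ) ^ k * Dop^[k] (pd k (fun y p => p 0 * Lam φ y p)) x q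
          = (if k = 0 then Lam φ x q else 0)
            + (-1 : ℝ) ^ k * Dop^[k] (fun y p => p 0 * pd k (Lam φ) y p) x q := by
        intro k _
        by_cases h : k = 0
        · subst h
          rw [if_pos rfl]
          simp only [pow_zero, one_mul, Function.iterate_zero, id_eq]
          rw [pd_coord_mul hXo hs hx h0 0 0]
          simp
        · rw [if_neg h, zero_add]
          congr 1
          have hpdeq : EqOnDom X (pd k (fun y p => p 0 * Lam φ y p))
              (fun y p => p 0 * pd k (Lam φ) y p) := by
            intro y hy p hp
            rw [pd_coord_mul hXo hs hy hp k 0, if_neg h, zero_add]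
          exact DopIter_congr hXo hpdeq k x hx q h0
      rw [Finset.sum_congr rfl hterm, Finset.sum_add_distrib]
      congr 1
      rw [Finset.sum_ite_eq' (Finset.range (2 * t + 1)) 0 (fun _ => Lam φ x q)]
      rw [if_pos (Finset.mem_range.mpr (by omega))]
    -- Step II : Λ(q₀ Λφ) = Λφ
    have hCq : IsQFunc X (t + t) (Cop φ) := IsQFunc_Cop hXo hφ
    have hDCq : IsQFunc X (t + t + 1) (Dop (Cop φ)) := hCq.Dop_closure hXo
    have hφN : IsQFunc X (t + t + 1) φ := hφ.mono (by omega)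
    have hAeq : EqOnDom X (fun y p => p 0 * Lam φ y p)
        (fun y p => φ y p + (-1) * Dop (Cop φ) y p) := by
      intro y hy p hp
      have h1 := euler_decomp hXo hφ y hy p hp
      have h2 := euler_identity hXo hφ hhom y hy p hp
      show p 0 * Lam φ y p = φ y p + (-1) * Dop (Cop φ) y p
      rw [← h2, h1]
      ring
    have hII : Lam (fun y p => p 0 * Lam φ y p) x q = Lam φ x q := by
      rw [Lam_congr hXo hAeq x hx q h0,
        Lam_add_smul hXo hφN hDCq (-1) x hx q h0,
        Lam_Dop_zero hXo hCq x hx q h0]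
      ring
    -- combine
    rw [Lop_eq hs x q]
    have hzero : ∑ k ∈ Finset.range (2 * t + 1),
        (-1 : ℝ) ^ k * Dop^[k] (fun y p => p 0 * pd k (Lam φ) y p) x q = 0 := by
      rw [hII] at hI
      linarith [hI]
    rw [Finset.sum_congr rfl (fun (k : ℕ) (_ : k ∈ Finset.range (2 * t + 1)) => show
        (-1 : ℝ) ^ (k + 1) * Dop^[k] (fun y p => p 0 * pd k (Lam φ) y p) x q
        = -((-1 : ℝ) ^ k * Dop^[k] (fun y p => p 0 * pd k (Lam φ) y p) x q) by ring)]
    rw [Finset.sum_neg_distrib, hzero, neg_zero]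
  exact ⟨hc1, hs, hc3, hc4⟩

end
end
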